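/- arXiv:1903.00247 — 7 statements merged into one kernel-verified Lean document; each statement's English description precedes it below -/
import Mathlib

section
/- Let X ∼ (ν, P) be an ergodic Markov chain on a finite set E = {e₁,…,e_M} partially ordered by ⪯ with a unique maximal state e_M, where P is row-stochastic, irreducible and aperiodic, π is its stationary distribution (πP = π) with all entries positive, and ν is a probability row vector. Assume (i) the row vector g with g(e) = ν(e)/π(e) is Möbius monotone, i.e. every entry of g·(Cᵀ)⁻¹ is nonnegative, and (ii) the time reversal P̃ := diag(π)⁻¹ Pᵀ diag(π) is Möbius monotone, i.e. every entry of C⁻¹ P̃ C is nonnegative. Then, with the link Λ := diag(πC)⁻¹ Cᵀ diag(π): ν* := ν Λ⁻¹ is a probability row vector, P* := Λ P Λ⁻¹ is a row-stochastic matrix whose row at e_M is the point mass at e_M (i.e. e_M is absorbing), the duality relations Λ P = P* Λ and ν = ν* Λ hold, and entrywise ν*(eᵢ) = H(eᵢ)·Σ_{e ⪰ eᵢ} M(eᵢ,e) g(e) and P*(eᵢ,eⱼ) = (H(eⱼ)/H(eᵢ))·Σ_{e ⪰ eⱼ} M(eⱼ,e)·(Σ_{e' ⪯ eᵢ} P̃(e,e')).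 -/
open Matrix
open scoped Classical

/-- The zeta matrix of a finite partial order: `C(e,e') = 1` iff `e ⪯ e'`. -/
noncomputable def zeta (E : Type*) [Fintype E] [PartialOrder E] : Matrix E E ℝ :=
  fun e e' => if e ≤ e' then 1 else 0

section MuAux

variable {E : Type*} [Fintype E] [DecidableEq E] [PartialOrder E]

/-- The Möbius matrix of a finite partial order. -/
noncomputable def muMat (E : Type*) [Fintype E] [DecidableEq E] [PartialOrder E] :
    Matrix E E ℝ :=
  letI := Fintype.toLocallyFiniteOrder (α := E)
  fun a b => IncidenceAlgebra.mu ℝ a b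

lemma muMat_eq_zero {a b : E} (h : ¬ a ≤ b) : muMat E a b = 0 := by
  letI := Fintype.toLocallyFiniteOrder (α := E)
  exact IncidenceAlgebra.apply_eq_zero_of_not_le h _

lemma muMat_mul_zeta : muMat E * zeta E = 1 := by
  letI := Fintype.toLocallyFiniteOrder (α := E)
  ext a b
  have h : (IncidenceAlgebra.mu ℝ * IncidenceAlgebra.zeta ℝ : IncidenceAlgebra ℝ E) a b
      = (1 : IncidenceAlgebra ℝ E) a b := by rw [IncidenceAlgebra.mu_mul_zeta]
  rw [IncidenceAlgebra.mul_apply, IncidenceAlgebra.one_apply] at h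
  rw [Matrix.mul_apply, Matrix.one_apply, ← h]
  rw [← Finset.sum_subset (Finset.subset_univ (Finset.Icc a b))]
  · exact Finset.sum_congr rfl fun x _ => by
      by_cases hxb : x ≤ b <;> simp [muMat, zeta, hxb]
  · intro x _ hx
    rw [Finset.mem_Icc, not_and_or] at hx
    rcases hx with hx | hx
    · rw [muMat_eq_zero hx, zero_mul]
    · simp [zeta, hx]

lemma zeta_mul_muMat : zeta E * muMat E = 1 := by
  letI := Fintype.toLocallyFiniteOrder (α := E)
  ext a b
  have h : (IncidenceAlgebra.zeta ℝ * IncidenceAlgebra.mu ℝ : IncidenceAlgebra ℝ E) a b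
      = (1 : IncidenceAlgebra ℝ E) a b := by rw [IncidenceAlgebra.zeta_mul_mu]
  rw [IncidenceAlgebra.mul_apply, IncidenceAlgebra.one_apply] at h
  rw [Matrix.mul_apply, Matrix.one_apply, ← h]
  rw [← Finset.sum_subset (Finset.subset_univ (Finset.Icc a b))]
  · exact Finset.sum_congr rfl fun x _ => by
      by_cases hax : a ≤ x <;> simp [muMat, zeta, hax]
  · intro x _ hx
    rw [Finset.mem_Icc, not_and_or] at hx
    rcases hx with hx | hx
    · simp [zeta, hx]
    · rw [muMat_eq_zero hx, mul_zero]

lemma zeta_inv_eq : (zeta E)⁻¹ = muMat E := Matrix.inv_eq_left_inv muMat_mul_zeta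

lemma zetaT_inv_eq : ((zeta E)ᵀ)⁻¹ = (muMat E)ᵀ :=
  Matrix.inv_eq_left_inv (by
    rw [← Matrix.transpose_mul, zeta_mul_muMat, Matrix.transpose_one])

lemma diag_inv (v : E → ℝ) (hv : ∀ e, v e ≠ 0) :
    (Matrix.diagonal v)⁻¹ = Matrix.diagonal (fun e => (v e)⁻¹) :=
  Matrix.inv_eq_left_inv (by
    rw [Matrix.diagonal_mul_diagonal]
    ext i j
    by_cases h : i = j <;>
      simp [Matrix.diagonal_apply, Matrix.one_apply, h, inv_mul_cancel₀ (hv j)])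

end MuAux
/-- `H(e) = Σ_{e' ⪯ e} π(e')`. -/
noncomputable def Hfun {E : Type*} [Fintype E] [PartialOrder E] (π : E → ℝ) : E → ℝ :=
  fun e => ∑ e', if e' ≤ e then π e' else 0

/-- The link `Λ = diag(πC)⁻¹ Cᵀ diag(π)`. -/
noncomputable def link {E : Type*} [Fintype E] [DecidableEq E]
    (π : E → ℝ) (C : Matrix E E ℝ) : Matrix E E ℝ :=
  (Matrix.diagonal (π ᵥ* C))⁻¹ * Cᵀ * Matrix.diagonal π

/-- The time reversal `P̃ = diag(π)⁻¹ Pᵀ diag(π)`. -/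
noncomputable def timeReversal {E : Type*} [Fintype E] [DecidableEq E]
    (π : E → ℝ) (P : Matrix E E ℝ) : Matrix E E ℝ :=
  (Matrix.diagonal π)⁻¹ * Pᵀ * Matrix.diagonal π

/-- Theorem 2 of Lorek–Szekli: existence of the strong stationary dual on the same
state space for a Möbius monotone chain. -/
theorem stmt1 {E : Type*} [Fintype E] [DecidableEq E] [PartialOrder E]
    (eM : E) (hmax : IsMax eM) (huniq : ∀ e, IsMax e → e = eM)
    (P : Matrix E E ℝ)
    (hPnn : ∀ i j, 0 ≤ P i j) (hProw : ∀ i, ∑ j, P i j = 1)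
    (hprim : ∃ n, ∀ i j, 0 < (P ^ n) i j)
    (π : E → ℝ) (hπpos : ∀ e, 0 < π e) (hπsum : ∑ e, π e = 1)
    (hπstat : π ᵥ* P = π)
    (ν : E → ℝ) (hνnn : ∀ e, 0 ≤ ν e) (hνsum : ∑ e, ν e = 1)
    (hg : ∀ e, 0 ≤ ((fun e' => ν e' / π e') ᵥ* ((zeta E)ᵀ)⁻¹) e)
    (hrev : ∀ i j, 0 ≤ ((zeta E)⁻¹ * timeReversal π P * zeta E) i j) :
    (∀ e, 0 ≤ (ν ᵥ* (link π (zeta E))⁻¹) e) ∧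
    (∑ e, (ν ᵥ* (link π (zeta E))⁻¹) e = 1) ∧
    (∀ i j, 0 ≤ (link π (zeta E) * P * (link π (zeta E))⁻¹) i j) ∧
    (∀ i, ∑ j, (link π (zeta E) * P * (link π (zeta E))⁻¹) i j = 1) ∧
    (∀ e, (link π (zeta E) * P * (link π (zeta E))⁻¹) eM e = if e = eM then 1 else 0) ∧
    link π (zeta E) * P = (link π (zeta E) * P * (link π (zeta E))⁻¹) * link π (zeta E) ∧
    ν = (ν ᵥ* (link π (zeta E))⁻¹) ᵥ* link π (zeta E) ∧
    (∀ i, (ν ᵥ* (link π (zeta E))⁻¹) i =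
      Hfun π i * ∑ e, if i ≤ e then (zeta E)⁻¹ i e * (ν e / π e) else 0) ∧
    (∀ i j, (link π (zeta E) * P * (link π (zeta E))⁻¹) i j =
      (Hfun π j / Hfun π i) *
        ∑ e, if j ≤ e then
          (zeta E)⁻¹ j e * (∑ e', if e' ≤ i then timeReversal π P e e' else 0) else 0) := by
  classical
  set Λ := link π (zeta E) with hΛdef
  -- basic positivity of H
  have hHpos : ∀ e, 0 < Hfun π e := by
    intro e
    refine Finset.sum_pos' (fun i _ => ?_) ⟨e, Finset.mem_univ e, ?_⟩
    · split
      · exact (hπpos i).le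
      · exact le_rfl
    · simp [hπpos e]
  have hHne : ∀ e, Hfun π e ≠ 0 := fun e => (hHpos e).ne'
  have hπne : ∀ e, π e ≠ 0 := fun e => (hπpos e).ne'
  -- rewrite the link
  have hH : π ᵥ* zeta E = Hfun π := by
    funext e
    simp [Matrix.vecMul, dotProduct, zeta, Hfun, mul_ite, mul_one, mul_zero]
  have hlink_eq : Λ = Matrix.diagonal (fun e => (Hfun π e)⁻¹) * (zeta E)ᵀ *
      Matrix.diagonal π := by
    rw [hΛdef]
    unfold link
    rw [hH, diag_inv _ hHne]
  have hlink_apply : ∀ a b, Λ a b = if b ≤ a then (Hfun π a)⁻¹ * π b else 0 := by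
    intro a b
    rw [hlink_eq, Matrix.mul_diagonal, Matrix.diagonal_mul]
    by_cases h : b ≤ a <;> simp [zeta, Matrix.transpose_apply, h, mul_comm, mul_assoc]
  -- explicit inverse of the link
  set Lb := Matrix.diagonal (fun e => (π e)⁻¹) * (muMat E)ᵀ *
      Matrix.diagonal (Hfun π) with hLbdef
  have hDπ : Matrix.diagonal π * Matrix.diagonal (fun e => (π e)⁻¹) = 1 := by
    rw [Matrix.diagonal_mul_diagonal]
    ext i j
    by_cases h : i = j <;>
      simp [Matrix.diagonal_apply, Matrix.one_apply, h, mul_inv_cancel₀ (hπne j)]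
  have hDπ' : Matrix.diagonal (fun e => (π e)⁻¹) * Matrix.diagonal π = 1 := by
    rw [Matrix.diagonal_mul_diagonal]
    ext i j
    by_cases h : i = j <;>
      simp [Matrix.diagonal_apply, Matrix.one_apply, h, inv_mul_cancel₀ (hπne j)]
  have hDH : Matrix.diagonal (Hfun π) * Matrix.diagonal (fun e => (Hfun π e)⁻¹) = 1 := by
    rw [Matrix.diagonal_mul_diagonal]
    ext i j
    by_cases h : i = j <;>
      simp [Matrix.diagonal_apply, Matrix.one_apply, h, mul_inv_cancel₀ (hHne j)]
  have hDH' : Matrix.diagonal (fun e => (Hfun π e)⁻¹) * Matrix.diagonal (Hfun π) = 1 := by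
    rw [Matrix.diagonal_mul_diagonal]
    ext i j
    by_cases h : i = j <;>
      simp [Matrix.diagonal_apply, Matrix.one_apply, h, inv_mul_cancel₀ (hHne j)]
  have hZT : (zeta E)ᵀ * (muMat E)ᵀ = 1 := by
    rw [← Matrix.transpose_mul, muMat_mul_zeta, Matrix.transpose_one]
  have hZT' : (muMat E)ᵀ * (zeta E)ᵀ = 1 := by
    rw [← Matrix.transpose_mul, zeta_mul_muMat, Matrix.transpose_one]
  have hΛLb : Λ * Lb = 1 := by
    rw [hlink_eq, hLbdef]
    calc Matrix.diagonal (fun e => (Hfun π e)⁻¹) * (zeta E)ᵀ * Matrix.diagonal π *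
          (Matrix.diagonal (fun e => (π e)⁻¹) * (muMat E)ᵀ * Matrix.diagonal (Hfun π))
        = Matrix.diagonal (fun e => (Hfun π e)⁻¹) * ((zeta E)ᵀ *
          ((Matrix.diagonal π * Matrix.diagonal (fun e => (π e)⁻¹)) *
            ((muMat E)ᵀ * Matrix.diagonal (Hfun π)))) := by
          simp only [Matrix.mul_assoc]
      _ = 1 := by
          rw [hDπ, Matrix.one_mul, ← Matrix.mul_assoc ((zeta E)ᵀ), hZT, Matrix.one_mul, hDH']
  have hLbΛ : Lb * Λ = 1 := by
    rw [hlink_eq, hLbdef]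
    calc Matrix.diagonal (fun e => (π e)⁻¹) * (muMat E)ᵀ * Matrix.diagonal (Hfun π) *
          (Matrix.diagonal (fun e => (Hfun π e)⁻¹) * (zeta E)ᵀ * Matrix.diagonal π)
        = Matrix.diagonal (fun e => (π e)⁻¹) * ((muMat E)ᵀ *
          ((Matrix.diagonal (Hfun π) * Matrix.diagonal (fun e => (Hfun π e)⁻¹)) *
            ((zeta E)ᵀ * Matrix.diagonal π))) := by
          simp only [Matrix.mul_assoc]
      _ = 1 := by
          rw [hDH, Matrix.one_mul, ← Matrix.mul_assoc ((muMat E)ᵀ), hZT', Matrix.one_mul, hDπ']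
  have hinv : Λ⁻¹ = Lb := Matrix.inv_eq_left_inv hLbΛ
  have hLb_apply : ∀ k i, Lb k i = (π k)⁻¹ * muMat E i k * Hfun π i := by
    intro k i
    rw [hLbdef, Matrix.mul_diagonal, Matrix.diagonal_mul]
    rfl
  -- master formula for ν*
  have hνstar : ∀ i, (ν ᵥ* Λ⁻¹) i = Hfun π i * ∑ e, muMat E i e * (ν e / π e) := by
    intro i
    rw [hinv]
    simp only [Matrix.vecMul, dotProduct]
    rw [Finset.mul_sum]
    refine Finset.sum_congr rfl fun k _ => ?_
    rw [hLb_apply k i, div_eq_mul_inv]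
    ring
  -- ones vectors
  have honesΛ : Λ *ᵥ (fun _ => (1:ℝ)) = fun _ => 1 := by
    funext i
    simp only [Matrix.mulVec, dotProduct, mul_one, hlink_apply]
    have h1 : ∀ j, (if j ≤ i then (Hfun π i)⁻¹ * π j else 0)
        = (Hfun π i)⁻¹ * (if j ≤ i then π j else 0) := by
      intro j; split <;> simp
    simp_rw [h1, ← Finset.mul_sum]
    exact inv_mul_cancel₀ (hHne i)
  have honesP : P *ᵥ (fun _ => (1:ℝ)) = fun _ => 1 := by
    funext i
    simp only [Matrix.mulVec, dotProduct, mul_one]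
    exact hProw i
  have honesLinv : Λ⁻¹ *ᵥ (fun _ => (1:ℝ)) = fun _ => 1 := by
    conv_lhs => rw [← honesΛ]
    rw [Matrix.mulVec_mulVec, hinv, hLbΛ, Matrix.one_mulVec]
  -- master formula for P*
  have hPstar : Λ * P * Λ⁻¹ = Matrix.diagonal (fun e => (Hfun π e)⁻¹) *
      ((zeta E)⁻¹ * timeReversal π P * zeta E)ᵀ * Matrix.diagonal (Hfun π) := by
    rw [hinv, hlink_eq, hLbdef, zeta_inv_eq]
    unfold timeReversal
    rw [diag_inv _ hπne]
    simp only [Matrix.transpose_mul, Matrix.transpose_transpose, Matrix.diagonal_transpose,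
      Matrix.mul_assoc]
  have hPstar_apply : ∀ i j, (Λ * P * Λ⁻¹) i j =
      (Hfun π i)⁻¹ * ((zeta E)⁻¹ * timeReversal π P * zeta E) j i * Hfun π j := by
    intro i j
    rw [hPstar, Matrix.mul_diagonal, Matrix.diagonal_mul]
    rfl
  -- top element
  have htop : ∀ e, e ≤ eM := by
    intro e
    obtain ⟨b, hb, hbmax⟩ := Finite.exists_le_maximal (p := fun _ => True) (a := e) trivial
    have : IsMax b := by
      intro c hc
      exact hbmax.2 trivial hc
    rwa [huniq b this] at hb
  have hHeM : Hfun π eM = 1 := by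
    unfold Hfun
    rw [← hπsum]
    exact Finset.sum_congr rfl fun e _ => if_pos (htop e)
  have hrowM : ∀ j, Λ eM j = π j := by
    intro j
    rw [hlink_apply, if_pos (htop j), hHeM, inv_one, one_mul]
  refine ⟨?_, ?_, ?_, ?_, ?_, ?_, ?_, ?_, ?_⟩
  · -- nonnegativity of ν*
    intro e
    have h0 := hg e
    rw [zetaT_inv_eq] at h0
    have h1 : ((fun e' => ν e' / π e') ᵥ* (muMat E)ᵀ) e
        = ∑ k, muMat E e k * (ν k / π k) := by
      simp only [Matrix.vecMul, dotProduct, Matrix.transpose_apply]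
      exact Finset.sum_congr rfl fun k _ => mul_comm _ _
    rw [h1] at h0
    rw [hνstar e]
    exact mul_nonneg (hHpos e).le h0
  · -- ν* sums to 1
    have h1 : ∑ e, (ν ᵥ* Λ⁻¹) e = ν ⬝ᵥ (Λ⁻¹ *ᵥ fun _ => 1) := by
      rw [Matrix.dotProduct_mulVec]
      simp [dotProduct]
    rw [h1, honesLinv]
    simpa [dotProduct] using hνsum
  · -- nonnegativity of P*
    intro i j
    rw [hPstar_apply i j]
    exact mul_nonneg (mul_nonneg (inv_nonneg.2 (hHpos i).le) (hrev j i)) (hHpos j).le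
  · -- rows of P* sum to 1
    intro i
    have h1 : (Λ * P * Λ⁻¹) *ᵥ (fun _ => (1:ℝ)) = fun _ => 1 := by
      rw [← Matrix.mulVec_mulVec, ← Matrix.mulVec_mulVec, honesLinv, honesP, honesΛ]
    have h2 := congrFun h1 i
    simpa [Matrix.mulVec, dotProduct] using h2
  · -- eM is absorbing
    intro e
    have h2 : ∀ k, (Λ * P) eM k = π k := by
      intro k
      rw [Matrix.mul_apply]
      have : ∀ x, Λ eM x * P x k = π x * P x k := fun x => by rw [hrowM x]
      simp_rw [this]
      have := congrFun hπstat k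
      simpa [Matrix.vecMul, dotProduct] using this
    have h3 : (Λ * P * Λ⁻¹) eM e = (Λ * Λ⁻¹) eM e := by
      rw [Matrix.mul_apply, Matrix.mul_apply]
      refine Finset.sum_congr rfl fun k _ => ?_
      rw [h2 k, hrowM k]
    rw [h3, hinv, hΛLb]
    · simp [Matrix.one_apply, eq_comm]
  · -- Λ P = P* Λ
    rw [Matrix.mul_assoc (Λ * P), hinv, hLbΛ, Matrix.mul_one]
  · -- ν = ν* Λ
    rw [Matrix.vecMul_vecMul, hinv, hLbΛ, Matrix.vecMul_one]
  · -- entrywise formula for ν*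
    intro i
    rw [hνstar i, zeta_inv_eq]
    congr 1
    refine Finset.sum_congr rfl fun e _ => ?_
    by_cases h : i ≤ e
    · rw [if_pos h]
    · rw [if_neg h, muMat_eq_zero h, zero_mul]
  · -- entrywise formula for P*
    intro i j
    rw [hPstar_apply i j]
    have hR : ((zeta E)⁻¹ * timeReversal π P * zeta E) j i
        = ∑ e, if j ≤ e then (zeta E)⁻¹ j e *
            (∑ e', if e' ≤ i then timeReversal π P e e' else 0) else 0 := by
      rw [Matrix.mul_assoc, Matrix.mul_apply]
      refine Finset.sum_congr rfl fun e _ => ?_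
      have hPC : (timeReversal π P * zeta E) e i
          = ∑ e', if e' ≤ i then timeReversal π P e e' else 0 := by
        rw [Matrix.mul_apply]
        refine Finset.sum_congr rfl fun e' _ => ?_
        by_cases h : e' ≤ i <;> simp [zeta, h]
      rw [hPC]
      by_cases h : j ≤ e
      · rw [if_pos h]
      · rw [if_neg h, zeta_inv_eq, muMat_eq_zero h, zero_mul]
    rw [hR, div_eq_mul_inv]
    ring
end

section
/- Under the hypotheses of the strong stationary duality theorem — P row-stochastic, irreducible and aperiodic on a finite poset (E,⪯) with unique maximal state e_M, stationary distribution π with positive entries, ν a probability row vector, g(e) = ν(e)/π(e) Möbius monotone (every entry of g·(Cᵀ)⁻¹ nonnegative), and the time reversal P̃ := diag(π)⁻¹ Pᵀ diag(π) Möbius monotone (every entry of C⁻¹ P̃ C nonnegative) — the dual so constructed is sharp: with Λ := diag(πC)⁻¹ Cᵀ diag(π), ν* := ν Λ⁻¹ and P* := Λ P Λ⁻¹, for every integer n ≥ 0 one has sep(ν Pⁿ, π) = 1 − (ν* (P*)ⁿ)(e_M). -/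
open Matrix
open scoped Classical

/-- Separation: `sep(μ,π) = max_e (1 - μ(e)/π(e))`. -/
noncomputable def sep {E : Type*} [Fintype E] [Nonempty E] (μ π : E → ℝ) : ℝ :=
  Finset.univ.sup' Finset.univ_nonempty fun e => 1 - μ e / π e

lemma zeta_det_isUnit (E : Type*) [Fintype E] [DecidableEq E] [PartialOrder E] :
    IsUnit (zeta E).det := by
  have hbt : (zeta E).BlockTriangular (toLinearExtension : E →o LinearExtension E) := by
    intro i j hij
    simp only [zeta, ite_eq_right_iff]
    intro hle
    exact absurd (toLinearExtension.monotone hle) (not_le.2 hij)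
  rw [hbt.det]
  have hinj : Function.Injective (toLinearExtension : E →o LinearExtension E) :=
    fun x y h => h
  have : ∀ a ∈ Finset.univ.image (toLinearExtension : E →o LinearExtension E),
      ((zeta E).toSquareBlock (toLinearExtension : E →o LinearExtension E) a).det = 1 := by
    intro a _
    haveI : Subsingleton {e // (toLinearExtension : E →o LinearExtension E) e = a} :=
      ⟨fun x y => Subtype.ext (hinj (x.2.trans y.2.symm))⟩
    rcases isEmpty_or_nonempty {e // (toLinearExtension : E →o LinearExtension E) e = a} with h | h
    · exact Matrix.det_isEmpty
    · haveI : Unique {e // (toLinearExtension : E →o LinearExtension E) e = a} :=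
        uniqueOfSubsingleton (Classical.choice h)
      rw [Matrix.det_unique]
      simp [Matrix.toSquareBlock_def, zeta]
  rw [Finset.prod_congr rfl this, Finset.prod_const_one]
  exact isUnit_one


/-- Sharpness of the Möbius-monotone strong stationary dual: the separation at time `n`
equals the probability that the dual, started at `ν*`, is not yet absorbed at `e_M`. -/
theorem stmt2 {E : Type*} [Fintype E] [DecidableEq E] [PartialOrder E] [Nonempty E]
    (eM : E) (hmax : IsMax eM) (huniq : ∀ e, IsMax e → e = eM)
    (P : Matrix E E ℝ)
    (hPnn : ∀ i j, 0 ≤ P i j) (hProw : ∀ i, ∑ j, P i j = 1)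
    (hprim : ∃ n, ∀ i j, 0 < (P ^ n) i j)
    (π : E → ℝ) (hπpos : ∀ e, 0 < π e) (hπsum : ∑ e, π e = 1)
    (hπstat : π ᵥ* P = π)
    (ν : E → ℝ) (hνnn : ∀ e, 0 ≤ ν e) (hνsum : ∑ e, ν e = 1)
    (hg : ∀ e, 0 ≤ ((fun e' => ν e' / π e') ᵥ* ((zeta E)ᵀ)⁻¹) e)
    (hrev : ∀ i j, 0 ≤ ((zeta E)⁻¹ * timeReversal π P * zeta E) i j) :
    ∀ n : ℕ,
      sep (ν ᵥ* P ^ n) π =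
        1 - ((ν ᵥ* (link π (zeta E))⁻¹) ᵥ*
              (link π (zeta E) * P * (link π (zeta E))⁻¹) ^ n) eM := by
  intro n
  set C : Matrix E E ℝ := zeta E with hCdef
  have hCdet : IsUnit C.det := zeta_det_isUnit E
  have hCtdet : IsUnit Cᵀ.det := by rwa [Matrix.det_transpose]
  -- eM is the top element
  have htop : ∀ e : E, e ≤ eM := by
    intro e
    obtain ⟨m, hm, hmax'⟩ :=
      Finset.exists_maximal (s := Finset.univ.filter (fun x => e ≤ x)) ⟨e, by simp⟩
    have hem : e ≤ m := (Finset.mem_filter.1 hm).2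
    have hMm : IsMax m := by
      intro c hc
      by_contra hcm
      exact hcm (hmax' (Finset.mem_filter.2 ⟨Finset.mem_univ _, hem.trans hc⟩) hc)
    exact (huniq m hMm) ▸ hem
  -- positivity of H = π ᵥ* C
  have hvC : ∀ e, (π ᵥ* C) e = ∑ e', π e' * C e' e := by
    intro e; rfl
  have hCnn : ∀ a b, 0 ≤ C a b := fun a b => by
    show (0:ℝ) ≤ if a ≤ b then 1 else 0
    split <;> norm_num
  have hCdiag : ∀ a, C a a = 1 := fun a => by
    show (if a ≤ a then (1:ℝ) else 0) = 1
    simp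
  have hHpos : ∀ e, 0 < (π ᵥ* C) e := by
    intro e
    rw [hvC]
    refine Finset.sum_pos' (fun e' _ => mul_nonneg (hπpos e').le (hCnn e' e))
      ⟨e, Finset.mem_univ e, ?_⟩
    rw [hCdiag e, mul_one]
    exact hπpos e
  have hHeM : (π ᵥ* C) eM = 1 := by
    rw [hvC, ← hπsum]
    refine Finset.sum_congr rfl fun e _ => ?_
    have : C e eM = 1 := by
      show (if e ≤ eM then (1:ℝ) else 0) = 1
      simp [htop e]
    rw [this, mul_one]
  set D1 : Matrix E E ℝ := Matrix.diagonal (π ᵥ* C) with hD1def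
  set D2 : Matrix E E ℝ := Matrix.diagonal π with hD2def
  have hD1det : IsUnit D1.det := by
    rw [hD1def, Matrix.det_diagonal, isUnit_iff_ne_zero]
    exact Finset.prod_ne_zero_iff.2 fun e _ => (hHpos e).ne'
  have hD2det : IsUnit D2.det := by
    rw [hD2def, Matrix.det_diagonal, isUnit_iff_ne_zero]
    exact Finset.prod_ne_zero_iff.2 fun e _ => (hπpos e).ne'
  set Λ : Matrix E E ℝ := link π C with hΛdef
  set Λi : Matrix E E ℝ := D2⁻¹ * Cᵀ⁻¹ * D1 with hΛidef
  have canc : ∀ (A B : Matrix E E ℝ), A * B = 1 → ∀ X : Matrix E E ℝ, A * (B * X) = X := by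
    intro A B h X; rw [← Matrix.mul_assoc, h, Matrix.one_mul]
  have h1 : D1 * D1⁻¹ = 1 := Matrix.mul_nonsing_inv _ hD1det
  have h1' : D1⁻¹ * D1 = 1 := Matrix.nonsing_inv_mul _ hD1det
  have h2 : D2 * D2⁻¹ = 1 := Matrix.mul_nonsing_inv _ hD2det
  have h2' : D2⁻¹ * D2 = 1 := Matrix.nonsing_inv_mul _ hD2det
  have hCt : Cᵀ * Cᵀ⁻¹ = 1 := Matrix.mul_nonsing_inv _ hCtdet
  have hCt' : Cᵀ⁻¹ * Cᵀ = 1 := Matrix.nonsing_inv_mul _ hCtdet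
  have hCC : C * C⁻¹ = 1 := Matrix.mul_nonsing_inv _ hCdet
  have hCC' : C⁻¹ * C = 1 := Matrix.nonsing_inv_mul _ hCdet
  have hΛΛi : Λ * Λi = 1 := by
    rw [hΛdef, hΛidef, link]
    simp only [Matrix.mul_assoc]
    rw [canc _ _ h2, canc _ _ hCt, h1']
  have hΛiΛ : Λi * Λ = 1 := by
    rw [hΛdef, hΛidef, link]
    simp only [Matrix.mul_assoc]
    rw [canc _ _ h1, canc _ _ hCt', h2']
  have hΛinv : Λ⁻¹ = Λi := Matrix.inv_eq_right_inv hΛΛi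
  -- powers of the dual
  have hpow : ∀ m : ℕ, (Λ * P * Λ⁻¹) ^ m = Λ * P ^ m * Λ⁻¹ := by
    intro m
    induction m with
    | zero => simp only [pow_zero, Matrix.mul_one, hΛinv, hΛΛi]
    | succ k ih =>
      rw [pow_succ, pow_succ, ih, hΛinv]
      simp only [Matrix.mul_assoc]
      rw [canc _ _ hΛiΛ]
  -- the dual chain distribution equals μ_n Λ⁻¹
  have hdual : (ν ᵥ* Λ⁻¹) ᵥ* (Λ * P * Λ⁻¹) ^ n = (ν ᵥ* P ^ n) ᵥ* Λ⁻¹ := by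
    rw [hpow, Matrix.vecMul_vecMul, Matrix.vecMul_vecMul, hΛinv]
    congr 1
    simp only [Matrix.mul_assoc]
    rw [canc _ _ hΛiΛ]
  -- g n = density of ν P^n w.r.t. π
  set g : ℕ → E → ℝ := fun m e => (ν ᵥ* P ^ m) e / π e with hgdef
  -- row eM of C and of C⁻¹
  have hD2inv : D2⁻¹ = Matrix.diagonal (fun e => (π e)⁻¹) := by
    apply Matrix.inv_eq_right_inv
    rw [hD2def, Matrix.diagonal_mul_diagonal,
      show (fun e => π e * (π e)⁻¹) = fun _ => (1:ℝ) from
        funext fun e => mul_inv_cancel₀ (hπpos e).ne', Matrix.diagonal_one]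
  have hrowC : ∀ e', C eM e' = if e' = eM then 1 else 0 := by
    intro e'
    show (if eM ≤ e' then (1:ℝ) else 0) = if e' = eM then 1 else 0
    by_cases h : e' = eM
    · subst h; simp
    · rw [if_neg h, if_neg (fun hle => h (le_antisymm (htop e') hle))]
  have hrowM : ∀ e, C⁻¹ eM e = if eM = e then 1 else 0 := by
    intro e
    have h := congrFun (congrFun hCC eM) e
    rw [Matrix.mul_apply] at h
    rw [Finset.sum_eq_single eM (fun b _ hb => by rw [hrowC b, if_neg hb, zero_mul])
      (fun h => absurd (Finset.mem_univ eM) h)] at h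
    rw [hrowC eM, if_pos rfl, one_mul] at h
    rw [h, Matrix.one_apply]
  -- (μ Λ⁻¹)(eM) = g n eM
  have hkey : ((ν ᵥ* P ^ n) ᵥ* Λ⁻¹) eM = g n eM := by
    rw [hΛinv, hΛidef, ← Matrix.vecMul_vecMul, ← Matrix.vecMul_vecMul]
    have hst : (ν ᵥ* P ^ n) ᵥ* D2⁻¹ = g n := by
      funext e
      rw [hD2inv, Matrix.vecMul_diagonal]
      simp [hgdef, div_eq_mul_inv]
    rw [hst, Matrix.vecMul_diagonal, hHeM, mul_one]
    rw [← Matrix.transpose_nonsing_inv, Matrix.vecMul_transpose]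
    rw [Matrix.mulVec]
    simp only [dotProduct]
    rw [Finset.sum_eq_single eM (fun b _ hb => by rw [hrowM b, if_neg (fun h => hb h.symm), zero_mul])
      (fun h => absurd (Finset.mem_univ eM) h)]
    rw [hrowM eM, if_pos rfl, one_mul]
  -- Möbius monotonicity propagates
  set h : ℕ → E → ℝ := fun m => C⁻¹ *ᵥ g m with hhdef
  have hg0 : g 0 = fun e' => ν e' / π e' := by
    funext e; simp [hgdef]
  have hstep : ∀ m, g (m + 1) = timeReversal π P *ᵥ g m := by
    intro m
    funext e
    rw [timeReversal]
    have hPt : ∀ e', (D2⁻¹ * Pᵀ * D2) e e' = (π e)⁻¹ * P e' e * π e' := by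
      intro e'
      rw [hD2inv, show D2 = Matrix.diagonal π from hD2def, Matrix.mul_diagonal,
        Matrix.diagonal_mul, Matrix.transpose_apply]
    rw [show (Matrix.diagonal π)⁻¹ * Pᵀ * Matrix.diagonal π = D2⁻¹ * Pᵀ * D2 from rfl]
    rw [Matrix.mulVec]
    simp only [dotProduct]
    have hnum : (ν ᵥ* P ^ (m + 1)) e = ∑ e', (ν ᵥ* P ^ m) e' * P e' e := by
      rw [pow_succ, ← Matrix.vecMul_vecMul]
      rfl
    rw [hgdef]
    simp only
    rw [hnum, Finset.sum_div]
    refine Finset.sum_congr rfl fun e' _ => ?_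
    rw [hPt e']
    have hπe' : π e' ≠ 0 := (hπpos e').ne'
    have hπe : π e ≠ 0 := (hπpos e).ne'
    field_simp
  have hhnn : ∀ m e, 0 ≤ h m e := by
    intro m
    induction m with
    | zero =>
      intro e
      have := hg e
      rw [← hg0, ← Matrix.transpose_nonsing_inv, Matrix.vecMul_transpose] at this
      exact this
    | succ k ih =>
      intro e
      have : h (k + 1) = (C⁻¹ * timeReversal π P * C) *ᵥ h k := by
        rw [hhdef]
        simp only
        rw [hstep k, Matrix.mulVec_mulVec, Matrix.mulVec_mulVec]
        congr 1
        simp only [Matrix.mul_assoc]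
        rw [hCC, Matrix.mul_one]
      rw [this, Matrix.mulVec]
      exact Finset.sum_nonneg fun e' _ => mul_nonneg (hrev e e') (ih e')
  have hgC : ∀ m, g m = C *ᵥ h m := by
    intro m
    rw [hhdef]
    simp only
    rw [Matrix.mulVec_mulVec, hCC, Matrix.one_mulVec]
  have hgeM : ∀ m, g m eM = h m eM := by
    intro m
    rw [hgC m, Matrix.mulVec]
    simp only [dotProduct]
    rw [Finset.sum_eq_single eM (fun b _ hb => by rw [hrowC b, if_neg hb, zero_mul])
      (fun hh => absurd (Finset.mem_univ eM) hh)]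
    rw [hrowC eM, if_pos rfl, one_mul]
  have hmono : ∀ m e, g m eM ≤ g m e := by
    intro m e
    rw [hgeM m, hgC m, Matrix.mulVec]
    simp only [dotProduct]
    have : h m eM = C e eM * h m eM := by
      have h1 : C e eM = 1 := by
        show (if e ≤ eM then (1:ℝ) else 0) = 1
        simp [htop e]
      rw [h1, one_mul]
    rw [this]
    exact Finset.single_le_sum (fun e' _ => mul_nonneg (hCnn e e') (hhnn m e'))
      (Finset.mem_univ eM)
  -- conclude
  rw [hdual, hkey]
  unfold sep
  apply le_antisymm
  · exact Finset.sup'_le _ _ fun e _ => sub_le_sub_left (hmono n e) 1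
  · exact Finset.le_sup' (fun e => 1 - (ν ᵥ* P ^ n) e / π e) (Finset.mem_univ eM)
end

section
/- Let P* be a row-stochastic matrix on a finite set E = {e₁,…,e_M} whose row at e_M is the point mass at e_M (e_M is absorbing). Let ⪯ be a partial order on E in which e_M is the unique maximal state, with zeta matrix C, and let π be a probability row vector on E with all entries positive. Set P̂* := diag(πC) P* diag(πC)⁻¹ and assume every entry of (Cᵀ)⁻¹ P̂* Cᵀ is nonnegative (↑-Möbius monotonicity). Then P := diag(π)⁻¹ (Cᵀ)⁻¹ P̂* Cᵀ diag(π) is a row-stochastic matrix, π is a stationary distribution of P (πP = π), and with the link Λ := diag(πC)⁻¹ Cᵀ diag(π) the duality relation Λ P = P* Λ holds; equivalently P = Λ⁻¹ P* Λ. -/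
open Matrix
open scoped Classical

/-- `P̂* = diag(πC) P* diag(πC)⁻¹`. -/
noncomputable def hatP {E : Type*} [Fintype E] [DecidableEq E] [PartialOrder E]
    (π : E → ℝ) (Pstar : Matrix E E ℝ) : Matrix E E ℝ :=
  Matrix.diagonal (π ᵥ* zeta E) * Pstar * (Matrix.diagonal (π ᵥ* zeta E))⁻¹

/-- The antidual `P = diag(π)⁻¹ (Cᵀ)⁻¹ P̂* Cᵀ diag(π)`. -/
noncomputable def antidual {E : Type*} [Fintype E] [DecidableEq E] [PartialOrder E]
    (π : E → ℝ) (Pstar : Matrix E E ℝ) : Matrix E E ℝ :=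
  (Matrix.diagonal π)⁻¹ * (((zeta E)ᵀ)⁻¹ * hatP π Pstar * (zeta E)ᵀ) * Matrix.diagonal π

theorem stmt3 {E : Type*} [Fintype E] [DecidableEq E] [PartialOrder E]
    (eM : E) (hmax : IsMax eM) (huniq : ∀ e, IsMax e → e = eM)
    (Pstar : Matrix E E ℝ)
    (hnn : ∀ i j, 0 ≤ Pstar i j) (hrow : ∀ i, ∑ j, Pstar i j = 1)
    (habs : ∀ e, Pstar eM e = if e = eM then 1 else 0)
    (π : E → ℝ) (hπpos : ∀ e, 0 < π e) (hπsum : ∑ e, π e = 1)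
    (hmono : ∀ i j, 0 ≤ (((zeta E)ᵀ)⁻¹ * hatP π Pstar * (zeta E)ᵀ) i j) :
    (∀ i j, 0 ≤ antidual π Pstar i j) ∧
    (∀ i, ∑ j, antidual π Pstar i j = 1) ∧
    (π ᵥ* antidual π Pstar = π) ∧
    link π (zeta E) * antidual π Pstar = Pstar * link π (zeta E) ∧
    antidual π Pstar = (link π (zeta E))⁻¹ * Pstar * link π (zeta E) := by
  set C : Matrix E E ℝ := zeta E with hC
  set H : E → ℝ := π ᵥ* C with hHdef
  set Q : Matrix E E ℝ := (Cᵀ)⁻¹ * hatP π Pstar * Cᵀ with hQ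
  -- every element is below eM
  have htop : ∀ e : E, e ≤ eM := by
    intro e
    obtain ⟨b, hb, hbmax⟩ := Finite.exists_le_maximal (p := fun _ : E => True) (a := e) trivial
    have : IsMax b := fun c hc => hbmax.2 trivial hc
    exact (huniq b this) ▸ hb
  -- positivity of H
  have hHpos : ∀ e, 0 < H e := by
    intro e
    rw [hHdef]
    simp only [Matrix.vecMul, dotProduct]
    apply Finset.sum_pos'
    · intro i _
      have h0 : (0:ℝ) ≤ C i e := by rw [hC]; unfold zeta; split <;> norm_num
      exact mul_nonneg (hπpos i).le h0
    · exact ⟨e, Finset.mem_univ e, by simp [hC, zeta, hπpos e]⟩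
  have hHne : ∀ e, H e ≠ 0 := fun e => (hHpos e).ne'
  have hπne : ∀ e, π e ≠ 0 := fun e => (hπpos e).ne'
  -- determinants
  have hCdet : IsUnit (Cᵀ).det := by
    rw [hC, Matrix.det_transpose]; exact zeta_det_isUnit E
  have hDdet : IsUnit (Matrix.diagonal π).det := by
    rw [Matrix.det_diagonal]
    exact (Finset.prod_pos (fun i _ => hπpos i)).ne'.isUnit
  have hDHdet : IsUnit (Matrix.diagonal H).det := by
    rw [Matrix.det_diagonal]
    exact (Finset.prod_pos (fun i _ => hHpos i)).ne'.isUnit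
  -- explicit inverses of the diagonal matrices
  have hDinv : (Matrix.diagonal π)⁻¹ = Matrix.diagonal (fun e => (π e)⁻¹) := by
    apply Matrix.inv_eq_right_inv
    have h4 : (fun e => π e * (π e)⁻¹) = fun _ => (1:ℝ) := funext fun e => mul_inv_cancel₀ (hπne e)
    rw [Matrix.diagonal_mul_diagonal, h4, Matrix.diagonal_one]
  have hDHinv : (Matrix.diagonal H)⁻¹ = Matrix.diagonal (fun e => (H e)⁻¹) := by
    apply Matrix.inv_eq_right_inv
    have h4 : (fun e => H e * (H e)⁻¹) = fun _ => (1:ℝ) := funext fun e => mul_inv_cancel₀ (hHne e)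
    rw [Matrix.diagonal_mul_diagonal, h4, Matrix.diagonal_one]
  -- entry formula for the antidual
  have hentry : ∀ i j, antidual π Pstar i j = (π i)⁻¹ * Q i j * π j := by
    intro i j
    rw [antidual, Matrix.mul_diagonal, hDinv, Matrix.diagonal_mul]
  -- nonnegativity
  have hnn' : ∀ i j, 0 ≤ antidual π Pstar i j := by
    intro i j
    rw [hentry]
    exact mul_nonneg (mul_nonneg (inv_nonneg.2 (hπpos i).le) (hmono i j)) (hπpos j).le
  -- Q *ᵥ π = π
  have hCtπ : Cᵀ *ᵥ π = H := by
    funext e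
    rw [hHdef]
    simp [Matrix.mulVec, Matrix.vecMul, dotProduct, mul_comm]
  have hones : Pstar *ᵥ (fun _ => (1:ℝ)) = fun _ => 1 := by
    funext i
    simp only [Matrix.mulVec, dotProduct, mul_one]
    exact hrow i
  have hDHones : (Matrix.diagonal H)⁻¹ *ᵥ H = fun _ => 1 := by
    funext e
    rw [hDHinv]
    simp [Matrix.mulVec_diagonal, inv_mul_cancel₀ (hHne e)]
  have hhatH : hatP π Pstar *ᵥ H = H := by
    rw [hatP, ← hHdef, Matrix.mul_assoc, ← Matrix.mulVec_mulVec, ← Matrix.mulVec_mulVec,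
      hDHones, hones]
    funext e
    simp [Matrix.mulVec_diagonal]
  have hQπ : Q *ᵥ π = π := by
    rw [hQ, Matrix.mul_assoc, ← Matrix.mulVec_mulVec, ← Matrix.mulVec_mulVec, hCtπ, hhatH,
      ← hCtπ, Matrix.mulVec_mulVec, Matrix.nonsing_inv_mul _ hCdet, Matrix.one_mulVec]
  -- row sums
  have hrows : ∀ i, ∑ j, antidual π Pstar i j = 1 := by
    intro i
    have h1 : ∑ j, antidual π Pstar i j = (π i)⁻¹ * (Q *ᵥ π) i := by
      simp only [hentry, Matrix.mulVec, dotProduct, Finset.mul_sum, mul_assoc]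
    rw [h1, hQπ, inv_mul_cancel₀ (hπne i)]
  -- stationarity
  have hsingleCt : (Pi.single eM 1 : E → ℝ) ᵥ* Cᵀ = fun _ => 1 := by
    rw [Matrix.single_one_vecMul]
    funext e
    simp [hC, zeta, Matrix.transpose_apply, htop e]
  have hπD : π ᵥ* (Matrix.diagonal π)⁻¹ = fun _ => 1 := by
    funext e
    rw [hDinv]
    simp [Matrix.vecMul_diagonal, mul_inv_cancel₀ (hπne e)]
  have h1Ct : (fun _ => (1:ℝ)) ᵥ* (Cᵀ)⁻¹ = Pi.single eM 1 := by
    rw [← hsingleCt, Matrix.vecMul_vecMul, Matrix.mul_nonsing_inv _ hCdet, Matrix.vecMul_one]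
  have hHeM : H eM = 1 := by
    rw [hHdef, ← hπsum]
    simp [Matrix.vecMul, dotProduct, hC, zeta, htop]
  have hsinglehat : (Pi.single eM 1 : E → ℝ) ᵥ* hatP π Pstar = Pi.single eM 1 := by
    funext e
    rw [Matrix.single_vecMul]
    simp only [one_smul, Matrix.row_apply]
    rw [hatP, ← hHdef, hDHinv, Matrix.mul_diagonal, Matrix.diagonal_mul, habs, hHeM]
    by_cases h : e = eM <;> simp [h, hHeM, Pi.single_apply]
  have hstat : π ᵥ* antidual π Pstar = π := by
    rw [antidual, ← Matrix.vecMul_vecMul, ← Matrix.vecMul_vecMul, hπD,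
      ← Matrix.vecMul_vecMul, ← Matrix.vecMul_vecMul, h1Ct, hsinglehat, hsingleCt]
    funext e
    simp [Matrix.vecMul_diagonal]
  -- duality
  have hlinkinv : (link π C)⁻¹ = (Matrix.diagonal π)⁻¹ * (Cᵀ)⁻¹ * Matrix.diagonal H := by
    rw [link, ← hHdef, Matrix.mul_inv_rev, Matrix.mul_inv_rev,
      Matrix.nonsing_inv_nonsing_inv _ hDHdet, Matrix.mul_assoc]
  have hdual2 : antidual π Pstar = (link π C)⁻¹ * Pstar * link π C := by
    rw [hlinkinv, link, ← hHdef, antidual, hatP, ← hHdef]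
    simp only [Matrix.mul_assoc]
    rfl
  have hlinkdet : IsUnit (link π C).det := by
    rw [link, ← hHdef, Matrix.det_mul, Matrix.det_mul]
    exact ((Matrix.isUnit_nonsing_inv_det _ hDHdet).mul hCdet).mul hDdet
  have hdual1 : link π C * antidual π Pstar = Pstar * link π C := by
    rw [hdual2, ← Matrix.mul_assoc, ← Matrix.mul_assoc,
      Matrix.mul_nonsing_inv _ hlinkdet, Matrix.one_mul]
  exact ⟨hnn', hrows, hstat, hdual1, hdual2⟩
end

section
/- Let P* be a row-stochastic matrix on a finite set E = {e₁,…,e_M} whose row at e_M is the point mass at e_M, and assume e_M is accessible from every state, i.e. for every e ∈ E there is n with ((P*)ⁿ)(e, e_M) > 0. Let ⪯ be a partial order on E with e_M the unique maximal state, π a probability row vector with positive entries such that every entry of (Cᵀ)⁻¹ P̂* Cᵀ is nonnegative, where P̂* := diag(πC) P* diag(πC)⁻¹, and let P := diag(π)⁻¹ (Cᵀ)⁻¹ P̂* Cᵀ diag(π). Assume additionally that P is irreducible and aperiodic (equivalently, some power of P has all entries positive). Then P is a sharp antidual of P*: for every probability row vector ν* on E and every integer n ≥ 0, with ν := ν*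 Λ, one has sep(ν Pⁿ, π) = 1 − (ν* (P*)ⁿ)(e_M). -/
open Matrix
open scoped Classical

lemma zeta_vecMul_zero {E : Type*} [Fintype E] [DecidableEq E] [PartialOrder E]
    {v : E → ℝ} (h : v ᵥ* zeta E = 0) : v = 0 := by
  have key : ∀ e : E, v e = 0 := by
    intro e
    induction e using WellFoundedLT.induction with
    | _ e ih =>
      have h0 : ∑ i ∈ Finset.univ.filter (· ≤ e), v i = 0 := by
        have := congrFun h e
        simp only [Matrix.vecMul, dotProduct, zeta, Pi.zero_apply,
          mul_ite, mul_one, mul_zero, Matrix.of_apply] at this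
        rwa [Finset.sum_filter]
      have h1 : ∑ i ∈ Finset.univ.filter (· ≤ e), v i = v e := by
        refine Finset.sum_eq_single_of_mem e (by simp) ?_
        intro b hb hbe
        exact ih b (lt_of_le_of_ne (Finset.mem_filter.mp hb).2 hbe)
      rw [h1] at h0; exact h0
  funext e; exact key e

lemma zeta_isUnit (E : Type*) [Fintype E] [DecidableEq E] [PartialOrder E] : IsUnit (zeta E) := by
  rw [← Matrix.vecMul_injective_iff_isUnit]
  intro v w hvw
  have hvw' : v ᵥ* zeta E = w ᵥ* zeta E := hvw
  have : (v - w) ᵥ* zeta E = 0 := by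
    rw [Matrix.sub_vecMul, hvw', sub_self]
  exact sub_eq_zero.mp (zeta_vecMul_zero this)

lemma conj_pow_aux {E : Type*} [Fintype E] [DecidableEq E] (A B : Matrix E E ℝ)
    (h1 : A * A⁻¹ = 1) (h2 : A⁻¹ * A = 1) (n : ℕ) :
    (A⁻¹ * B * A) ^ n = A⁻¹ * B ^ n * A := by
  induction n with
  | zero => simp [h2]
  | succ n ih =>
    rw [pow_succ, pow_succ, ih, Matrix.mul_assoc (A⁻¹ * B ^ n), Matrix.mul_assoc A⁻¹ B A,
      ← Matrix.mul_assoc A A⁻¹, h1, Matrix.one_mul, ← Matrix.mul_assoc,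
      ← Matrix.mul_assoc, Matrix.mul_assoc _ B A]

lemma conj_pow_aux' {E : Type*} [Fintype E] [DecidableEq E] (A B : Matrix E E ℝ)
    (h1 : A * A⁻¹ = 1) (h2 : A⁻¹ * A = 1) (n : ℕ) :
    (A * B * A⁻¹) ^ n = A * B ^ n * A⁻¹ := by
  induction n with
  | zero => simp [h1]
  | succ n ih =>
    rw [pow_succ, pow_succ, ih, Matrix.mul_assoc (A * B ^ n), Matrix.mul_assoc A B A⁻¹,
      ← Matrix.mul_assoc A⁻¹ A, h2, Matrix.one_mul, ← Matrix.mul_assoc,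
      ← Matrix.mul_assoc, Matrix.mul_assoc _ B A⁻¹]

/-- The antidual is sharp: separation of the antidual chain from `π` equals the
probability that the absorbing chain is not yet absorbed. -/
theorem stmt4 {E : Type*} [Fintype E] [DecidableEq E] [PartialOrder E] [Nonempty E]
    (eM : E) (hmax : IsMax eM) (huniq : ∀ e, IsMax e → e = eM)
    (Pstar : Matrix E E ℝ)
    (hnn : ∀ i j, 0 ≤ Pstar i j) (hrow : ∀ i, ∑ j, Pstar i j = 1)
    (habs : ∀ e, Pstar eM e = if e = eM then 1 else 0)
    (hacc : ∀ e, ∃ n, 0 < (Pstar ^ n) e eM)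
    (π : E → ℝ) (hπpos : ∀ e, 0 < π e) (hπsum : ∑ e, π e = 1)
    (hmono : ∀ i j, 0 ≤ (((zeta E)ᵀ)⁻¹ * hatP π Pstar * (zeta E)ᵀ) i j)
    (hprim : ∃ n, ∀ i j, 0 < ((antidual π Pstar) ^ n) i j) :
    ∀ νstar : E → ℝ, (∀ e, 0 ≤ νstar e) → (∑ e, νstar e = 1) →
      ∀ n : ℕ,
        sep ((νstar ᵥ* link π (zeta E)) ᵥ* (antidual π Pstar) ^ n) π =
          1 - (νstar ᵥ* Pstar ^ n) eM := by
  intro νstar hνnn hνsum n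
  -- everything is below eM
  have hle : ∀ e : E, e ≤ eM := by
    intro e
    obtain ⟨b, hb, hbmax⟩ := Finite.exists_le_maximal (p := fun _ : E => True) (a := e) trivial
    have hbIsMax : IsMax b := fun c hc => hbmax.2 trivial hc
    exact (huniq b hbIsMax) ▸ hb
  -- positivity of H = π ᵥ* C
  have hHentry : ∀ e, (π ᵥ* zeta E) e = ∑ i ∈ Finset.univ.filter (· ≤ e), π i := by
    intro e
    simp only [Matrix.vecMul, dotProduct, zeta, Matrix.of_apply, mul_ite, mul_one,
      mul_zero]
    rw [Finset.sum_filter]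
  have hHpos : ∀ e, 0 < (π ᵥ* zeta E) e := by
    intro e
    rw [hHentry]
    exact Finset.sum_pos (fun i _ => hπpos i) ⟨e, by simp⟩
  have hHeM : (π ᵥ* zeta E) eM = 1 := by
    rw [hHentry]
    rw [Finset.filter_true_of_mem (fun i _ => hle i)]
    exact hπsum
  -- invertibility facts
  have hCt : IsUnit ((zeta E)ᵀ).det := by
    rw [Matrix.det_transpose]
    exact (Matrix.isUnit_iff_isUnit_det _).mp (zeta_isUnit E)
  have hCt1 : (zeta E)ᵀ * ((zeta E)ᵀ)⁻¹ = 1 := Matrix.mul_nonsing_inv _ hCt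
  have hCt2 : ((zeta E)ᵀ)⁻¹ * (zeta E)ᵀ = 1 := Matrix.nonsing_inv_mul _ hCt
  have hD : IsUnit (Matrix.diagonal π).det := by
    rw [Matrix.det_diagonal]
    exact isUnit_iff_ne_zero.mpr (ne_of_gt (Finset.prod_pos fun i _ => hπpos i))
  have hD1 : Matrix.diagonal π * (Matrix.diagonal π)⁻¹ = 1 := Matrix.mul_nonsing_inv _ hD
  have hD2 : (Matrix.diagonal π)⁻¹ * Matrix.diagonal π = 1 := Matrix.nonsing_inv_mul _ hD
  have hDh : IsUnit (Matrix.diagonal (π ᵥ* zeta E)).det := by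
    rw [Matrix.det_diagonal]
    exact isUnit_iff_ne_zero.mpr (ne_of_gt (Finset.prod_pos fun i _ => hHpos i))
  have hDh1 : Matrix.diagonal (π ᵥ* zeta E) * (Matrix.diagonal (π ᵥ* zeta E))⁻¹ = 1 :=
    Matrix.mul_nonsing_inv _ hDh
  have hDh2 : (Matrix.diagonal (π ᵥ* zeta E))⁻¹ * Matrix.diagonal (π ᵥ* zeta E) = 1 :=
    Matrix.nonsing_inv_mul _ hDh
  -- reassociated cancellation lemmas
  have cancel : ∀ (A B : Matrix E E ℝ), A * B = 1 → ∀ X, A * (B * X) = X := by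
    intro A B h X; rw [← Matrix.mul_assoc, h, Matrix.one_mul]
  -- key intertwining identity
  have key : link π (zeta E) * (antidual π Pstar) ^ n = Pstar ^ n * link π (zeta E) := by
    rw [antidual, conj_pow_aux _ _ hD1 hD2, conj_pow_aux _ _ hCt1 hCt2, hatP,
      conj_pow_aux' _ _ hDh1 hDh2, link]
    simp only [Matrix.mul_assoc, cancel _ _ hD1, cancel _ _ hD2, cancel _ _ hCt1,
      cancel _ _ hCt2, cancel _ _ hDh1, cancel _ _ hDh2]
  rw [Matrix.vecMul_vecMul, key, ← Matrix.vecMul_vecMul]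
  set μ : E → ℝ := νstar ᵥ* Pstar ^ n with hμ
  -- μ is nonnegative
  have hμnn' : ∀ m, ∀ e, 0 ≤ (νstar ᵥ* Pstar ^ m) e := by
    intro m
    induction m with
    | zero => simpa using hνnn
    | succ m ih =>
      intro e
      rw [pow_succ, ← Matrix.vecMul_vecMul]
      exact Finset.sum_nonneg fun i _ => mul_nonneg (ih i) (hnn i e)
  have hμnn : ∀ e, 0 ≤ μ e := hμnn' n
  -- entries of μ ᵥ* Λ
  have hentry : ∀ e, (μ ᵥ* link π (zeta E)) e =
      (∑ i ∈ Finset.univ.filter (e ≤ ·), μ i / (π ᵥ* zeta E) i) * π e := by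
    intro e
    have hdiaginv : (Matrix.diagonal (π ᵥ* zeta E))⁻¹ =
        Matrix.diagonal fun i => ((π ᵥ* zeta E) i)⁻¹ := by
      refine Matrix.inv_eq_right_inv ?_
      rw [Matrix.diagonal_mul_diagonal]
      have h1 : (fun i => (π ᵥ* zeta E) i * ((π ᵥ* zeta E) i)⁻¹) = fun _ : E => (1 : ℝ) := by
        funext i; exact mul_inv_cancel₀ (ne_of_gt (hHpos i))
      rw [h1]
      exact Matrix.diagonal_one
    rw [link, hdiaginv]
    simp only [Matrix.vecMul, dotProduct, Matrix.mul_diagonal, Matrix.diagonal_mul,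
      Matrix.transpose_apply, zeta, Matrix.of_apply, mul_ite, mul_one, mul_zero, ite_mul,
      zero_mul]
    rw [Finset.sum_mul, ← Finset.sum_filter]
    refine Finset.sum_congr rfl fun i hi => ?_
    rw [div_eq_mul_inv]
    ring
  -- compute the separation
  rw [sep]
  have hfun : (fun e => 1 - (μ ᵥ* link π (zeta E)) e / π e) =
      fun e => 1 - ∑ i ∈ Finset.univ.filter (e ≤ ·), μ i / (π ᵥ* zeta E) i := by
    funext e
    rw [hentry, mul_div_assoc, div_self (ne_of_gt (hπpos e)), mul_one]
  rw [hfun]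
  have hfeM : ∑ i ∈ Finset.univ.filter (eM ≤ ·), μ i / (π ᵥ* zeta E) i = μ eM := by
    have : Finset.univ.filter (eM ≤ ·) = {eM} := by
      ext i
      simp only [Finset.mem_filter, Finset.mem_univ, true_and, Finset.mem_singleton]
      exact ⟨fun h => le_antisymm (hmax h) h, fun h => h ▸ le_refl _⟩
    rw [this, Finset.sum_singleton, hHeM, div_one]
  apply le_antisymm
  · apply Finset.sup'_le
    intro e _
    have hmem : eM ∈ Finset.univ.filter (e ≤ ·) := by
      simp [hle e]
    have h1 : μ eM / (π ᵥ* zeta E) eM ≤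
        ∑ i ∈ Finset.univ.filter (e ≤ ·), μ i / (π ᵥ* zeta E) i :=
      Finset.single_le_sum (fun i _ => div_nonneg (hμnn i) (hHpos i).le) hmem
    rw [hHeM, div_one] at h1
    linarith
  · have := Finset.le_sup' (b := eM) (Finset.mem_univ eM)
      (f := fun e => 1 - ∑ i ∈ Finset.univ.filter (e ≤ ·), μ i / (π ᵥ* zeta E) i)
    rw [hfeM] at this
    exact this
end

section
/- Fix d ≥ 1, integers N_j ≥ 1 and reals p_j > 0 (j = 1,…,d) with Σ_{j=1}^d p_j ≤ 1, and assume Σ_{j=1}^d (1 − 1/(N_j(N_j+1)))·p_j ≤ 1. Define the E×E matrix P by: P(i, i+s_k) = ((i_k+1)/(i_k+2))·p_k when i_k < N_k; P(i, i−m·s_k) = p_k/((i_k+1)(i_k+2)) when i_k < N_k and 1 ≤ m ≤ i_k; P(i, i−m·s_k) = p_k/(N_k+1) when i_k = N_k and 1 ≤ m ≤ i_k; P(i,i) = 1 − Σ_{j: i_j<N_j} (1 − 1/((i_j+1)(i_j+2)))·p_j − Σ_{j: i_j=N_j} (N_j/(N_j+1))·p_j; all other entries 0. Then: (a) P is row-stochastic;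 (b) the uniform distribution π(i) = 1/∏_{j=1}^d (N_j+1) satisfies πP = π; (c) P is irreducible and aperiodic; (d) with ρ(i) := ∏_{j=1}^d (i_j+1) and the link Λ(i,i') := 1(i' ⪯ i)/ρ(i) (coordinatewise order), the duality relation Λ P = P* Λ holds, where P* is the generalized coupon collector chain. -/
open Matrix Finset
open scoped Classical

/-- State space of the generalized coupon collector problem:
`E = ∏_j {0,1,…,N_j}`. -/
abbrev CCState (d : ℕ) (N : Fin d → ℕ) : Type := ∀ j : Fin d, Fin (N j + 1)

/-- The generalized coupon collector chain `P*`. -/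
noncomputable def couponP (d : ℕ) (N : Fin d → ℕ) (p : Fin d → ℝ) :
    Matrix (CCState d N) (CCState d N) ℝ := fun i i' =>
  (∑ k : Fin d, if (i' k : ℕ) = (i k : ℕ) + 1 ∧ (∀ j, j ≠ k → i' j = i j)
      then p k else 0) +
  (if i' = i
      then 1 - (∑ j : Fin d, p j) + ∑ j : Fin d, (if (i j : ℕ) = N j then p j else 0)
      else 0)

/-- The antidual chain of Theorem 3 (general `N_j`, uniform stationary law). -/
noncomputable def antidualCC (d : ℕ) (N : Fin d → ℕ) (p : Fin d → ℝ) :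
    Matrix (CCState d N) (CCState d N) ℝ := fun i i' =>
  (∑ k : Fin d, if (i' k : ℕ) = (i k : ℕ) + 1 ∧ (∀ j, j ≠ k → i' j = i j)
      then (((i k : ℕ) : ℝ) + 1) / (((i k : ℕ) : ℝ) + 2) * p k else 0) +
  (∑ k : Fin d, if (i' k : ℕ) < (i k : ℕ) ∧ (∀ j, j ≠ k → i' j = i j)
      then (if (i k : ℕ) < N k
            then p k / ((((i k : ℕ) : ℝ) + 1) * (((i k : ℕ) : ℝ) + 2))
            else p k / ((N k : ℝ) + 1))
      else 0) +
  (if i' = i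
      then 1 - ∑ j : Fin d, (if (i j : ℕ) < N j
            then (1 - 1 / ((((i j : ℕ) : ℝ) + 1) * (((i j : ℕ) : ℝ) + 2))) * p j
            else ((N j : ℝ) / ((N j : ℝ) + 1)) * p j)
      else 0)

/-- The link `Λ(i,i') = 1(i' ⪯ i)/ρ(i)` with `ρ(i) = ∏_j (i_j + 1)`. -/
noncomputable def linkCC (d : ℕ) (N : Fin d → ℕ) :
    Matrix (CCState d N) (CCState d N) ℝ :=
  fun i i' => if i' ≤ i then 1 / ∏ j, (((i j : ℕ) : ℝ) + 1) else 0


namespace CCAux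

lemma sum_ite_eq_gen (n c : ℕ) (g : ℕ → ℝ) :
    ∑ t ∈ range n, (if t = c then g t else 0) = if c < n then g c else 0 := by
  rw [Finset.sum_ite_eq' (range n) c g]; simp [Finset.mem_range]

lemma sum_ite_eq_succ (n a : ℕ) (g : ℕ → ℝ) :
    ∑ t ∈ range n, (if a = t + 1 then g t else 0)
      = if 1 ≤ a ∧ a ≤ n then g (a - 1) else 0 := by
  by_cases h1 : 1 ≤ a
  · have hc : ∀ t ∈ range n, (if a = t + 1 then g t else 0) = (if t = a - 1 then g t else 0) :=
      fun t _ => if_congr (by omega) rfl rfl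
    rw [Finset.sum_congr rfl hc, sum_ite_eq_gen]
    exact if_congr (by omega) rfl rfl
  · have hc : ∀ t ∈ range n, (if a = t + 1 then g t else 0) = 0 :=
      fun t _ => if_neg (by omega)
    rw [Finset.sum_congr rfl hc, Finset.sum_const_zero, if_neg (by omega)]

lemma sum_ite_lt (n a : ℕ) (ha : a ≤ n) (c : ℝ) :
    ∑ t ∈ range n, (if t < a then c else 0) = (a : ℝ) * c := by
  rw [Finset.sum_ite, Finset.sum_const_zero, add_zero, Finset.sum_const]
  have : (range n).filter (fun t => t < a) = range a := by
    ext t; simp only [Finset.mem_filter, Finset.mem_range]; omega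
  rw [this, Finset.card_range, nsmul_eq_mul]

lemma range_ite_Ioc (n a b : ℕ) (q : ℕ → ℝ) (hb : b < n) :
    ∑ t ∈ range n, (if a < t ∧ t ≤ b then q t else 0) = ∑ t ∈ Ioc a b, q t := by
  rw [← Finset.sum_filter]
  congr 1
  ext t; simp only [Finset.mem_filter, Finset.mem_range, Finset.mem_Ioc]; omega

noncomputable def qf (n : ℕ) (p : ℝ) (t : ℕ) : ℝ :=
  if t < n then p / (((t : ℝ) + 1) * ((t : ℝ) + 2)) else p / ((n : ℝ) + 1)

noncomputable def dcoef (n : ℕ) (p : ℝ) (a : ℕ) : ℝ :=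
  if a < n then (1 - 1 / (((a : ℝ) + 1) * ((a : ℝ) + 2))) * p
  else ((n : ℝ) / ((n : ℝ) + 1)) * p

lemma sum_qf_aux (n : ℕ) (p : ℝ) (a b : ℕ) (hab : a ≤ b) (hb : b ≤ n) :
    ∑ t ∈ Ioc a b, qf n p t =
      if a < b then p / ((a : ℝ) + 2) - (if b < n then p / ((b : ℝ) + 2) else 0)
      else 0 := by
  induction b, hab using Nat.le_induction with
  | base => simp
  | succ b hab ih =>
    have hbn : b < n := by omega
    rw [Finset.sum_Ioc_succ_top (by omega), ih (by omega), if_pos hbn]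
    have e1 : ((b : ℝ) + 2) ≠ 0 := by positivity
    have e2 : ((b : ℝ) + 3) ≠ 0 := by positivity
    have e3 : ((a : ℝ) + 2) ≠ 0 := by positivity
    rw [if_pos (by omega : a < b + 1)]
    by_cases hb1 : b + 1 < n
    · rw [qf, if_pos hb1]
      push_cast
      by_cases hab' : a < b
      · rw [if_pos hab', if_pos hb1]
        field_simp
        ring
      · have : a = b := by omega
        subst this
        rw [if_neg (lt_irrefl a), if_pos hb1]
        push_cast
        field_simp
        ring
    · have hn : n = b + 1 := by omega
      have hcast : (n : ℝ) = (b : ℝ) + 1 := by rw [hn]; push_cast; ring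
      rw [qf, if_neg hb1, if_neg hb1, hcast]
      by_cases hab' : a < b
      · rw [if_pos hab']
        ring
      · have : a = b := by omega
        subst this
        rw [if_neg (lt_irrefl a)]
        ring

lemma sum_qf (n : ℕ) (p : ℝ) (a b : ℕ) (hb : b ≤ n) :
    ∑ t ∈ Ioc a b, qf n p t =
      if a < b then p / ((a : ℝ) + 2) - (if b < n then p / ((b : ℝ) + 2) else 0)
      else 0 := by
  rcases le_or_gt a b with h | h
  · exact sum_qf_aux n p a b h hb
  · rw [Finset.Ioc_eq_empty (by omega), Finset.sum_empty, if_neg (by omega)]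

/-- Per-coordinate identity for the row sums. -/
lemma row_coord (n a : ℕ) (p : ℝ) (ha : a ≤ n) :
    (if a + 1 ≤ n then ((a : ℝ) + 1) / ((a : ℝ) + 2) * p else 0)
      + (a : ℝ) * qf n p a = dcoef n p a := by
  have e1 : ((a : ℝ) + 1) ≠ 0 := by positivity
  have e2 : ((a : ℝ) + 2) ≠ 0 := by positivity
  by_cases h : a < n
  · rw [if_pos (by omega), qf, if_pos h, dcoef, if_pos h]
    field_simp
    ring
  · have : a = n := by omega
    subst this
    rw [if_neg (by omega), qf, if_neg h, dcoef, if_neg h]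
    ring

/-- Per-coordinate identity for the column sums. -/
lemma col_coord (n a : ℕ) (p : ℝ) (ha : a ≤ n) (hn : 1 ≤ n) :
    (if 1 ≤ a ∧ a ≤ n then ((a : ℝ)) / ((a : ℝ) + 1) * p else 0)
      + (if a < n then p / ((a : ℝ) + 2) else 0) = dcoef n p a := by
  have e1 : ((a : ℝ) + 1) ≠ 0 := by positivity
  have e2 : ((a : ℝ) + 2) ≠ 0 := by positivity
  by_cases h : a < n
  · rw [if_pos h, dcoef, if_pos h]
    by_cases h1 : 1 ≤ a
    · rw [if_pos ⟨h1, by omega⟩]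
      field_simp
      ring
    · have : a = 0 := by omega
      subst this
      rw [if_neg (by omega)]
      push_cast
      norm_num
      ring
  · have : a = n := by omega
    subst this
    rw [if_pos (⟨hn, le_refl a⟩ : 1 ≤ a ∧ a ≤ a), if_neg h, dcoef, if_neg h, add_zero]

/-- bound used for nonnegativity of the diagonal. -/
lemma dcoef_le (n a : ℕ) (p : ℝ) (hp : 0 < p) (ha : a ≤ n) (hn : 1 ≤ n) :
    dcoef n p a ≤ (1 - 1 / ((n : ℝ) * ((n : ℝ) + 1))) * p := by
  have hn1 : (1 : ℝ) ≤ (n : ℝ) := by exact_mod_cast hn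
  have e0 : (0 : ℝ) < (n : ℝ) * ((n : ℝ) + 1) := by positivity
  rw [dcoef]
  by_cases h : a < n
  · have h1 : (0 : ℝ) < ((a : ℝ) + 1) * ((a : ℝ) + 2) := by positivity
    have hle : ((a : ℝ) + 1) * ((a : ℝ) + 2) ≤ (n : ℝ) * ((n : ℝ) + 1) := by
      have h1 : ((a : ℝ) + 1) ≤ (n : ℝ) := by
        have : (a : ℝ) + 1 = ((a + 1 : ℕ) : ℝ) := by push_cast; ring
        rw [this]; exact_mod_cast h
      nlinarith
    rw [if_pos h]
    have := one_div_le_one_div_of_le h1 hle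
    nlinarith
  · rw [if_neg h]
    have key : (n : ℝ) / ((n : ℝ) + 1) ≤ 1 - 1 / ((n : ℝ) * ((n : ℝ) + 1)) := by
      rw [div_le_iff₀ (by positivity : (0:ℝ) < (n:ℝ)+1)]
      have : (1 - 1 / ((n : ℝ) * ((n : ℝ) + 1))) * ((n:ℝ)+1)
          = (n:ℝ) + 1 - 1/(n:ℝ) := by field_simp
      rw [this]
      have : 1 / (n : ℝ) ≤ 1 := by
        rw [div_le_one (by linarith)]; linarith
      linarith
    nlinarith

lemma dcoef_lt (n a : ℕ) (p : ℝ) (hp : 0 < p) (hn : 1 ≤ n) :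
    dcoef n p a < p := by
  have hn1 : (1 : ℝ) ≤ (n : ℝ) := by exact_mod_cast hn
  rw [dcoef]
  by_cases h : a < n
  · rw [if_pos h]
    have h1 : (0 : ℝ) < ((a : ℝ) + 1) * ((a : ℝ) + 2) := by positivity
    have : 0 < 1 / (((a : ℝ) + 1) * ((a : ℝ) + 2)) := by positivity
    nlinarith
  · rw [if_neg h]
    have : (n : ℝ) / ((n : ℝ) + 1) < 1 := by
      rw [div_lt_one (by positivity)]; linarith
    nlinarith

lemma dcoef_nonneg (n a : ℕ) (p : ℝ) (hp : 0 < p) (ha : a ≤ n) : 0 ≤ dcoef n p a := by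
  rw [dcoef]
  by_cases h : a < n
  · rw [if_pos h]
    have h1 : (0 : ℝ) < ((a : ℝ) + 1) * ((a : ℝ) + 2) := by positivity
    have h2 : 1 / (((a : ℝ) + 1) * ((a : ℝ) + 2)) ≤ 1 := by
      rw [div_le_one h1]; nlinarith
    nlinarith
  · rw [if_neg h]; positivity

lemma qf_pos (n t : ℕ) (p : ℝ) (hp : 0 < p) : 0 < qf n p t := by
  rw [qf]; split <;> positivity

variable {d : ℕ} {N : Fin d → ℕ}

lemma sum_update_support (i : CCState d N) (k : Fin d) (F : CCState d N → ℝ)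
    (hF : ∀ i', F i' ≠ 0 → ∀ j, j ≠ k → i' j = i j) :
    ∑ i', F i' = ∑ t : Fin (N k + 1), F (Function.update i k t) := by
  classical
  have hinj : ∀ a ∈ (univ : Finset (Fin (N k + 1))), ∀ b ∈ univ,
      Function.update i k a = Function.update i k b → a = b :=
    fun a _ b _ h => Function.update_injective i k h
  rw [← Finset.sum_image hinj]
  refine (Finset.sum_subset (Finset.subset_univ _) ?_).symm
  intro x _ hx
  by_contra hFx
  refine hx (Finset.mem_image.2 ⟨x k, Finset.mem_univ _, ?_⟩)
  funext j
  by_cases hj : j = k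
  · subst hj; simp
  · rw [Function.update_of_ne hj]; exact (hF x hFx j hj).symm

lemma le_def' (i' i : CCState d N) : i' ≤ i ↔ ∀ j, (i' j : ℕ) ≤ (i j : ℕ) := by
  rw [Pi.le_def]; exact forall_congr' fun j => Fin.le_def

lemma update_le_iff (i i' : CCState d N) (k : Fin d) (t : Fin (N k + 1)) :
    Function.update i' k t ≤ i ↔
      ((t : ℕ) ≤ (i k : ℕ) ∧ ∀ j, j ≠ k → (i' j : ℕ) ≤ (i j : ℕ)) := by
  rw [Pi.le_def]
  constructor
  · intro h
    refine ⟨?_, fun j hj => ?_⟩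
    · have := h k; rwa [Function.update_self, Fin.le_def] at this
    · have := h j; rwa [Function.update_of_ne hj, Fin.le_def] at this
  · rintro ⟨h1, h2⟩ j
    by_cases hj : j = k
    · subst hj; rw [Function.update_self]; exact Fin.le_def.2 h1
    · rw [Function.update_of_ne hj]; exact Fin.le_def.2 (h2 j hj)

lemma le_update_iff (i i' : CCState d N) (k : Fin d) (t : Fin (N k + 1)) :
    i' ≤ Function.update i k t ↔
      ((i' k : ℕ) ≤ (t : ℕ) ∧ ∀ j, j ≠ k → (i' j : ℕ) ≤ (i j : ℕ)) := by
  rw [Pi.le_def]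
  constructor
  · intro h
    refine ⟨?_, fun j hj => ?_⟩
    · have := h k; rwa [Function.update_self, Fin.le_def] at this
    · have := h j; rwa [Function.update_of_ne hj, Fin.le_def] at this
  · rintro ⟨h1, h2⟩ j
    by_cases hj : j = k
    · subst hj; rw [Function.update_self]; exact Fin.le_def.2 h1
    · rw [Function.update_of_ne hj]; exact Fin.le_def.2 (h2 j hj)

noncomputable def rho (i : CCState d N) : ℝ := ∏ j, (((i j : ℕ) : ℝ) + 1)

lemma rho_pos (i : CCState d N) : 0 < rho i :=
  Finset.prod_pos fun j _ => by positivity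

noncomputable def rhoE (i : CCState d N) (k : Fin d) : ℝ :=
  ∏ j ∈ univ.erase k, (((i j : ℕ) : ℝ) + 1)

lemma rhoE_pos (i : CCState d N) (k : Fin d) : 0 < rhoE i k :=
  Finset.prod_pos fun j _ => by positivity

lemma rho_eq (i : CCState d N) (k : Fin d) :
    rho i = (((i k : ℕ) : ℝ) + 1) * rhoE i k :=
  (Finset.mul_prod_erase univ _ (mem_univ k)).symm

lemma rho_update (i : CCState d N) (k : Fin d) (t : Fin (N k + 1)) :
    rho (Function.update i k t) = (((t : ℕ) : ℝ) + 1) * rhoE i k := by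
  rw [rho, ← Finset.mul_prod_erase univ _ (mem_univ k)]
  congr 1
  · simp
  · exact Finset.prod_congr rfl fun j hj => by
      rw [Function.update_of_ne (Finset.mem_erase.1 hj).1]

/-- value of updated state at `k`, as ℕ -/
lemma update_self_nat (i : CCState d N) (k : Fin d) (t : Fin (N k + 1)) :
    ((Function.update i k t k : Fin (N k + 1)) : ℕ) = (t : ℕ) := by simp

lemma update_ne_nat (i : CCState d N) (k j : Fin d) (t : Fin (N k + 1)) (h : j ≠ k) :
    Function.update i k t j = i j := Function.update_of_ne h t i

lemma key_coord (n a b : ℕ) (p c : ℝ) (hn : 1 ≤ n) (ha : a ≤ n) (hb : b ≤ n)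
    (Bk : Prop) [Decidable Bk] :
    (if 1 ≤ a ∧ a ≤ b + 1 ∧ Bk then c * ((a : ℝ) / ((a : ℝ) + 1) * p) else 0)
      + (if Bk then c * ∑ t ∈ Ioc a b, qf n p t else 0)
      + (if Bk ∧ a ≤ b then c * ((if b < n then p else 0) - dcoef n p a) else 0)
    = (if b < n ∧ Bk ∧ a ≤ b + 1 then c * (((b : ℝ) + 1) / ((b : ℝ) + 2) * p) else 0) := by
  by_cases hB : Bk
  · simp only [hB, and_true, true_and, if_true]
    rw [sum_qf n p a b hb]
    have e1 : ((a : ℝ) + 1) ≠ 0 := by positivity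
    have e2 : ((a : ℝ) + 2) ≠ 0 := by positivity
    have e3 : ((b : ℝ) + 2) ≠ 0 := by positivity
    by_cases hbn : b < n
    · simp only [if_pos hbn]
      by_cases hab2 : a ≤ b + 1
      · simp only [if_pos (show b < n ∧ a ≤ b + 1 from ⟨hbn, hab2⟩)]
        by_cases hlt : a < b
        · simp only [if_pos hlt, if_pos (show a ≤ b by omega), dcoef,
            if_pos (show a < n by omega)]
          by_cases h1 : 1 ≤ a
          · simp only [if_pos (show 1 ≤ a ∧ a ≤ b + 1 from ⟨h1, hab2⟩)]
            field_simp
            ring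
          · have : a = 0 := by omega
            subst this
            simp only [if_neg (show ¬(1 ≤ 0 ∧ 0 ≤ b + 1) by omega)]
            push_cast
            field_simp
            ring
        · by_cases hab : a ≤ b
          · have : a = b := by omega
            subst this
            simp only [if_neg hlt, if_pos hab, dcoef, if_pos hbn]
            by_cases h1 : 1 ≤ a
            · simp only [if_pos (show 1 ≤ a ∧ a ≤ a + 1 from ⟨h1, by omega⟩)]
              field_simp
              ring
            · have : a = 0 := by omega
              subst this
              simp only [if_neg (show ¬(1 ≤ 0 ∧ 0 ≤ 0 + 1) by omega)]
              push_cast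
              ring
          · have hab' : a = b + 1 := by omega
            simp only [if_neg hlt, if_neg hab,
              if_pos (show 1 ≤ a ∧ a ≤ b + 1 from ⟨by omega, hab2⟩)]
            have hc : (a : ℝ) = (b : ℝ) + 1 := by rw [hab']; push_cast; ring
            rw [hc]
            ring
      · simp only [if_neg (show ¬(1 ≤ a ∧ a ≤ b + 1) by omega),
          if_neg (show ¬a < b by omega), if_neg (show ¬a ≤ b by omega),
          if_neg (show ¬(b < n ∧ a ≤ b + 1) by omega)]
        ring
    · have hbn' : b = n := by omega
      simp only [if_neg hbn, if_neg (show ¬(b < n ∧ a ≤ b + 1) by omega)]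
      by_cases hlt : a < b
      · simp only [if_pos hlt, if_pos (show a ≤ b by omega), dcoef,
          if_pos (show a < n by omega)]
        by_cases h1 : 1 ≤ a
        · simp only [if_pos (show 1 ≤ a ∧ a ≤ b + 1 from ⟨h1, by omega⟩)]
          field_simp
          ring
        · have : a = 0 := by omega
          subst this
          simp only [if_neg (show ¬(1 ≤ 0 ∧ 0 ≤ b + 1) by omega)]
          push_cast
          field_simp
          ring
      · by_cases hab : a ≤ b
        · have : a = b := by omega
          subst this
          simp only [if_neg hlt, if_pos hab, dcoef, if_neg (show ¬a < n by omega),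
            if_pos (show 1 ≤ a ∧ a ≤ a + 1 from ⟨by omega, by omega⟩)]
          have hc : (a : ℝ) = (n : ℝ) := by rw [hbn']
          rw [hc]
          ring
        · simp only [if_neg hlt, if_neg hab,
            if_neg (show ¬(1 ≤ a ∧ a ≤ b + 1) by omega)]
          ring
  · simp [hB]

lemma evalA (n ik a : ℕ) (c p : ℝ) (Bk : Prop) [Decidable Bk] (ha : a ≤ n) :
    ∑ t ∈ range (n + 1),
      (if (t ≤ ik ∧ Bk) then c else 0)
        * (if a = t + 1 then (((t : ℕ) : ℝ) + 1) / (((t : ℕ) : ℝ) + 2) * p else 0)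
    = if (1 ≤ a ∧ a ≤ ik + 1 ∧ Bk) then c * ((a : ℝ) / ((a : ℝ) + 1) * p) else 0 := by
  have hbody : ∀ t ∈ range (n + 1),
      (if (t ≤ ik ∧ Bk) then c else 0)
        * (if a = t + 1 then (((t : ℕ) : ℝ) + 1) / (((t : ℕ) : ℝ) + 2) * p else 0)
      = (if a = t + 1 then
          (if (t ≤ ik ∧ Bk) then c else 0) * (((t : ℕ) : ℝ) + 1) / (((t : ℕ) : ℝ) + 2) * p
        else 0) := by
    intro t _
    by_cases h : a = t + 1
    · rw [if_pos h, if_pos h]; ring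
    · rw [if_neg h, if_neg h, mul_zero]
  rw [Finset.sum_congr rfl hbody, sum_ite_eq_succ]
  by_cases h1 : 1 ≤ a
  · rw [if_pos ⟨h1, by omega⟩]
    have hc : ((a - 1 : ℕ) : ℝ) = (a : ℝ) - 1 := by
      have : (1 : ℕ) ≤ a := h1
      push_cast [this]
      ring
    rw [hc]
    by_cases hB : (a - 1 ≤ ik ∧ Bk)
    · rw [if_pos hB, if_pos ⟨h1, by omega, hB.2⟩]
      ring_nf
    · rw [if_neg hB, if_neg (by
        rintro ⟨-, h2, h3⟩
        exact hB ⟨by omega, h3⟩)]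
      ring
  · rw [if_neg (by omega : ¬(1 ≤ a ∧ a ≤ n + 1)), if_neg (fun h => h1 h.1)]

lemma evalB (n ik a : ℕ) (c p : ℝ) (Bk : Prop) [Decidable Bk] (hik : ik ≤ n) :
    ∑ t ∈ range (n + 1),
      (if (t ≤ ik ∧ Bk) then c else 0) * (if a < t then qf n p t else 0)
    = if Bk then c * ∑ t ∈ Ioc a ik, qf n p t else 0 := by
  by_cases hB : Bk
  · rw [if_pos hB, Finset.mul_sum, ← range_ite_Ioc (n + 1) a ik _ (by omega)]
    refine Finset.sum_congr rfl fun t _ => ?_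
    by_cases h2 : a < t
    · by_cases h1 : t ≤ ik
      · rw [if_pos ⟨h1, hB⟩, if_pos h2, if_pos ⟨h2, h1⟩]
      · rw [if_neg (fun h : t ≤ ik ∧ Bk => h1 h.1), zero_mul,
          if_neg (fun h : a < t ∧ t ≤ ik => h1 h.2)]
    · rw [if_neg h2, mul_zero, if_neg (fun h : a < t ∧ t ≤ ik => h2 h.1)]
  · rw [if_neg hB]
    refine Finset.sum_eq_zero fun t _ => ?_
    rw [if_neg (fun h => hB h.2), zero_mul]

lemma evalR (n ik a : ℕ) (p R : ℝ) (hR : 0 < R) (Bk : Prop) [Decidable Bk]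
    (hik : ik ≤ n) (ha : a ≤ n) :
    ∑ t ∈ range (n + 1),
      (if t = ik + 1 then p else 0)
        * (if (a ≤ t ∧ Bk) then 1 / ((((t : ℕ) : ℝ) + 1) * R) else 0)
    = if (ik < n ∧ Bk ∧ a ≤ ik + 1) then
        (1 / (((ik : ℝ) + 1) * R)) * (((ik : ℝ) + 1) / ((ik : ℝ) + 2) * p)
      else 0 := by
  have hbody : ∀ t ∈ range (n + 1),
      (if t = ik + 1 then p else 0)
        * (if (a ≤ t ∧ Bk) then 1 / ((((t : ℕ) : ℝ) + 1) * R) else 0)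
      = (if t = ik + 1 then
          p * (if (a ≤ t ∧ Bk) then 1 / ((((t : ℕ) : ℝ) + 1) * R) else 0) else 0) := by
    intro t _
    by_cases h : t = ik + 1
    · rw [if_pos h, if_pos h]
    · rw [if_neg h, if_neg h, zero_mul]
  rw [Finset.sum_congr rfl hbody, sum_ite_eq_gen]
  have e1 : ((ik : ℝ) + 1) ≠ 0 := by positivity
  have e2 : ((ik : ℝ) + 2) ≠ 0 := by positivity
  have eR : R ≠ 0 := ne_of_gt hR
  by_cases h : ik < n
  · rw [if_pos (by omega : ik + 1 < n + 1)]
    by_cases h2 : (a ≤ ik + 1 ∧ Bk)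
    · rw [if_pos h2, if_pos ⟨h, h2.2, h2.1⟩]
      push_cast
      field_simp
      ring
    · rw [if_neg h2, if_neg (by rintro ⟨-, hb, hle⟩; exact h2 ⟨hle, hb⟩), mul_zero]
  · rw [if_neg (by omega : ¬ik + 1 < n + 1), if_neg (by rintro ⟨hh, -⟩; exact h hh)]

end CCAux

namespace CCAux

variable {d : ℕ} {N : Fin d → ℕ} {p : Fin d → ℝ}

lemma antidual_apply (i i' : CCState d N) : antidualCC d N p i i' =
    (∑ k, if ((i' k : ℕ) = (i k : ℕ) + 1 ∧ ∀ j, j ≠ k → i' j = i j)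
        then (((i k : ℕ) : ℝ) + 1) / (((i k : ℕ) : ℝ) + 2) * p k else 0)
    + (∑ k, if ((i' k : ℕ) < (i k : ℕ) ∧ ∀ j, j ≠ k → i' j = i j)
        then qf (N k) (p k) ((i k : ℕ)) else 0)
    + (if i' = i then 1 - ∑ j, dcoef (N j) (p j) ((i j : ℕ)) else 0) := rfl

lemma fin_le (i : CCState d N) (j : Fin d) : (i j : ℕ) ≤ N j :=
  Nat.lt_succ_iff.mp (i j).isLt

/-- collapse: row sum of the "up" part -/
lemma collapse_row_up (i : CCState d N) (k : Fin d) (v : ℝ) :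
    ∑ i' : CCState d N,
        (if ((i' k : ℕ) = (i k : ℕ) + 1 ∧ ∀ j, j ≠ k → i' j = i j) then v else 0)
      = if (i k : ℕ) + 1 ≤ N k then v else 0 := by
  rw [sum_update_support i k _ (fun i'' h => by
    by_cases hc : ((i'' k : ℕ) = (i k : ℕ) + 1 ∧ ∀ j, j ≠ k → i'' j = i j)
    · exact hc.2
    · exact absurd (if_neg hc) h)]
  have hcong : ∀ t : Fin (N k + 1),
      (if (((Function.update i k t) k : ℕ) = (i k : ℕ) + 1
            ∧ ∀ j, j ≠ k → (Function.update i k t) j = i j) then v else 0)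
        = (if ((t : ℕ) = (i k : ℕ) + 1) then v else 0) := by
    intro t
    refine if_congr ?_ rfl rfl
    constructor
    · rintro ⟨h1, -⟩; rwa [Function.update_self] at h1
    · intro h1
      exact ⟨by rwa [Function.update_self], fun j hj => Function.update_of_ne hj _ _⟩
  rw [Finset.sum_congr rfl (fun t _ => hcong t),
    Fin.sum_univ_eq_sum_range (fun t => if (t = (i k : ℕ) + 1) then v else 0),
    sum_ite_eq_gen]
  exact if_congr (by omega) rfl rfl

/-- collapse: row sum of the "down" part -/
lemma collapse_row_down (i : CCState d N) (k : Fin d) (v : ℝ) :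
    ∑ i' : CCState d N,
        (if ((i' k : ℕ) < (i k : ℕ) ∧ ∀ j, j ≠ k → i' j = i j) then v else 0)
      = ((i k : ℕ) : ℝ) * v := by
  rw [sum_update_support i k _ (fun i'' h => by
    by_cases hc : ((i'' k : ℕ) < (i k : ℕ) ∧ ∀ j, j ≠ k → i'' j = i j)
    · exact hc.2
    · exact absurd (if_neg hc) h)]
  have hcong : ∀ t : Fin (N k + 1),
      (if (((Function.update i k t) k : ℕ) < (i k : ℕ)
            ∧ ∀ j, j ≠ k → (Function.update i k t) j = i j) then v else 0)
        = (if ((t : ℕ) < (i k : ℕ)) then v else 0) := by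
    intro t
    refine if_congr ?_ rfl rfl
    constructor
    · rintro ⟨h1, -⟩; rwa [Function.update_self] at h1
    · intro h1
      exact ⟨by rwa [Function.update_self], fun j hj => Function.update_of_ne hj _ _⟩
  rw [Finset.sum_congr rfl (fun t _ => hcong t),
    Fin.sum_univ_eq_sum_range (fun t => if (t < (i k : ℕ)) then v else 0),
    sum_ite_lt (N k + 1) (i k : ℕ) (by have := fin_le i k; omega) v]

/-- row sums are 1 -/
lemma row_sum (hp : ∀ j, 0 < p j) (i : CCState d N) :
    ∑ i', antidualCC d N p i i' = 1 := by
  simp only [antidual_apply]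
  rw [Finset.sum_add_distrib, Finset.sum_add_distrib]
  have hc1 : (∑ i' : CCState d N, ∑ k : Fin d,
      (if ((i' k : ℕ) = (i k : ℕ) + 1 ∧ ∀ j, j ≠ k → i' j = i j)
        then (((i k : ℕ) : ℝ) + 1) / (((i k : ℕ) : ℝ) + 2) * p k else 0))
      = ∑ k : Fin d, ∑ i' : CCState d N,
      (if ((i' k : ℕ) = (i k : ℕ) + 1 ∧ ∀ j, j ≠ k → i' j = i j)
        then (((i k : ℕ) : ℝ) + 1) / (((i k : ℕ) : ℝ) + 2) * p k else 0) := Finset.sum_comm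
  have hc2 : (∑ i' : CCState d N, ∑ k : Fin d,
      (if ((i' k : ℕ) < (i k : ℕ) ∧ ∀ j, j ≠ k → i' j = i j)
        then qf (N k) (p k) ((i k : ℕ)) else 0))
      = ∑ k : Fin d, ∑ i' : CCState d N,
      (if ((i' k : ℕ) < (i k : ℕ) ∧ ∀ j, j ≠ k → i' j = i j)
        then qf (N k) (p k) ((i k : ℕ)) else 0) := Finset.sum_comm
  rw [hc1, hc2]
  have h3 : ∑ i' : CCState d N,
      (if i' = i then 1 - ∑ j, dcoef (N j) (p j) ((i j : ℕ)) else 0)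
      = 1 - ∑ j, dcoef (N j) (p j) ((i j : ℕ)) := by
    rw [Finset.sum_ite_eq' univ i (fun _ => 1 - ∑ j, dcoef (N j) (p j) ((i j : ℕ))),
      if_pos (mem_univ i)]
  rw [h3,
    Finset.sum_congr rfl (fun k _ => collapse_row_up i k _),
    Finset.sum_congr rfl (fun k _ => collapse_row_down i k _),
    ← Finset.sum_add_distrib,
    Finset.sum_congr rfl (fun k _ => row_coord (N k) ((i k : ℕ)) (p k) (fin_le i k))]
  ring

/-- collapse: column sum of the "up" part -/
lemma collapse_col_up (i' : CCState d N) (k : Fin d) (w : ℕ → ℝ) :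
    ∑ i : CCState d N,
        (if ((i' k : ℕ) = (i k : ℕ) + 1 ∧ ∀ j, j ≠ k → i' j = i j) then w ((i k : ℕ)) else 0)
      = if 1 ≤ (i' k : ℕ) ∧ (i' k : ℕ) ≤ N k + 1 then w ((i' k : ℕ) - 1) else 0 := by
  rw [sum_update_support i' k _ (fun i'' h => by
    by_cases hc : ((i' k : ℕ) = (i'' k : ℕ) + 1 ∧ ∀ j, j ≠ k → i' j = i'' j)
    · exact fun j hj => (hc.2 j hj).symm
    · exact absurd (if_neg hc) h)]
  have hcong : ∀ t : Fin (N k + 1),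
      (if ((i' k : ℕ) = ((Function.update i' k t) k : ℕ) + 1
            ∧ ∀ j, j ≠ k → i' j = (Function.update i' k t) j) then w (((Function.update i' k t) k : ℕ)) else 0)
        = (if ((i' k : ℕ) = (t : ℕ) + 1) then w (t : ℕ) else 0) := by
    intro t
    rw [Function.update_self]
    refine if_congr ?_ rfl rfl
    constructor
    · rintro ⟨h1, -⟩; exact h1
    · intro h1
      exact ⟨h1, fun j hj => (Function.update_of_ne hj _ _).symm⟩
  rw [Finset.sum_congr rfl (fun t _ => hcong t),
    Fin.sum_univ_eq_sum_range (fun t => if ((i' k : ℕ) = t + 1) then w t else 0),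
    sum_ite_eq_succ]

/-- collapse: column sum of the "down" part -/
lemma collapse_col_down (i' : CCState d N) (k : Fin d) (w : ℕ → ℝ) :
    ∑ i : CCState d N,
        (if ((i' k : ℕ) < (i k : ℕ) ∧ ∀ j, j ≠ k → i' j = i j) then w ((i k : ℕ)) else 0)
      = ∑ t ∈ Ioc (i' k : ℕ) (N k), w t := by
  rw [sum_update_support i' k _ (fun i'' h => by
    by_cases hc : ((i' k : ℕ) < (i'' k : ℕ) ∧ ∀ j, j ≠ k → i' j = i'' j)
    · exact fun j hj => (hc.2 j hj).symm
    · exact absurd (if_neg hc) h)]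
  have hcong : ∀ t : Fin (N k + 1),
      (if ((i' k : ℕ) < ((Function.update i' k t) k : ℕ)
            ∧ ∀ j, j ≠ k → i' j = (Function.update i' k t) j) then w (((Function.update i' k t) k : ℕ)) else 0)
        = (if ((i' k : ℕ) < (t : ℕ) ∧ (t : ℕ) ≤ N k) then w (t : ℕ) else 0) := by
    intro t
    rw [Function.update_self]
    refine if_congr ?_ rfl rfl
    constructor
    · rintro ⟨h1, -⟩
      exact ⟨h1, by have := t.isLt; omega⟩
    · rintro ⟨h1, -⟩
      exact ⟨h1, fun j hj => (Function.update_of_ne hj _ _).symm⟩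
  rw [Finset.sum_congr rfl (fun t _ => hcong t),
    Fin.sum_univ_eq_sum_range (fun t => if ((i' k : ℕ) < t ∧ t ≤ N k) then w t else 0),
    range_ite_Ioc (N k + 1) _ (N k) w (by omega)]

/-- column sums are 1 -/
lemma col_sum (hp : ∀ j, 0 < p j) (hN : ∀ j, 1 ≤ N j) (i' : CCState d N) :
    ∑ i, antidualCC d N p i i' = 1 := by
  simp only [antidual_apply]
  rw [Finset.sum_add_distrib, Finset.sum_add_distrib]
  have hc1 : (∑ i : CCState d N, ∑ k : Fin d,
      (if ((i' k : ℕ) = (i k : ℕ) + 1 ∧ ∀ j, j ≠ k → i' j = i j)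
        then (((i k : ℕ) : ℝ) + 1) / (((i k : ℕ) : ℝ) + 2) * p k else 0))
      = ∑ k : Fin d, ∑ i : CCState d N,
      (if ((i' k : ℕ) = (i k : ℕ) + 1 ∧ ∀ j, j ≠ k → i' j = i j)
        then (((i k : ℕ) : ℝ) + 1) / (((i k : ℕ) : ℝ) + 2) * p k else 0) := Finset.sum_comm
  have hc2 : (∑ i : CCState d N, ∑ k : Fin d,
      (if ((i' k : ℕ) < (i k : ℕ) ∧ ∀ j, j ≠ k → i' j = i j)
        then qf (N k) (p k) ((i k : ℕ)) else 0))
      = ∑ k : Fin d, ∑ i : CCState d N,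
      (if ((i' k : ℕ) < (i k : ℕ) ∧ ∀ j, j ≠ k → i' j = i j)
        then qf (N k) (p k) ((i k : ℕ)) else 0) := Finset.sum_comm
  rw [hc1, hc2]
  have h3 : ∑ i : CCState d N,
      (if i' = i then 1 - ∑ j, dcoef (N j) (p j) ((i j : ℕ)) else 0)
      = 1 - ∑ j, dcoef (N j) (p j) ((i' j : ℕ)) := by
    rw [Finset.sum_ite_eq univ i' (fun i => 1 - ∑ j, dcoef (N j) (p j) ((i j : ℕ))),
      if_pos (mem_univ i')]
  rw [h3,
    Finset.sum_congr rfl (fun k _ =>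
      collapse_col_up i' k (fun t => ((t : ℝ) + 1) / ((t : ℝ) + 2) * p k)),
    Finset.sum_congr rfl (fun k _ => collapse_col_down i' k (fun t => qf (N k) (p k) t))]
  have hup : ∀ k : Fin d,
      (if 1 ≤ (i' k : ℕ) ∧ (i' k : ℕ) ≤ N k + 1
          then (((((i' k : ℕ) - 1 : ℕ)) : ℝ) + 1) / ((((i' k : ℕ) - 1 : ℕ) : ℝ) + 2) * p k else 0)
        = (if 1 ≤ (i' k : ℕ) ∧ (i' k : ℕ) ≤ N k
            then ((i' k : ℕ) : ℝ) / (((i' k : ℕ) : ℝ) + 1) * p k else 0) := by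
    intro k
    by_cases h1 : 1 ≤ (i' k : ℕ)
    · rw [if_pos ⟨h1, by have := fin_le i' k; omega⟩, if_pos ⟨h1, fin_le i' k⟩]
      have hc : (((i' k : ℕ) - 1 : ℕ) : ℝ) = ((i' k : ℕ) : ℝ) - 1 := by
        push_cast [h1]; ring
      rw [hc]
      ring_nf
    · rw [if_neg (fun h => h1 h.1), if_neg (fun h => h1 h.1)]
  have hdown : ∀ k : Fin d,
      ∑ t ∈ Ioc (i' k : ℕ) (N k), qf (N k) (p k) t
        = (if (i' k : ℕ) < N k then p k / (((i' k : ℕ) : ℝ) + 2) else 0) := by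
    intro k
    rw [sum_qf (N k) (p k) _ _ (le_refl (N k))]
    by_cases h : (i' k : ℕ) < N k
    · rw [if_pos h, if_pos h, if_neg (lt_irrefl (N k)), sub_zero]
    · rw [if_neg h, if_neg h]
  rw [Finset.sum_congr rfl (fun k _ => hup k),
    Finset.sum_congr rfl (fun k _ => hdown k),
    ← Finset.sum_add_distrib,
    Finset.sum_congr rfl (fun k _ => col_coord (N k) ((i' k : ℕ)) (p k) (fin_le i' k) (hN k))]
  ring

end CCAux

namespace CCAux

variable {d : ℕ} {N : Fin d → ℕ} {p : Fin d → ℝ}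

lemma diag_nonneg (hp : ∀ j, 0 < p j) (hN : ∀ j, 1 ≤ N j)
    (hcond : ∑ j, (1 - 1 / ((N j : ℝ) * ((N j : ℝ) + 1))) * p j ≤ 1) (i : CCState d N) :
    0 ≤ 1 - ∑ j, dcoef (N j) (p j) ((i j : ℕ)) := by
  have h : ∑ j, dcoef (N j) (p j) ((i j : ℕ))
      ≤ ∑ j, (1 - 1 / ((N j : ℝ) * ((N j : ℝ) + 1))) * p j :=
    Finset.sum_le_sum fun j _ => dcoef_le _ _ _ (hp j) (fin_le i j) (hN j)
  linarith

lemma diag_pos (hd : 1 ≤ d) (hp : ∀ j, 0 < p j) (hN : ∀ j, 1 ≤ N j)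
    (hpsum : ∑ j, p j ≤ 1) (i : CCState d N) :
    0 < 1 - ∑ j, dcoef (N j) (p j) ((i j : ℕ)) := by
  have hne : (univ : Finset (Fin d)).Nonempty := ⟨⟨0, hd⟩, mem_univ _⟩
  have h : ∑ j, dcoef (N j) (p j) ((i j : ℕ)) < ∑ j, p j :=
    Finset.sum_lt_sum_of_nonempty hne fun j _ => dcoef_lt _ _ _ (hp j) (hN j)
  linarith

lemma entry_nonneg (hp : ∀ j, 0 < p j) (hN : ∀ j, 1 ≤ N j)
    (hcond : ∑ j, (1 - 1 / ((N j : ℝ) * ((N j : ℝ) + 1))) * p j ≤ 1)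
    (i i' : CCState d N) : 0 ≤ antidualCC d N p i i' := by
  rw [antidual_apply]
  have h1 : 0 ≤ ∑ k, (if ((i' k : ℕ) = (i k : ℕ) + 1 ∧ ∀ j, j ≠ k → i' j = i j)
      then (((i k : ℕ) : ℝ) + 1) / (((i k : ℕ) : ℝ) + 2) * p k else 0) :=
    Finset.sum_nonneg fun k _ => by
      split_ifs
      · have := (hp k).le; positivity
      · exact le_refl 0
  have h2 : 0 ≤ ∑ k, (if ((i' k : ℕ) < (i k : ℕ) ∧ ∀ j, j ≠ k → i' j = i j)
      then qf (N k) (p k) ((i k : ℕ)) else 0) :=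
    Finset.sum_nonneg fun k _ => by
      split_ifs
      · exact (qf_pos _ _ _ (hp k)).le
      · exact le_refl 0
  have h3 : 0 ≤ (if i' = i then 1 - ∑ j, dcoef (N j) (p j) ((i j : ℕ)) else 0) := by
    split_ifs
    · exact diag_nonneg hp hN hcond i
    · exact le_refl 0
  linarith

lemma self_pos (hd : 1 ≤ d) (hp : ∀ j, 0 < p j) (hN : ∀ j, 1 ≤ N j)
    (hpsum : ∑ j, p j ≤ 1) (i : CCState d N) : 0 < antidualCC d N p i i := by
  rw [antidual_apply]
  have h1 : ∑ k, (if ((i k : ℕ) = (i k : ℕ) + 1 ∧ ∀ j, j ≠ k → i j = i j)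
      then (((i k : ℕ) : ℝ) + 1) / (((i k : ℕ) : ℝ) + 2) * p k else 0) = 0 :=
    Finset.sum_eq_zero fun k _ => if_neg (by omega)
  have h2 : ∑ k, (if ((i k : ℕ) < (i k : ℕ) ∧ ∀ j, j ≠ k → i j = i j)
      then qf (N k) (p k) ((i k : ℕ)) else 0) = 0 :=
    Finset.sum_eq_zero fun k _ => if_neg (by omega)
  rw [h1, h2, if_pos rfl]
  have := diag_pos hd hp hN hpsum i
  linarith

lemma up_pos (hp : ∀ j, 0 < p j) (hN : ∀ j, 1 ≤ N j)
    (hcond : ∑ j, (1 - 1 / ((N j : ℝ) * ((N j : ℝ) + 1))) * p j ≤ 1)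
    (i : CCState d N) (k : Fin d) (t : Fin (N k + 1)) (ht : (t : ℕ) = (i k : ℕ) + 1) :
    0 < antidualCC d N p i (Function.update i k t) := by
  rw [antidual_apply]
  set i' := Function.update i k t with hi'
  have hcondk : ((i' k : ℕ) = (i k : ℕ) + 1 ∧ ∀ j, j ≠ k → i' j = i j) :=
    ⟨by rw [hi', Function.update_self]; exact ht,
     fun j hj => Function.update_of_ne hj _ _⟩
  have hA : (((i k : ℕ) : ℝ) + 1) / (((i k : ℕ) : ℝ) + 2) * p k
      ≤ ∑ k', (if ((i' k' : ℕ) = (i k' : ℕ) + 1 ∧ ∀ j, j ≠ k' → i' j = i j)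
        then (((i k' : ℕ) : ℝ) + 1) / (((i k' : ℕ) : ℝ) + 2) * p k' else 0) := by
    have hterm := Finset.single_le_sum
      (f := fun k' => (if ((i' k' : ℕ) = (i k' : ℕ) + 1 ∧ ∀ j, j ≠ k' → i' j = i j)
        then (((i k' : ℕ) : ℝ) + 1) / (((i k' : ℕ) : ℝ) + 2) * p k' else 0))
      (fun k' _ => by
        split_ifs
        · have := (hp k').le; positivity
        · exact le_refl 0) (mem_univ k)
    simpa only [if_pos hcondk] using hterm
  have hApos : 0 < (((i k : ℕ) : ℝ) + 1) / (((i k : ℕ) : ℝ) + 2) * p k := by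
    have := hp k; positivity
  have h2 : 0 ≤ ∑ k', (if ((i' k' : ℕ) < (i k' : ℕ) ∧ ∀ j, j ≠ k' → i' j = i j)
      then qf (N k') (p k') ((i k' : ℕ)) else 0) :=
    Finset.sum_nonneg fun k' _ => by
      split_ifs
      · exact (qf_pos _ _ _ (hp k')).le
      · exact le_refl 0
  have h3 : 0 ≤ (if i' = i then 1 - ∑ j, dcoef (N j) (p j) ((i j : ℕ)) else 0) := by
    split_ifs
    · exact diag_nonneg hp hN hcond i
    · exact le_refl 0
  linarith

lemma down_pos (hp : ∀ j, 0 < p j) (hN : ∀ j, 1 ≤ N j)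
    (hcond : ∑ j, (1 - 1 / ((N j : ℝ) * ((N j : ℝ) + 1))) * p j ≤ 1)
    (i : CCState d N) (k : Fin d) (t : Fin (N k + 1)) (ht : (t : ℕ) < (i k : ℕ)) :
    0 < antidualCC d N p i (Function.update i k t) := by
  rw [antidual_apply]
  set i' := Function.update i k t with hi'
  have hcondk : ((i' k : ℕ) < (i k : ℕ) ∧ ∀ j, j ≠ k → i' j = i j) :=
    ⟨by rw [hi', Function.update_self]; exact ht,
     fun j hj => Function.update_of_ne hj _ _⟩
  have hA : qf (N k) (p k) ((i k : ℕ))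
      ≤ ∑ k', (if ((i' k' : ℕ) < (i k' : ℕ) ∧ ∀ j, j ≠ k' → i' j = i j)
        then qf (N k') (p k') ((i k' : ℕ)) else 0) := by
    have hterm := Finset.single_le_sum
      (f := fun k' => (if ((i' k' : ℕ) < (i k' : ℕ) ∧ ∀ j, j ≠ k' → i' j = i j)
        then qf (N k') (p k') ((i k' : ℕ)) else 0))
      (fun k' _ => by
        split_ifs
        · exact (qf_pos _ _ _ (hp k')).le
        · exact le_refl 0) (mem_univ k)
    simpa only [if_pos hcondk] using hterm
  have hApos : 0 < qf (N k) (p k) ((i k : ℕ)) := qf_pos _ _ _ (hp k)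
  have h1 : 0 ≤ ∑ k', (if ((i' k' : ℕ) = (i k' : ℕ) + 1 ∧ ∀ j, j ≠ k' → i' j = i j)
      then (((i k' : ℕ) : ℝ) + 1) / (((i k' : ℕ) : ℝ) + 2) * p k' else 0) :=
    Finset.sum_nonneg fun k' _ => by
      split_ifs
      · have := (hp k').le; positivity
      · exact le_refl 0
  have h3 : 0 ≤ (if i' = i then 1 - ∑ j, dcoef (N j) (p j) ((i j : ℕ)) else 0) := by
    split_ifs
    · exact diag_nonneg hp hN hcond i
    · exact le_refl 0
  linarith

lemma mul_pos_entry {n : Type*} [Fintype n] {A B : Matrix n n ℝ}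
    (hA : ∀ a b, 0 ≤ A a b) (hB : ∀ a b, 0 ≤ B a b) {i i' : n} (x : n)
    (h1 : 0 < A i x) (h2 : 0 < B x i') : 0 < (A * B) i i' := by
  rw [Matrix.mul_apply]
  exact lt_of_lt_of_le (mul_pos h1 h2)
    (Finset.single_le_sum (f := fun y => A i y * B y i')
      (fun y _ => mul_nonneg (hA _ _) (hB _ _)) (mem_univ x))

lemma pow_entry_nonneg (hp : ∀ j, 0 < p j) (hN : ∀ j, 1 ≤ N j)
    (hcond : ∑ j, (1 - 1 / ((N j : ℝ) * ((N j : ℝ) + 1))) * p j ≤ 1) :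
    ∀ n (i i' : CCState d N), 0 ≤ ((antidualCC d N p) ^ n) i i' := by
  intro n
  induction n with
  | zero =>
    intro i i'
    rw [pow_zero]
    by_cases h : i = i'
    · rw [h, Matrix.one_apply_eq]; norm_num
    · rw [Matrix.one_apply_ne h]
  | succ m ih =>
    intro i i'
    rw [pow_succ, Matrix.mul_apply]
    exact Finset.sum_nonneg fun x _ =>
      mul_nonneg (ih i x) (entry_nonneg hp hN hcond x i')

def ddist (a b : ℕ) : ℕ := if a < b then b - a else if b < a then 1 else 0

lemma ddist_le (a b n : ℕ) (hb : b ≤ n) (hn : 1 ≤ n) : ddist a b ≤ n := by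
  unfold ddist; split_ifs <;> omega

lemma reach (hd : 1 ≤ d) (hp : ∀ j, 0 < p j) (hN : ∀ j, 1 ≤ N j)
    (hpsum : ∑ j, p j ≤ 1)
    (hcond : ∑ j, (1 - 1 / ((N j : ℝ) * ((N j : ℝ) + 1))) * p j ≤ 1) :
    ∀ m (i i' : CCState d N), (∑ k, ddist ((i k : ℕ)) ((i' k : ℕ))) ≤ m →
      0 < ((antidualCC d N p) ^ m) i i' := by
  intro m
  induction m with
  | zero =>
    intro i i' h
    have hz : ∀ k ∈ (univ : Finset (Fin d)), ddist ((i k : ℕ)) ((i' k : ℕ)) = 0 := by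
      rw [← Finset.sum_eq_zero_iff]
      omega
    have : i = i' := by
      funext k
      have := hz k (mem_univ k)
      unfold ddist at this
      have : (i k : ℕ) = (i' k : ℕ) := by split_ifs at this <;> omega
      exact Fin.ext this
    rw [this, pow_zero, Matrix.one_apply_eq]
    norm_num
  | succ m ih =>
    intro i i' h
    by_cases hm : (∑ k, ddist ((i k : ℕ)) ((i' k : ℕ))) ≤ m
    · rw [pow_succ]
      exact mul_pos_entry (pow_entry_nonneg hp hN hcond m)
        (entry_nonneg hp hN hcond) i' (ih i i' hm)
        (self_pos hd hp hN hpsum i')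
    · have hex : ∃ k, ddist ((i k : ℕ)) ((i' k : ℕ)) ≠ 0 := by
        by_contra hno
        push_neg at hno
        rw [Finset.sum_eq_zero (fun k _ => hno k)] at hm
        omega
      obtain ⟨k, hk⟩ := hex
      have hddk : 1 ≤ ddist ((i k : ℕ)) ((i' k : ℕ)) := by omega
      rcases lt_trichotomy ((i k : ℕ)) ((i' k : ℕ)) with hlt | heq | hgt
      · -- move up by one in coordinate k
        have hlt2 : (i k : ℕ) + 1 < N k + 1 := by have := fin_le i' k; omega
        set t : Fin (N k + 1) := ⟨(i k : ℕ) + 1, hlt2⟩ with hT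
        set i1 := Function.update i k t with hi1
        have hstep : 0 < antidualCC d N p i i1 :=
          up_pos hp hN hcond i k t rfl
        have hi1k : (i1 k : ℕ) = (i k : ℕ) + 1 := by
          rw [hi1, Function.update_self]
        have hμ : ∑ k', ddist ((i1 k' : ℕ)) ((i' k' : ℕ)) ≤ m := by
          have e1 : ∑ k', ddist ((i1 k' : ℕ)) ((i' k' : ℕ))
              = ddist ((i1 k : ℕ)) ((i' k : ℕ))
                + ∑ k' ∈ univ.erase k, ddist ((i1 k' : ℕ)) ((i' k' : ℕ)) :=
            (Finset.add_sum_erase univ _ (mem_univ k)).symm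
          have e2 : ∑ k', ddist ((i k' : ℕ)) ((i' k' : ℕ))
              = ddist ((i k : ℕ)) ((i' k : ℕ))
                + ∑ k' ∈ univ.erase k, ddist ((i k' : ℕ)) ((i' k' : ℕ)) :=
            (Finset.add_sum_erase univ _ (mem_univ k)).symm
          have e3 : ∑ k' ∈ univ.erase k, ddist ((i1 k' : ℕ)) ((i' k' : ℕ))
              = ∑ k' ∈ univ.erase k, ddist ((i k' : ℕ)) ((i' k' : ℕ)) :=
            Finset.sum_congr rfl fun k' hk' => by
              rw [hi1, Function.update_of_ne (Finset.mem_erase.1 hk').1]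
          have e4 : ddist ((i1 k : ℕ)) ((i' k : ℕ)) + 1
              ≤ ddist ((i k : ℕ)) ((i' k : ℕ)) := by
            rw [hi1k]
            unfold ddist
            split_ifs <;> omega
          omega
        rw [pow_succ']
        exact mul_pos_entry (entry_nonneg hp hN hcond)
          (pow_entry_nonneg hp hN hcond m) i1 hstep (ih i1 i' hμ)
      · exact absurd (by unfold ddist; rw [heq]; simp) hk
      · -- move down to the target value in coordinate k
        set i1 := Function.update i k (i' k) with hi1
        have hstep : 0 < antidualCC d N p i i1 :=
          down_pos hp hN hcond i k (i' k) hgt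
        have hi1k : (i1 k : ℕ) = (i' k : ℕ) := by
          rw [hi1, Function.update_self]
        have hμ : ∑ k', ddist ((i1 k' : ℕ)) ((i' k' : ℕ)) ≤ m := by
          have e1 : ∑ k', ddist ((i1 k' : ℕ)) ((i' k' : ℕ))
              = ddist ((i1 k : ℕ)) ((i' k : ℕ))
                + ∑ k' ∈ univ.erase k, ddist ((i1 k' : ℕ)) ((i' k' : ℕ)) :=
            (Finset.add_sum_erase univ _ (mem_univ k)).symm
          have e2 : ∑ k', ddist ((i k' : ℕ)) ((i' k' : ℕ))
              = ddist ((i k : ℕ)) ((i' k : ℕ))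
                + ∑ k' ∈ univ.erase k, ddist ((i k' : ℕ)) ((i' k' : ℕ)) :=
            (Finset.add_sum_erase univ _ (mem_univ k)).symm
          have e3 : ∑ k' ∈ univ.erase k, ddist ((i1 k' : ℕ)) ((i' k' : ℕ))
              = ∑ k' ∈ univ.erase k, ddist ((i k' : ℕ)) ((i' k' : ℕ)) :=
            Finset.sum_congr rfl fun k' hk' => by
              rw [hi1, Function.update_of_ne (Finset.mem_erase.1 hk').1]
          have e4 : ddist ((i1 k : ℕ)) ((i' k : ℕ)) + 1
              ≤ ddist ((i k : ℕ)) ((i' k : ℕ)) := by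
            rw [hi1k]
            unfold ddist
            split_ifs <;> omega
          omega
        rw [pow_succ']
        exact mul_pos_entry (entry_nonneg hp hN hcond)
          (pow_entry_nonneg hp hN hcond m) i1 hstep (ih i1 i' hμ)

lemma exists_pow_pos (hd : 1 ≤ d) (hp : ∀ j, 0 < p j) (hN : ∀ j, 1 ≤ N j)
    (hpsum : ∑ j, p j ≤ 1)
    (hcond : ∑ j, (1 - 1 / ((N j : ℝ) * ((N j : ℝ) + 1))) * p j ≤ 1) :
    ∃ n, ∀ i i' : CCState d N, 0 < ((antidualCC d N p) ^ n) i i' := by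
  refine ⟨∑ k, N k, fun i i' => reach hd hp hN hpsum hcond _ i i' ?_⟩
  exact Finset.sum_le_sum fun k _ => ddist_le _ _ _ (fin_le i' k) (hN k)

end CCAux

namespace CCAux

variable {d : ℕ} {N : Fin d → ℕ} {p : Fin d → ℝ}

lemma le_split (i i' : CCState d N) (k : Fin d) :
    i' ≤ i ↔ ((∀ j, j ≠ k → (i' j : ℕ) ≤ (i j : ℕ)) ∧ (i' k : ℕ) ≤ (i k : ℕ)) := by
  rw [le_def']
  constructor
  · intro h; exact ⟨fun j _ => h j, h k⟩
  · rintro ⟨h1, h2⟩ j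
    by_cases hj : j = k
    · exact hj ▸ h2
    · exact h1 j hj

lemma dual_A (i i' : CCState d N) (k : Fin d) :
    ∑ i'' : CCState d N,
      (if i'' ≤ i then 1 / rho i else 0)
        * (if ((i' k : ℕ) = (i'' k : ℕ) + 1 ∧ ∀ j, j ≠ k → i' j = i'' j)
            then (((i'' k : ℕ) : ℝ) + 1) / (((i'' k : ℕ) : ℝ) + 2) * p k else 0)
    = if (1 ≤ (i' k : ℕ) ∧ (i' k : ℕ) ≤ (i k : ℕ) + 1
          ∧ ∀ j, j ≠ k → (i' j : ℕ) ≤ (i j : ℕ))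
        then (1 / rho i) * (((i' k : ℕ) : ℝ) / (((i' k : ℕ) : ℝ) + 1) * p k) else 0 := by
  rw [sum_update_support i' k _ (fun i'' h => by
    by_cases hc : ((i' k : ℕ) = (i'' k : ℕ) + 1 ∧ ∀ j, j ≠ k → i' j = i'' j)
    · exact fun j hj => (hc.2 j hj).symm
    · rw [if_neg hc, mul_zero] at h; exact absurd rfl h)]
  have hcong : ∀ t : Fin (N k + 1),
      ((if Function.update i' k t ≤ i then 1 / rho i else 0)
        * (if ((i' k : ℕ) = ((Function.update i' k t) k : ℕ) + 1
              ∧ ∀ j, j ≠ k → i' j = (Function.update i' k t) j)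
            then ((((Function.update i' k t) k : ℕ) : ℝ) + 1)
              / ((((Function.update i' k t) k : ℕ) : ℝ) + 2) * p k else 0))
      = ((if ((t : ℕ) ≤ (i k : ℕ) ∧ ∀ j, j ≠ k → (i' j : ℕ) ≤ (i j : ℕ))
            then 1 / rho i else 0)
        * (if ((i' k : ℕ) = (t : ℕ) + 1)
            then (((t : ℕ) : ℝ) + 1) / (((t : ℕ) : ℝ) + 2) * p k else 0)) := by
    intro t
    refine congrArg₂ (· * ·) (if_congr (update_le_iff i i' k t) rfl rfl) ?_
    refine if_congr ?_ (by rw [Function.update_self]) rfl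
    constructor
    · rintro ⟨h1, -⟩; rwa [Function.update_self] at h1
    · intro h1
      exact ⟨by rwa [Function.update_self],
        fun j hj => (Function.update_of_ne hj _ _).symm⟩
  rw [Finset.sum_congr rfl (fun t _ => hcong t),
    Fin.sum_univ_eq_sum_range (fun t =>
      (if (t ≤ (i k : ℕ) ∧ ∀ j, j ≠ k → (i' j : ℕ) ≤ (i j : ℕ)) then 1 / rho i else 0)
        * (if ((i' k : ℕ) = t + 1) then ((t : ℝ) + 1) / ((t : ℝ) + 2) * p k else 0))
      (N k + 1)]
  exact evalA (N k) ((i k : ℕ)) ((i' k : ℕ)) (1 / rho i) (p k) _ (fin_le i' k)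

lemma dual_B (i i' : CCState d N) (k : Fin d) :
    ∑ i'' : CCState d N,
      (if i'' ≤ i then 1 / rho i else 0)
        * (if ((i' k : ℕ) < (i'' k : ℕ) ∧ ∀ j, j ≠ k → i' j = i'' j)
            then qf (N k) (p k) ((i'' k : ℕ)) else 0)
    = if (∀ j, j ≠ k → (i' j : ℕ) ≤ (i j : ℕ))
        then (1 / rho i) * ∑ t ∈ Ioc ((i' k : ℕ)) ((i k : ℕ)), qf (N k) (p k) t
        else 0 := by
  rw [sum_update_support i' k _ (fun i'' h => by
    by_cases hc : ((i' k : ℕ) < (i'' k : ℕ) ∧ ∀ j, j ≠ k → i' j = i'' j)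
    · exact fun j hj => (hc.2 j hj).symm
    · rw [if_neg hc, mul_zero] at h; exact absurd rfl h)]
  have hcong : ∀ t : Fin (N k + 1),
      ((if Function.update i' k t ≤ i then 1 / rho i else 0)
        * (if ((i' k : ℕ) < ((Function.update i' k t) k : ℕ)
              ∧ ∀ j, j ≠ k → i' j = (Function.update i' k t) j)
            then qf (N k) (p k) (((Function.update i' k t) k : ℕ)) else 0))
      = ((if ((t : ℕ) ≤ (i k : ℕ) ∧ ∀ j, j ≠ k → (i' j : ℕ) ≤ (i j : ℕ))
            then 1 / rho i else 0)
        * (if ((i' k : ℕ) < (t : ℕ)) then qf (N k) (p k) ((t : ℕ)) else 0)) := by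
    intro t
    refine congrArg₂ (· * ·) (if_congr (update_le_iff i i' k t) rfl rfl) ?_
    refine if_congr ?_ (by rw [Function.update_self]) rfl
    constructor
    · rintro ⟨h1, -⟩; rwa [Function.update_self] at h1
    · intro h1
      exact ⟨by rwa [Function.update_self],
        fun j hj => (Function.update_of_ne hj _ _).symm⟩
  rw [Finset.sum_congr rfl (fun t _ => hcong t),
    Fin.sum_univ_eq_sum_range (fun t =>
      (if (t ≤ (i k : ℕ) ∧ ∀ j, j ≠ k → (i' j : ℕ) ≤ (i j : ℕ)) then 1 / rho i else 0)
        * (if ((i' k : ℕ) < t) then qf (N k) (p k) t else 0)) (N k + 1)]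
  exact evalB (N k) ((i k : ℕ)) ((i' k : ℕ)) (1 / rho i) (p k) _ (fin_le i k)

lemma dual_R (i i' : CCState d N) (k : Fin d) :
    ∑ i'' : CCState d N,
      (if ((i'' k : ℕ) = (i k : ℕ) + 1 ∧ ∀ j, j ≠ k → i'' j = i j) then p k else 0)
        * (if i' ≤ i'' then 1 / rho i'' else 0)
    = if ((i k : ℕ) < N k ∧ (∀ j, j ≠ k → (i' j : ℕ) ≤ (i j : ℕ))
          ∧ (i' k : ℕ) ≤ (i k : ℕ) + 1)
        then (1 / rho i) * ((((i k : ℕ) : ℝ) + 1) / (((i k : ℕ) : ℝ) + 2) * p k)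
        else 0 := by
  rw [sum_update_support i k _ (fun i'' h => by
    by_cases hc : ((i'' k : ℕ) = (i k : ℕ) + 1 ∧ ∀ j, j ≠ k → i'' j = i j)
    · exact hc.2
    · rw [if_neg hc, zero_mul] at h; exact absurd rfl h)]
  have hcong : ∀ t : Fin (N k + 1),
      ((if (((Function.update i k t) k : ℕ) = (i k : ℕ) + 1
              ∧ ∀ j, j ≠ k → (Function.update i k t) j = i j) then p k else 0)
        * (if i' ≤ Function.update i k t then 1 / rho (Function.update i k t) else 0))
      = ((if ((t : ℕ) = (i k : ℕ) + 1) then p k else 0)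
        * (if ((i' k : ℕ) ≤ (t : ℕ) ∧ ∀ j, j ≠ k → (i' j : ℕ) ≤ (i j : ℕ))
            then 1 / ((((t : ℕ) : ℝ) + 1) * rhoE i k) else 0)) := by
    intro t
    refine congrArg₂ (· * ·) ?_ (if_congr (le_update_iff i i' k t) (by rw [rho_update]) rfl)
    refine if_congr ?_ rfl rfl
    constructor
    · rintro ⟨h1, -⟩; rwa [Function.update_self] at h1
    · intro h1
      exact ⟨by rwa [Function.update_self],
        fun j hj => Function.update_of_ne hj _ _⟩
  rw [Finset.sum_congr rfl (fun t _ => hcong t),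
    Fin.sum_univ_eq_sum_range (fun t =>
      (if (t = (i k : ℕ) + 1) then p k else 0)
        * (if ((i' k : ℕ) ≤ t ∧ ∀ j, j ≠ k → (i' j : ℕ) ≤ (i j : ℕ))
            then 1 / (((t : ℝ) + 1) * rhoE i k) else 0)) (N k + 1),
    evalR (N k) ((i k : ℕ)) ((i' k : ℕ)) (p k) (rhoE i k) (rhoE_pos i k) _
      (fin_le i k) (fin_le i' k), ← rho_eq i k]

lemma sum_link_diagX (i i' : CCState d N) (c : ℝ) (X : CCState d N → ℝ) :
    ∑ i'' : CCState d N, (if i'' ≤ i then c else 0) * (if i' = i'' then X i'' else 0)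
      = if i' ≤ i then c * X i' else 0 := by
  have hcong : ∀ i'' : CCState d N,
      (if i'' ≤ i then c else 0) * (if i' = i'' then X i'' else 0)
      = (if i' = i'' then (if i'' ≤ i then c else 0) * X i'' else 0) := fun i'' => by
    by_cases h : i' = i''
    · rw [if_pos h, if_pos h]
    · rw [if_neg h, if_neg h, mul_zero]
  rw [Finset.sum_congr rfl (fun i'' _ => hcong i''),
    Finset.sum_ite_eq univ i' (fun i'' => (if i'' ≤ i then c else 0) * X i''),
    if_pos (mem_univ i'), ite_mul, zero_mul]

lemma sum_diag_link (i i' : CCState d N) (X : ℝ) :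
    ∑ i'' : CCState d N, (if i'' = i then X else 0) * (if i' ≤ i'' then 1 / rho i'' else 0)
      = if i' ≤ i then (1 / rho i) * X else 0 := by
  have hcong : ∀ i'' : CCState d N,
      (if i'' = i then X else 0) * (if i' ≤ i'' then 1 / rho i'' else 0)
      = (if i'' = i then X * (if i' ≤ i'' then 1 / rho i'' else 0) else 0) := fun i'' => by
    by_cases h : i'' = i
    · rw [if_pos h, if_pos h]
    · rw [if_neg h, if_neg h, zero_mul]
  rw [Finset.sum_congr rfl (fun i'' _ => hcong i''),
    Finset.sum_ite_eq' univ i (fun i'' => X * (if i' ≤ i'' then 1 / rho i'' else 0)),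
    if_pos (mem_univ i), mul_ite, mul_zero]
  exact if_congr Iff.rfl (mul_comm _ _) rfl

theorem duality (hp : ∀ j, 0 < p j) (hN : ∀ j, 1 ≤ N j) :
    linkCC d N * antidualCC d N p = couponP d N p * linkCC d N := by
  ext i i'
  rw [Matrix.mul_apply, Matrix.mul_apply]
  have hsplitL : ∑ i'' : CCState d N, linkCC d N i i'' * antidualCC d N p i'' i'
      = (∑ i'' : CCState d N, (if i'' ≤ i then 1 / rho i else 0)
          * (∑ k, if ((i' k : ℕ) = (i'' k : ℕ) + 1 ∧ ∀ j, j ≠ k → i' j = i'' j)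
              then (((i'' k : ℕ) : ℝ) + 1) / (((i'' k : ℕ) : ℝ) + 2) * p k else 0))
        + (∑ i'' : CCState d N, (if i'' ≤ i then 1 / rho i else 0)
          * (∑ k, if ((i' k : ℕ) < (i'' k : ℕ) ∧ ∀ j, j ≠ k → i' j = i'' j)
              then qf (N k) (p k) ((i'' k : ℕ)) else 0))
        + (∑ i'' : CCState d N, (if i'' ≤ i then 1 / rho i else 0)
          * (if i' = i'' then 1 - ∑ j, dcoef (N j) (p j) ((i'' j : ℕ)) else 0)) := by
    rw [← Finset.sum_add_distrib, ← Finset.sum_add_distrib]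
    refine Finset.sum_congr rfl fun i'' _ => ?_
    rw [show linkCC d N i i'' = (if i'' ≤ i then 1 / rho i else 0) from rfl,
      antidual_apply, mul_add, mul_add]
  have hsplitR : ∑ i'' : CCState d N, couponP d N p i i'' * linkCC d N i'' i'
      = (∑ i'' : CCState d N,
          (∑ k, if ((i'' k : ℕ) = (i k : ℕ) + 1 ∧ ∀ j, j ≠ k → i'' j = i j)
              then p k else 0)
            * (if i' ≤ i'' then 1 / rho i'' else 0))
        + (∑ i'' : CCState d N,
          (if i'' = i then 1 - (∑ j, p j) + ∑ j, (if (i j : ℕ) = N j then p j else 0)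
            else 0)
            * (if i' ≤ i'' then 1 / rho i'' else 0)) := by
    rw [← Finset.sum_add_distrib]
    refine Finset.sum_congr rfl fun i'' _ => ?_
    rw [show couponP d N p i i''
        = (∑ k, if ((i'' k : ℕ) = (i k : ℕ) + 1 ∧ ∀ j, j ≠ k → i'' j = i j)
            then p k else 0)
          + (if i'' = i then 1 - (∑ j, p j) + ∑ j, (if (i j : ℕ) = N j then p j else 0)
            else 0) from rfl,
      show linkCC d N i'' i' = (if i' ≤ i'' then 1 / rho i'' else 0) from rfl, add_mul]
  rw [hsplitL, hsplitR]
  have hA : (∑ i'' : CCState d N, (if i'' ≤ i then 1 / rho i else 0)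
          * (∑ k, if ((i' k : ℕ) = (i'' k : ℕ) + 1 ∧ ∀ j, j ≠ k → i' j = i'' j)
              then (((i'' k : ℕ) : ℝ) + 1) / (((i'' k : ℕ) : ℝ) + 2) * p k else 0))
      = ∑ k, (if (1 ≤ (i' k : ℕ) ∧ (i' k : ℕ) ≤ (i k : ℕ) + 1
            ∧ ∀ j, j ≠ k → (i' j : ℕ) ≤ (i j : ℕ))
          then (1 / rho i) * (((i' k : ℕ) : ℝ) / (((i' k : ℕ) : ℝ) + 1) * p k) else 0) := by
    simp only [Finset.mul_sum]
    rw [Finset.sum_comm]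
    exact Finset.sum_congr rfl fun k _ => dual_A i i' k
  have hB : (∑ i'' : CCState d N, (if i'' ≤ i then 1 / rho i else 0)
          * (∑ k, if ((i' k : ℕ) < (i'' k : ℕ) ∧ ∀ j, j ≠ k → i' j = i'' j)
              then qf (N k) (p k) ((i'' k : ℕ)) else 0))
      = ∑ k, (if (∀ j, j ≠ k → (i' j : ℕ) ≤ (i j : ℕ))
          then (1 / rho i) * ∑ t ∈ Ioc ((i' k : ℕ)) ((i k : ℕ)), qf (N k) (p k) t
          else 0) := by
    rw [Finset.sum_congr rfl (fun i'' (_ : i'' ∈ (univ : Finset (CCState d N))) =>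
      Finset.mul_sum univ (fun k => if ((i' k : ℕ) < (i'' k : ℕ) ∧ ∀ j, j ≠ k → i' j = i'' j)
        then qf (N k) (p k) ((i'' k : ℕ)) else 0) (if i'' ≤ i then 1 / rho i else 0)),
      Finset.sum_comm]
    exact Finset.sum_congr rfl fun k _ => dual_B i i' k
  have hR : (∑ i'' : CCState d N,
          (∑ k, if ((i'' k : ℕ) = (i k : ℕ) + 1 ∧ ∀ j, j ≠ k → i'' j = i j)
              then p k else 0)
            * (if i' ≤ i'' then 1 / rho i'' else 0))
      = ∑ k, (if ((i k : ℕ) < N k ∧ (∀ j, j ≠ k → (i' j : ℕ) ≤ (i j : ℕ))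
            ∧ (i' k : ℕ) ≤ (i k : ℕ) + 1)
          then (1 / rho i) * ((((i k : ℕ) : ℝ) + 1) / (((i k : ℕ) : ℝ) + 2) * p k)
          else 0) := by
    simp only [Finset.sum_mul]
    rw [Finset.sum_comm]
    exact Finset.sum_congr rfl fun k _ => dual_R i i' k
  rw [hA, hB, hR,
    sum_link_diagX i i' (1 / rho i) (fun i'' => 1 - ∑ j, dcoef (N j) (p j) ((i'' j : ℕ))),
    sum_diag_link i i' (1 - (∑ j, p j) + ∑ j, (if (i j : ℕ) = N j then p j else 0))]
  have hdiag : (if i' ≤ i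
        then (1 / rho i) * (1 - ∑ j, dcoef (N j) (p j) ((i' j : ℕ))) else 0)
      = (if i' ≤ i then (1 / rho i)
            * (1 - (∑ j, p j) + ∑ j, (if (i j : ℕ) = N j then p j else 0)) else 0)
        + ∑ k, (if ((∀ j, j ≠ k → (i' j : ℕ) ≤ (i j : ℕ)) ∧ (i' k : ℕ) ≤ (i k : ℕ))
            then (1 / rho i)
              * ((if (i k : ℕ) < N k then p k else 0) - dcoef (N k) (p k) ((i' k : ℕ)))
            else 0) := by
    by_cases hle : i' ≤ i
    · rw [if_pos hle, if_pos hle]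
      have hsplit : ∀ k ∈ (univ : Finset (Fin d)),
          (if ((∀ j, j ≠ k → (i' j : ℕ) ≤ (i j : ℕ)) ∧ (i' k : ℕ) ≤ (i k : ℕ))
            then (1 / rho i)
              * ((if (i k : ℕ) < N k then p k else 0) - dcoef (N k) (p k) ((i' k : ℕ)))
            else 0)
          = (1 / rho i)
              * ((if (i k : ℕ) < N k then p k else 0) - dcoef (N k) (p k) ((i' k : ℕ))) :=
        fun k _ => if_pos ((le_split i i' k).mp hle)
      rw [Finset.sum_congr rfl hsplit, ← Finset.mul_sum, ← mul_add]
      congr 1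
      have he : ∑ k, ((if (i k : ℕ) < N k then p k else 0) - dcoef (N k) (p k) ((i' k : ℕ)))
          = (∑ k, p k) - (∑ k, (if (i k : ℕ) = N k then p k else 0))
            - ∑ k, dcoef (N k) (p k) ((i' k : ℕ)) := by
        rw [Finset.sum_sub_distrib]
        congr 1
        have hpt : ∀ k ∈ (univ : Finset (Fin d)),
            (if (i k : ℕ) < N k then p k else 0)
              = p k - (if (i k : ℕ) = N k then p k else 0) := fun k _ => by
          have hk := fin_le i k
          by_cases h : (i k : ℕ) < N k
          · rw [if_pos h, if_neg (by omega)]; ring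
          · rw [if_neg h, if_pos (by omega)]; ring
        rw [Finset.sum_congr rfl hpt, Finset.sum_sub_distrib]
      rw [he]
      ring
    · rw [if_neg hle, if_neg hle, zero_add]
      exact (Finset.sum_eq_zero fun k _ =>
        if_neg (fun hc => hle ((le_split i i' k).mpr hc))).symm
  rw [hdiag]
  have hkey : ∑ k, ((if (1 ≤ (i' k : ℕ) ∧ (i' k : ℕ) ≤ (i k : ℕ) + 1
            ∧ ∀ j, j ≠ k → (i' j : ℕ) ≤ (i j : ℕ))
          then (1 / rho i) * (((i' k : ℕ) : ℝ) / (((i' k : ℕ) : ℝ) + 1) * p k) else 0)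
        + (if (∀ j, j ≠ k → (i' j : ℕ) ≤ (i j : ℕ))
          then (1 / rho i) * ∑ t ∈ Ioc ((i' k : ℕ)) ((i k : ℕ)), qf (N k) (p k) t
          else 0)
        + (if ((∀ j, j ≠ k → (i' j : ℕ) ≤ (i j : ℕ)) ∧ (i' k : ℕ) ≤ (i k : ℕ))
            then (1 / rho i)
              * ((if (i k : ℕ) < N k then p k else 0) - dcoef (N k) (p k) ((i' k : ℕ)))
            else 0))
      = ∑ k, (if ((i k : ℕ) < N k ∧ (∀ j, j ≠ k → (i' j : ℕ) ≤ (i j : ℕ))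
            ∧ (i' k : ℕ) ≤ (i k : ℕ) + 1)
          then (1 / rho i) * ((((i k : ℕ) : ℝ) + 1) / (((i k : ℕ) : ℝ) + 2) * p k)
          else 0) :=
    Finset.sum_congr rfl fun k _ =>
      key_coord (N k) ((i' k : ℕ)) ((i k : ℕ)) (p k) (1 / rho i)
        (hN k) (fin_le i' k) (fin_le i k) _
  rw [Finset.sum_add_distrib, Finset.sum_add_distrib] at hkey
  linarith [hkey]

end CCAux

open CCAux in
theorem stmt6 (d : ℕ) (hd : 1 ≤ d) (N : Fin d → ℕ) (hN : ∀ j, 1 ≤ N j)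
    (p : Fin d → ℝ) (hp : ∀ j, 0 < p j) (hpsum : ∑ j, p j ≤ 1)
    (hcond : ∑ j, (1 - 1 / ((N j : ℝ) * ((N j : ℝ) + 1))) * p j ≤ 1) :
    (∀ i i', 0 ≤ antidualCC d N p i i') ∧
    (∀ i, ∑ i', antidualCC d N p i i' = 1) ∧
    ((fun _ : CCState d N => 1 / ∏ j, ((N j : ℝ) + 1)) ᵥ* antidualCC d N p =
      fun _ => 1 / ∏ j, ((N j : ℝ) + 1)) ∧
    (∃ n, ∀ i i', 0 < ((antidualCC d N p) ^ n) i i') ∧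
    linkCC d N * antidualCC d N p = couponP d N p * linkCC d N := by
  refine ⟨entry_nonneg hp hN hcond, row_sum hp, ?_, exists_pow_pos hd hp hN hpsum hcond,
    duality hp hN⟩
  funext i'
  show ∑ i, (1 / ∏ j, ((N j : ℝ) + 1)) * antidualCC d N p i i' = _
  rw [← Finset.mul_sum, col_sum hp hN i', mul_one]
end

section
/- Fix d ≥ 1, integers N_j ≥ 1 and reals p_j > 0 (j = 1,…,d) with Σ_{j=1}^d p_j ≤ 1, and assume Σ_{j=1}^d (1 − 1/(N_j(N_j+1)))·p_j ≤ 1. Let P be the antidual matrix with entries P(i, i+s_k) = ((i_k+1)/(i_k+2))·p_k when i_k < N_k; P(i, i−m·s_k) = p_k/((i_k+1)(i_k+2)) when i_k < N_k and 1 ≤ m ≤ i_k; P(i, i−m·s_k) = p_k/(N_k+1) when i_k = N_k and 1 ≤ m ≤ i_k; P(i,i) = 1 − Σ_{j: i_j<N_j} (1 − 1/((i_j+1)(i_j+2)))·p_j − Σ_{j: i_j=N_j} (N_j/(N_j+1))·p_j; other entries 0; and let π be the uniform distribution on E. Then for every integer n ≥ 0, sep(δ₀ Pⁿ, π) = 1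 − (δ₀ (P*)ⁿ)(i_max), where δ₀ is the point mass at (0,…,0), i_max = (N_1,…,N_d), and P* is the generalized coupon collector chain; i.e. the separation from stationarity of P started at 0 equals the probability that the coupon collector chain started at 0 is not yet absorbed after n steps. -/
open Matrix Finset
open scoped Classical

noncomputable def lamCC (d : ℕ) (N : Fin d → ℕ) :
    Matrix (CCState d N) (CCState d N) ℝ := fun i e =>
  if ∀ j, (e j : ℕ) ≤ (i j : ℕ) then (∏ j, (((i j : ℕ) : ℝ) + 1))⁻¹ else 0

variable {d : ℕ} {N : Fin d → ℕ}

lemma sum_update_eq (i : CCState d N) (k : Fin d) (F : CCState d N → ℝ)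
    (h0 : ∀ i', ¬(∀ j, j ≠ k → i' j = i j) → F i' = 0) :
    ∑ i', F i' = ∑ a : Fin (N k + 1), F (Function.update i k a) := by
  classical
  rw [← Finset.sum_filter_of_ne (p := fun i' => ∀ j, j ≠ k → i' j = i j)
    (by intro x _ hx; by_contra hc; exact hx (h0 x hc))]
  have key : ∀ i' ∈ Finset.univ.filter (fun i' : CCState d N => ∀ j, j ≠ k → i' j = i j),
      Function.update i k (i' k) = i' := by
    intro i' hi'
    simp only [Finset.mem_filter, Finset.mem_univ, true_and] at hi'
    funext j
    by_cases hj : j = k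
    · subst hj; simp
    · rw [Function.update_of_ne hj]; exact (hi' j hj).symm
  refine Finset.sum_nbij' (fun i' => i' k) (fun a => Function.update i k a) ?_ ?_ ?_ ?_ ?_
  · intro a _; exact Finset.mem_univ _
  · intro a _
    simp only [Finset.mem_filter, Finset.mem_univ, true_and]
    intro j hj; exact Function.update_of_ne hj _ _
  · intro i' hi'; exact key i' hi'
  · intro a _; simp
  · intro i' hi'; exact (congrArg F (key i' hi')).symm

lemma lam_eval (i e : CCState d N) (k : Fin d) :
    lamCC d N i e =
      if ((e k : ℕ) ≤ (i k : ℕ) ∧ ∀ j, j ≠ k → (e j : ℕ) ≤ (i j : ℕ))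
      then (((i k : ℕ) : ℝ) + 1)⁻¹ * (∏ j ∈ Finset.univ.erase k, (((i j : ℕ) : ℝ) + 1))⁻¹
      else 0 := by
  have hc : (∀ j, (e j : ℕ) ≤ (i j : ℕ)) ↔
      ((e k : ℕ) ≤ (i k : ℕ) ∧ ∀ j, j ≠ k → (e j : ℕ) ≤ (i j : ℕ)) := by
    constructor
    · intro h; exact ⟨h k, fun j _ => h j⟩
    · rintro ⟨h1, h2⟩ j
      by_cases hj : j = k
      · subst hj; exact h1
      · exact h2 j hj
  have hp : (∏ j, (((i j : ℕ) : ℝ) + 1)) =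
      (((i k : ℕ) : ℝ) + 1) * ∏ j ∈ Finset.univ.erase k, (((i j : ℕ) : ℝ) + 1) :=
    (Finset.mul_prod_erase Finset.univ _ (Finset.mem_univ k)).symm
  rw [lamCC, hp, mul_inv]
  exact if_congr hc rfl rfl

lemma tele (x : ℕ) : ∀ t : ℕ, x ≤ t →
    ∑ a ∈ Finset.Ico (x + 1) (t + 1), (1 : ℝ) / (((a : ℝ) + 1) * ((a : ℝ) + 2))
      = 1 / ((x : ℝ) + 2) - 1 / ((t : ℝ) + 2) := by
  intro t
  induction t with
  | zero =>
    intro hx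
    interval_cases x
    simp
  | succ t ih =>
    intro hx
    rcases Nat.lt_or_ge x (t + 1) with h | h
    · have hxt : x ≤ t := Nat.lt_succ_iff.mp h
      rw [Finset.sum_Ico_succ_top (by omega), ih hxt]
      push_cast
      have h1 : ((t : ℝ) + 2) ≠ 0 := by positivity
      have h2 : ((t : ℝ) + 1 + 2) ≠ 0 := by positivity
      have h3 : ((t : ℝ) + 1 + 1) ≠ 0 := by positivity
      field_simp
      ring
    · have : x = t + 1 := le_antisymm hx h
      subst this
      simp

lemma down_sum (M x y : ℕ) (hM : 1 ≤ M) (hx : x ≤ M) (hy : y ≤ M) (pk c : ℝ) :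
    (∑ a ∈ Finset.range (M + 1),
      (if a ≤ y then c else 0) *
        (if x < a then (if a < M then pk / (((a : ℝ) + 1) * ((a : ℝ) + 2))
          else pk / ((M : ℝ) + 1)) else 0))
    = (if x ≤ y then
        (if y < M then c * (pk * (1 / ((x : ℝ) + 2) - 1 / ((y : ℝ) + 2)))
         else (if x < M then c * (pk * (1 / ((x : ℝ) + 2))) else 0))
       else 0) := by
  have hterm : ∀ a ∈ Finset.range (M + 1),
      (if a ≤ y then c else 0) *
        (if x < a then (if a < M then pk / (((a : ℝ) + 1) * ((a : ℝ) + 2))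
          else pk / ((M : ℝ) + 1)) else 0)
      = if x < a ∧ a ≤ y then
          c * (if a < M then pk / (((a : ℝ) + 1) * ((a : ℝ) + 2)) else pk / ((M : ℝ) + 1))
        else 0 := by
    intro a _
    by_cases h1 : a ≤ y <;> by_cases h2 : x < a <;> simp [h1, h2]
  rw [Finset.sum_congr rfl hterm, ← Finset.sum_filter]
  have hset : (Finset.range (M + 1)).filter (fun a => x < a ∧ a ≤ y)
      = Finset.Ico (x + 1) (y + 1) := by
    ext a
    simp only [Finset.mem_filter, Finset.mem_range, Finset.mem_Ico]
    omega
  rw [hset]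
  rcases le_or_gt x y with hxy | hxy
  · rw [if_pos hxy]
    rcases lt_or_ge y M with hyM | hyM
    · rw [if_pos hyM]
      have : ∀ a ∈ Finset.Ico (x + 1) (y + 1),
          c * (if a < M then pk / (((a : ℝ) + 1) * ((a : ℝ) + 2)) else pk / ((M : ℝ) + 1))
          = (c * pk) * (1 / (((a : ℝ) + 1) * ((a : ℝ) + 2))) := by
        intro a ha
        simp only [Finset.mem_Ico] at ha
        rw [if_pos (by omega)]
        field_simp
      rw [Finset.sum_congr rfl this, ← Finset.mul_sum, tele x y hxy]
      ring
    · have hyM' : y = M := le_antisymm hy hyM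
      rw [if_neg (by omega)]
      rcases lt_or_ge x M with hxM | hxM
      · rw [if_pos hxM]
        rw [show y + 1 = M + 1 by omega]
        rw [Finset.sum_Ico_succ_top (by omega)]
        rw [if_neg (lt_irrefl M)]
        have : ∀ a ∈ Finset.Ico (x + 1) (M - 1 + 1),
            c * (if a < M then pk / (((a : ℝ) + 1) * ((a : ℝ) + 2)) else pk / ((M : ℝ) + 1))
            = (c * pk) * (1 / (((a : ℝ) + 1) * ((a : ℝ) + 2))) := by
          intro a ha
          simp only [Finset.mem_Ico] at ha
          rw [if_pos (by omega)]
          field_simp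
        rw [show Finset.Ico (x + 1) M = Finset.Ico (x + 1) (M - 1 + 1) by
          congr 1; omega]
        rw [Finset.sum_congr rfl this, ← Finset.mul_sum, tele x (M - 1) (by omega)]
        rw [Nat.cast_sub hM]
        push_cast
        have h1 : ((M : ℝ) - 1 + 2) = (M : ℝ) + 1 := by ring
        rw [h1]
        ring
      · have hxM' : x = M := le_antisymm hx hxM
        rw [if_neg (by omega)]
        rw [show Finset.Ico (x + 1) (y + 1) = ∅ by apply Finset.Ico_eq_empty; omega]
        simp
  · rw [if_neg (by omega)]
    rw [show Finset.Ico (x + 1) (y + 1) = ∅ by apply Finset.Ico_eq_empty; omega]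
    simp

set_option maxHeartbeats 2000000 in
lemma key_real (M x y : ℕ) (hM : 1 ≤ M) (hx : x ≤ M) (hy : y ≤ M) (pk Qi : ℝ) :
    (∑ a ∈ Finset.range (M + 1), (if a = y + 1 then pk else 0) *
        (if x ≤ a then ((a : ℝ) + 1)⁻¹ * Qi else 0))
      + (if x < M then (1 - 1 / (((x : ℝ) + 1) * ((x : ℝ) + 2))) * pk
          else ((M : ℝ) / ((M : ℝ) + 1)) * pk) *
          (if x ≤ y then ((y : ℝ) + 1)⁻¹ * Qi else 0)
    = (∑ a ∈ Finset.range (M + 1), (if a ≤ y then ((y : ℝ) + 1)⁻¹ * Qi else 0) *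
          (if x = a + 1 then ((a : ℝ) + 1) / ((a : ℝ) + 2) * pk else 0))
      + (∑ a ∈ Finset.range (M + 1), (if a ≤ y then ((y : ℝ) + 1)⁻¹ * Qi else 0) *
          (if x < a then (if a < M then pk / (((a : ℝ) + 1) * ((a : ℝ) + 2))
            else pk / ((M : ℝ) + 1)) else 0))
      + (if y = M then (0 : ℝ) else pk) *
          (if x ≤ y then ((y : ℝ) + 1)⁻¹ * Qi else 0) := by
  have hL : (∑ a ∈ Finset.range (M + 1), (if a = y + 1 then pk else 0) *
      (if x ≤ a then ((a : ℝ) + 1)⁻¹ * Qi else 0))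
      = if y < M then (if x ≤ y + 1 then pk * ((((y : ℝ) + 2)⁻¹) * Qi) else 0) else 0 := by
    simp only [ite_mul, zero_mul]
    rw [Finset.sum_ite_eq' (Finset.range (M + 1)) (y + 1)
      (fun a => pk * (if x ≤ a then ((a : ℝ) + 1)⁻¹ * Qi else 0))]
    simp only [Finset.mem_range]
    split_ifs <;> first | omega | (push_cast; ring1) | simp
  rw [hL, down_sum M x y hM hx hy pk (((y : ℝ) + 1)⁻¹ * Qi)]
  have hy1 : ((y : ℝ) + 1) ≠ 0 := by positivity
  have hy2 : ((y : ℝ) + 2) ≠ 0 := by positivity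
  have hM1 : ((M : ℝ) + 1) ≠ 0 := by positivity
  rcases x with _ | x'
  · have hU : (∑ a ∈ Finset.range (M + 1), (if a ≤ y then ((y : ℝ) + 1)⁻¹ * Qi else 0) *
        (if (0 : ℕ) = a + 1 then ((a : ℝ) + 1) / ((a : ℝ) + 2) * pk else 0)) = 0 := by
      apply Finset.sum_eq_zero
      intro a _
      have h0 : (if (0 : ℕ) = a + 1 then ((a : ℝ) + 1) / ((a : ℝ) + 2) * pk else 0) = 0 :=
        if_neg (by omega)
      rw [h0, mul_zero]
    rw [hU]
    split_ifs <;>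
      first
        | (exfalso; omega)
        | (push_cast; field_simp; ring1)
        | (push_cast; ring1)
        | (simp; done)
  · have hx1 : ((x' : ℝ) + 1) ≠ 0 := by positivity
    have hx2 : ((x' : ℝ) + 2) ≠ 0 := by positivity
    have hU : (∑ a ∈ Finset.range (M + 1), (if a ≤ y then ((y : ℝ) + 1)⁻¹ * Qi else 0) *
        (if x' + 1 = a + 1 then ((a : ℝ) + 1) / ((a : ℝ) + 2) * pk else 0))
        = (if x' ≤ y then ((y : ℝ) + 1)⁻¹ * Qi else 0) *
            (((x' : ℝ) + 1) / ((x' : ℝ) + 2) * pk) := by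
      rw [Finset.sum_eq_single x']
      · rw [if_pos rfl]
      · intro b _ hb
        have h0 : (if x' + 1 = b + 1 then ((b : ℝ) + 1) / ((b : ℝ) + 2) * pk else 0) = 0 :=
          if_neg (by omega)
        rw [h0, mul_zero]
      · intro h
        exact absurd (Finset.mem_range.mpr (by omega)) h
    rw [hU]
    split_ifs <;>
      first
        | (exfalso; omega)
        | (push_cast; field_simp; ring1)
        | (push_cast; ring1)
        | (have hxy : x' = y := by omega
           subst hxy
           push_cast; field_simp; ring1)
        | (have h2 : M = x' + 1 := by omega
           subst h2
           have h1 : y = x' + 1 := by omega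
           subst h1
           push_cast; field_simp; ring1)
        | (simp; done)

lemma key_identity (p : Fin d → ℝ) (i e : CCState d N) (k : Fin d) (hMk : 1 ≤ N k) :
    (∑ a : Fin (N k + 1), (if (a : ℕ) = (i k : ℕ) + 1 then p k else 0) *
        lamCC d N (Function.update i k a) e)
      + (if (e k : ℕ) < N k
          then (1 - 1 / ((((e k : ℕ) : ℝ) + 1) * (((e k : ℕ) : ℝ) + 2))) * p k
          else ((N k : ℝ) / ((N k : ℝ) + 1)) * p k) * lamCC d N i e
    = (∑ a : Fin (N k + 1), lamCC d N i (Function.update e k a) *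
          (if (e k : ℕ) = (a : ℕ) + 1
            then (((a : ℕ) : ℝ) + 1) / (((a : ℕ) : ℝ) + 2) * p k else 0))
      + (∑ a : Fin (N k + 1), lamCC d N i (Function.update e k a) *
          (if (e k : ℕ) < (a : ℕ)
            then (if (a : ℕ) < N k
              then p k / ((((a : ℕ) : ℝ) + 1) * (((a : ℕ) : ℝ) + 2))
              else p k / ((N k : ℝ) + 1)) else 0))
      + (if (i k : ℕ) = N k then (0 : ℝ) else p k) * lamCC d N i e := by
  by_cases hoth : ∀ j, j ≠ k → (e j : ℕ) ≤ (i j : ℕ)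
  · set Qi := (∏ j ∈ Finset.univ.erase k, (((i j : ℕ) : ℝ) + 1))⁻¹ with hQi
    have h1 : lamCC d N i e
        = if (e k : ℕ) ≤ (i k : ℕ) then (((i k : ℕ) : ℝ) + 1)⁻¹ * Qi else 0 := by
      rw [lam_eval i e k]
      exact if_congr (and_iff_left hoth) rfl rfl
    have h2 : ∀ a : Fin (N k + 1), lamCC d N i (Function.update e k a)
        = if (a : ℕ) ≤ (i k : ℕ) then (((i k : ℕ) : ℝ) + 1)⁻¹ * Qi else 0 := by
      intro a
      rw [lam_eval i (Function.update e k a) k]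
      refine if_congr ?_ rfl rfl
      rw [Function.update_self]
      constructor
      · rintro ⟨ha, -⟩; exact ha
      · intro ha
        exact ⟨ha, fun j hj => by rw [Function.update_of_ne hj]; exact hoth j hj⟩
    have h3 : ∀ a : Fin (N k + 1), lamCC d N (Function.update i k a) e
        = if (e k : ℕ) ≤ (a : ℕ) then (((a : ℕ) : ℝ) + 1)⁻¹ * Qi else 0 := by
      intro a
      rw [lam_eval (Function.update i k a) e k]
      have hprod : (∏ j ∈ Finset.univ.erase k, (((Function.update i k a j : ℕ) : ℝ) + 1))
          = ∏ j ∈ Finset.univ.erase k, (((i j : ℕ) : ℝ) + 1) := by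
        refine Finset.prod_congr rfl fun j hj => ?_
        rw [Function.update_of_ne (Finset.ne_of_mem_erase hj)]
      rw [hprod, Function.update_self]
      refine if_congr ?_ rfl rfl
      constructor
      · rintro ⟨ha, -⟩; exact ha
      · intro ha
        refine ⟨ha, fun j hj => ?_⟩
        rw [Function.update_of_ne hj]; exact hoth j hj
    have s1 : (∑ a : Fin (N k + 1), (if (a : ℕ) = (i k : ℕ) + 1 then p k else 0) *
          lamCC d N (Function.update i k a) e)
        = ∑ a ∈ Finset.range (N k + 1), (if a = (i k : ℕ) + 1 then p k else 0) *
            (if (e k : ℕ) ≤ a then ((a : ℝ) + 1)⁻¹ * Qi else 0) := by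
      rw [← Fin.sum_univ_eq_sum_range (fun a => (if a = (i k : ℕ) + 1 then p k else 0) *
            (if (e k : ℕ) ≤ a then ((a : ℝ) + 1)⁻¹ * Qi else 0)) (N k + 1)]
      exact Finset.sum_congr rfl fun a _ => by rw [h3 a]
    have s2 : (∑ a : Fin (N k + 1), lamCC d N i (Function.update e k a) *
          (if (e k : ℕ) = (a : ℕ) + 1
            then (((a : ℕ) : ℝ) + 1) / (((a : ℕ) : ℝ) + 2) * p k else 0))
        = ∑ a ∈ Finset.range (N k + 1),
            (if a ≤ (i k : ℕ) then (((i k : ℕ) : ℝ) + 1)⁻¹ * Qi else 0) *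
            (if (e k : ℕ) = a + 1 then ((a : ℝ) + 1) / ((a : ℝ) + 2) * p k else 0) := by
      rw [← Fin.sum_univ_eq_sum_range (fun a =>
            (if a ≤ (i k : ℕ) then (((i k : ℕ) : ℝ) + 1)⁻¹ * Qi else 0) *
            (if (e k : ℕ) = a + 1 then ((a : ℝ) + 1) / ((a : ℝ) + 2) * p k else 0)) (N k + 1)]
      exact Finset.sum_congr rfl fun a _ => by rw [h2 a]
    have s3 : (∑ a : Fin (N k + 1), lamCC d N i (Function.update e k a) *
          (if (e k : ℕ) < (a : ℕ)
            then (if (a : ℕ) < N k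
              then p k / ((((a : ℕ) : ℝ) + 1) * (((a : ℕ) : ℝ) + 2))
              else p k / ((N k : ℝ) + 1)) else 0))
        = ∑ a ∈ Finset.range (N k + 1),
            (if a ≤ (i k : ℕ) then (((i k : ℕ) : ℝ) + 1)⁻¹ * Qi else 0) *
            (if (e k : ℕ) < a
              then (if a < N k then p k / (((a : ℝ) + 1) * ((a : ℝ) + 2))
                else p k / ((N k : ℝ) + 1)) else 0) := by
      rw [← Fin.sum_univ_eq_sum_range (fun a =>
            (if a ≤ (i k : ℕ) then (((i k : ℕ) : ℝ) + 1)⁻¹ * Qi else 0) *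
            (if (e k : ℕ) < a
              then (if a < N k then p k / (((a : ℝ) + 1) * ((a : ℝ) + 2))
                else p k / ((N k : ℝ) + 1)) else 0)) (N k + 1)]
      exact Finset.sum_congr rfl fun a _ => by rw [h2 a]
    rw [h1, s1, s2, s3]
    exact key_real (N k) (e k) (i k) hMk (Fin.is_le _) (Fin.is_le _) (p k) Qi
  · have hz : lamCC d N i e = 0 := by
      rw [lam_eval i e k, if_neg (by tauto)]
    have hz2 : ∀ a : Fin (N k + 1), lamCC d N i (Function.update e k a) = 0 := by
      intro a
      rw [lam_eval i (Function.update e k a) k, if_neg]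
      rintro ⟨-, hc⟩
      refine hoth fun j hj => ?_
      have := hc j hj
      rwa [Function.update_of_ne hj] at this
    have hz3 : ∀ a : Fin (N k + 1), lamCC d N (Function.update i k a) e = 0 := by
      intro a
      rw [lam_eval (Function.update i k a) e k, if_neg]
      rintro ⟨-, hc⟩
      refine hoth fun j hj => ?_
      have := hc j hj
      rwa [Function.update_of_ne hj] at this
    simp [hz, hz2, hz3]

lemma comm_lemma (hN : ∀ j, 1 ≤ N j) (p : Fin d → ℝ) :
    couponP d N p * lamCC d N = lamCC d N * antidualCC d N p := by
  ext i e
  rw [Matrix.mul_apply, Matrix.mul_apply]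
  have hLHS : (∑ i', couponP d N p i i' * lamCC d N i' e)
      = (∑ k, ∑ a : Fin (N k + 1), (if (a : ℕ) = (i k : ℕ) + 1 then p k else 0) *
          lamCC d N (Function.update i k a) e)
        + (1 - (∑ j, p j) + ∑ j, (if (i j : ℕ) = N j then p j else 0)) *
            lamCC d N i e := by
    simp only [couponP, add_mul, Finset.sum_add_distrib]
    congr 1
    · rw [Finset.sum_congr rfl (fun i' (_ : i' ∈ Finset.univ) =>
        Finset.sum_mul Finset.univ
          (fun k => if (i' k : ℕ) = (i k : ℕ) + 1 ∧ (∀ j, j ≠ k → i' j = i j)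
            then p k else 0) (lamCC d N i' e)), Finset.sum_comm]
      refine Finset.sum_congr rfl fun k _ => ?_
      rw [sum_update_eq i k _ (fun i' h => by rw [if_neg (by tauto), zero_mul])]
      refine Finset.sum_congr rfl fun a _ => ?_
      congr 1
      refine if_congr ?_ rfl rfl
      rw [Function.update_self]
      constructor
      · rintro ⟨ha, -⟩; exact ha
      · intro ha; exact ⟨ha, fun j hj => Function.update_of_ne hj _ _⟩
    · simp only [ite_mul, zero_mul, Finset.sum_ite_eq', Finset.mem_univ, if_true]
      ring
  have hRHS : (∑ e', lamCC d N i e' * antidualCC d N p e' e)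
      = ((∑ k, ∑ a : Fin (N k + 1), lamCC d N i (Function.update e k a) *
          (if (e k : ℕ) = (a : ℕ) + 1
            then (((a : ℕ) : ℝ) + 1) / (((a : ℕ) : ℝ) + 2) * p k else 0))
        + (∑ k, ∑ a : Fin (N k + 1), lamCC d N i (Function.update e k a) *
          (if (e k : ℕ) < (a : ℕ)
            then (if (a : ℕ) < N k
              then p k / ((((a : ℕ) : ℝ) + 1) * (((a : ℕ) : ℝ) + 2))
              else p k / ((N k : ℝ) + 1)) else 0)))
        + lamCC d N i e * (1 - ∑ j, (if (e j : ℕ) < N j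
            then (1 - 1 / ((((e j : ℕ) : ℝ) + 1) * (((e j : ℕ) : ℝ) + 2))) * p j
            else ((N j : ℝ) / ((N j : ℝ) + 1)) * p j)) := by
    have expand : ∀ e', lamCC d N i e' * antidualCC d N p e' e
        = lamCC d N i e' * (∑ k, if (e k : ℕ) = (e' k : ℕ) + 1 ∧ (∀ j, j ≠ k → e j = e' j)
              then (((e' k : ℕ) : ℝ) + 1) / (((e' k : ℕ) : ℝ) + 2) * p k else 0)
          + lamCC d N i e' * (∑ k, if (e k : ℕ) < (e' k : ℕ) ∧ (∀ j, j ≠ k → e j = e' j)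
              then (if (e' k : ℕ) < N k
                then p k / ((((e' k : ℕ) : ℝ) + 1) * (((e' k : ℕ) : ℝ) + 2))
                else p k / ((N k : ℝ) + 1)) else 0)
          + lamCC d N i e' * (if e = e'
              then 1 - ∑ j, (if (e' j : ℕ) < N j
                then (1 - 1 / ((((e' j : ℕ) : ℝ) + 1) * (((e' j : ℕ) : ℝ) + 2))) * p j
                else ((N j : ℝ) / ((N j : ℝ) + 1)) * p j)
              else 0) := fun e' => by
      rw [antidualCC]; ring
    rw [Finset.sum_congr rfl (fun e' _ => expand e'), Finset.sum_add_distrib,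
      Finset.sum_add_distrib]
    congr 1
    · congr 1
      · rw [Finset.sum_congr rfl (fun e' (_ : e' ∈ Finset.univ) =>
          Finset.mul_sum Finset.univ
            (fun k => if (e k : ℕ) = (e' k : ℕ) + 1 ∧ (∀ j, j ≠ k → e j = e' j)
              then (((e' k : ℕ) : ℝ) + 1) / (((e' k : ℕ) : ℝ) + 2) * p k else 0)
            (lamCC d N i e')), Finset.sum_comm]
        refine Finset.sum_congr rfl fun k _ => ?_
        rw [sum_update_eq e k _ (fun e' h => by
          rw [if_neg, mul_zero]
          rintro ⟨-, hc⟩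
          exact h fun j hj => (hc j hj).symm)]
        refine Finset.sum_congr rfl fun a _ => ?_
        simp only [Function.update_self]
        congr 1
        refine if_congr ?_ rfl rfl
        constructor
        · rintro ⟨ha, -⟩; exact ha
        · intro ha; exact ⟨ha, fun j hj => (Function.update_of_ne hj _ _).symm⟩
      · rw [Finset.sum_congr rfl (fun e' (_ : e' ∈ Finset.univ) =>
          Finset.mul_sum Finset.univ
            (fun k => if (e k : ℕ) < (e' k : ℕ) ∧ (∀ j, j ≠ k → e j = e' j)
              then (if (e' k : ℕ) < N k
                then p k / ((((e' k : ℕ) : ℝ) + 1) * (((e' k : ℕ) : ℝ) + 2))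
                else p k / ((N k : ℝ) + 1)) else 0)
            (lamCC d N i e')), Finset.sum_comm]
        refine Finset.sum_congr rfl fun k _ => ?_
        rw [sum_update_eq e k _ (fun e' h => by
          rw [if_neg, mul_zero]
          rintro ⟨-, hc⟩
          exact h fun j hj => (hc j hj).symm)]
        refine Finset.sum_congr rfl fun a _ => ?_
        simp only [Function.update_self]
        congr 1
        refine if_congr ?_ rfl rfl
        constructor
        · rintro ⟨ha, -⟩; exact ha
        · intro ha; exact ⟨ha, fun j hj => (Function.update_of_ne hj _ _).symm⟩
    · simp only [mul_ite, mul_zero, Finset.sum_ite_eq, Finset.mem_univ, if_true]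
  rw [hLHS, hRHS]
  have hds : (1 - (∑ j, p j) + ∑ j, (if (i j : ℕ) = N j then p j else 0))
      = 1 - ∑ j, (if (i j : ℕ) = N j then (0 : ℝ) else p j) := by
    have : (∑ j, (if (i j : ℕ) = N j then (0 : ℝ) else p j))
        = (∑ j, p j) - ∑ j, (if (i j : ℕ) = N j then p j else 0) := by
      rw [← Finset.sum_sub_distrib]
      exact Finset.sum_congr rfl fun j _ => by split_ifs <;> ring
    rw [this]; ring
  rw [hds]
  have hsum : (∑ k, ((∑ a : Fin (N k + 1), (if (a : ℕ) = (i k : ℕ) + 1 then p k else 0) *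
          lamCC d N (Function.update i k a) e)
        + (if (e k : ℕ) < N k
            then (1 - 1 / ((((e k : ℕ) : ℝ) + 1) * (((e k : ℕ) : ℝ) + 2))) * p k
            else ((N k : ℝ) / ((N k : ℝ) + 1)) * p k) * lamCC d N i e))
      = ∑ k, ((∑ a : Fin (N k + 1), lamCC d N i (Function.update e k a) *
          (if (e k : ℕ) = (a : ℕ) + 1
            then (((a : ℕ) : ℝ) + 1) / (((a : ℕ) : ℝ) + 2) * p k else 0))
        + (∑ a : Fin (N k + 1), lamCC d N i (Function.update e k a) *
          (if (e k : ℕ) < (a : ℕ)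
            then (if (a : ℕ) < N k
              then p k / ((((a : ℕ) : ℝ) + 1) * (((a : ℕ) : ℝ) + 2))
              else p k / ((N k : ℝ) + 1)) else 0))
        + (if (i k : ℕ) = N k then (0 : ℝ) else p k) * lamCC d N i e) :=
    Finset.sum_congr rfl fun k _ => key_identity p i e k (hN k)
  simp only [Finset.sum_add_distrib, ← Finset.sum_mul] at hsum
  linear_combination hsum


lemma lam_nonneg (i e : CCState d N) : 0 ≤ lamCC d N i e := by
  rw [lamCC]
  split_ifs
  · apply inv_nonneg.mpr
    apply Finset.prod_nonneg
    intro j _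
    positivity
  · exact le_refl 0

lemma coupon_nonneg (p : Fin d → ℝ) (hp : ∀ j, 0 < p j) (hpsum : ∑ j, p j ≤ 1)
    (a b : CCState d N) : 0 ≤ couponP d N p a b := by
  rw [couponP]
  apply add_nonneg
  · apply Finset.sum_nonneg
    intro k _
    split_ifs
    · exact (hp k).le
    · exact le_refl 0
  · split_ifs
    · have h2 : (0 : ℝ) ≤ ∑ j, (if (a j : ℕ) = N j then p j else 0) := by
        apply Finset.sum_nonneg
        intro j _
        split_ifs
        · exact (hp j).le
        · exact le_refl 0
      linarith
    · exact le_refl 0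

/-- Sharpness: the separation from uniformity of the antidual chain started at `0`
equals the probability that the coupon collector chain started at `0` is not yet
absorbed at `(N_1,…,N_d)`. -/
theorem stmt7 (d : ℕ) (hd : 1 ≤ d) (N : Fin d → ℕ) (hN : ∀ j, 1 ≤ N j)
    (p : Fin d → ℝ) (hp : ∀ j, 0 < p j) (hpsum : ∑ j, p j ≤ 1)
    (hcond : ∑ j, (1 - 1 / ((N j : ℝ) * ((N j : ℝ) + 1))) * p j ≤ 1) :
    ∀ n : ℕ,
      sep ((fun i : CCState d N => if i = 0 then (1 : ℝ) else 0) ᵥ*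
            (antidualCC d N p) ^ n)
          (fun _ => 1 / ∏ j, ((N j : ℝ) + 1)) =
        1 - ((fun i : CCState d N => if i = 0 then (1 : ℝ) else 0) ᵥ*
              (couponP d N p) ^ n) (fun j => Fin.last (N j)) := by
  intro n
  set δ : CCState d N → ℝ := fun i => if i = 0 then (1 : ℝ) else 0 with hδ
  set C : ℝ := ∏ j, ((N j : ℝ) + 1) with hCdef
  set imax : CCState d N := fun j => Fin.last (N j) with himax
  have hC : 0 < C := Finset.prod_pos fun j _ => by positivity
  -- δ is a fixed point of the link from the left
  have hlam0 : ∀ e : CCState d N, lamCC d N 0 e = δ e := by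
    intro e
    rw [lamCC]
    have hz : ∀ j, (((0 : CCState d N)) j : ℕ) = 0 := fun j => rfl
    have hcond : (∀ j, (e j : ℕ) ≤ (((0 : CCState d N)) j : ℕ)) ↔ e = 0 := by
      constructor
      · intro h
        funext j
        have := h j
        exact Fin.ext (by rw [hz j] at this ⊢; omega)
      · rintro rfl j
        exact le_refl _
    have hprod : (∏ j, (((((0 : CCState d N) j : ℕ)) : ℝ) + 1)) = 1 := by
      rw [Finset.prod_congr rfl (fun j (_ : j ∈ Finset.univ) => by
        rw [hz j]; norm_num :
        ∀ j ∈ Finset.univ, (((((0 : CCState d N) j : ℕ)) : ℝ) + 1) = (1 : ℝ))]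
      exact Finset.prod_const_one
    rw [if_congr hcond rfl rfl, hprod, hδ]
    simp
  have hδlam : δ ᵥ* lamCC d N = δ := by
    funext e
    show ∑ i', δ i' * lamCC d N i' e = δ e
    rw [← hlam0 e]
    have hterm : ∀ i' ∈ Finset.univ, δ i' * lamCC d N i' e
        = if i' = 0 then lamCC d N i' e else 0 := by
      intro i' _
      by_cases h : i' = 0 <;> simp [hδ, h]
    rw [Finset.sum_congr rfl hterm,
      Finset.sum_ite_eq' Finset.univ (0 : CCState d N) (fun i' => lamCC d N i' e)]
    simp
  -- intertwining propagated to powers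
  have hcomm := comm_lemma hN p
  have hpow : ∀ m : ℕ, couponP d N p ^ m * lamCC d N
      = lamCC d N * antidualCC d N p ^ m := by
    intro m
    induction m with
    | zero => rw [pow_zero, pow_zero, one_mul, mul_one]
    | succ m ih =>
      rw [pow_succ, pow_succ, mul_assoc, hcomm, ← mul_assoc, ih, mul_assoc]
  have hmain : ∀ m : ℕ, δ ᵥ* (antidualCC d N p) ^ m
      = (δ ᵥ* (couponP d N p) ^ m) ᵥ* lamCC d N := by
    intro m
    calc δ ᵥ* antidualCC d N p ^ m
        = (δ ᵥ* lamCC d N) ᵥ* antidualCC d N p ^ m := by rw [hδlam]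
      _ = δ ᵥ* (lamCC d N * antidualCC d N p ^ m) := Matrix.vecMul_vecMul δ _ _
      _ = δ ᵥ* (couponP d N p ^ m * lamCC d N) := by rw [hpow m]
      _ = (δ ᵥ* couponP d N p ^ m) ᵥ* lamCC d N := (Matrix.vecMul_vecMul δ _ _).symm
  -- nonnegativity of the coupon-collector distribution
  have hν0 : ∀ m : ℕ, ∀ i, 0 ≤ (δ ᵥ* (couponP d N p) ^ m) i := by
    intro m
    induction m with
    | zero =>
      intro i
      rw [pow_zero, Matrix.vecMul_one]
      have hδi : δ i = if i = 0 then 1 else 0 := by rw [hδ]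
      rw [hδi]
      split_ifs <;> norm_num
    | succ m ih =>
      intro i
      rw [pow_succ, ← Matrix.vecMul_vecMul]
      show 0 ≤ ∑ i', (δ ᵥ* couponP d N p ^ m) i' * couponP d N p i' i
      apply Finset.sum_nonneg
      intro i' _
      exact mul_nonneg (ih i') (coupon_nonneg p hp hpsum i' i)
  set ν : CCState d N → ℝ := δ ᵥ* (couponP d N p) ^ n with hν
  -- the link evaluated on the top row / top column
  have hlam_top_row : ∀ e, lamCC d N imax e = C⁻¹ := by
    intro e
    rw [lamCC, if_pos]
    · first
        | rfl
        | (rw [hCdef]; congr 1)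
        | (rw [hCdef]
           congr 1
           exact Finset.prod_congr rfl fun j _ => by rw [himax]; simp)
        | simp [himax, hCdef, Fin.val_last]
    · intro j
      rw [himax]
      exact Fin.is_le (e j)
  have hlam_col_top : ∀ i, lamCC d N i imax = if i = imax then C⁻¹ else 0 := by
    intro i
    by_cases h : i = imax
    · subst h
      rw [if_pos rfl]
      exact hlam_top_row imax
    · rw [lamCC, if_neg, if_neg h]
      intro hc
      apply h
      funext j
      have := hc j
      rw [himax] at this ⊢
      rw [Fin.val_last] at this
      exact Fin.ext (le_antisymm (Fin.is_le _) this)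
  have hμ : ∀ e, (δ ᵥ* (antidualCC d N p) ^ n) e = ∑ i', ν i' * lamCC d N i' e := by
    intro e
    rw [hmain n]
    rfl
  have hμtop : (δ ᵥ* (antidualCC d N p) ^ n) imax = ν imax * C⁻¹ := by
    rw [hμ imax]
    have hterm : ∀ i' ∈ Finset.univ, ν i' * lamCC d N i' imax
        = if i' = imax then ν i' * C⁻¹ else 0 := by
      intro i' _
      rw [hlam_col_top i']
      split_ifs <;> simp
    rw [Finset.sum_congr rfl hterm,
      Finset.sum_ite_eq' Finset.univ imax (fun i' => ν i' * C⁻¹)]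
    simp
  have hlb : ∀ e, ν imax * C⁻¹ ≤ (δ ᵥ* (antidualCC d N p) ^ n) e := by
    intro e
    rw [hμ e]
    calc ν imax * C⁻¹ = ν imax * lamCC d N imax e := by rw [hlam_top_row e]
      _ ≤ ∑ i', ν i' * lamCC d N i' e :=
        Finset.single_le_sum (f := fun i' => ν i' * lamCC d N i' e)
          (fun i' _ => mul_nonneg (hν0 n i') (lam_nonneg i' e)) (Finset.mem_univ imax)
  -- compute the separation
  rw [sep]
  have hdiv : ∀ x : ℝ, x / (1 / C) = x * C := by
    intro x
    rw [one_div, div_eq_mul_inv, inv_inv]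
  apply le_antisymm
  · apply Finset.sup'_le
    intro e _
    rw [hdiv]
    have h1 := hlb e
    have h2 : ν imax * C⁻¹ * C ≤ (δ ᵥ* (antidualCC d N p) ^ n) e * C :=
      mul_le_mul_of_nonneg_right h1 hC.le
    rw [mul_assoc, inv_mul_cancel₀ (ne_of_gt hC), mul_one] at h2
    linarith
  · have hle := Finset.le_sup' (f := fun e => 1 - (δ ᵥ* (antidualCC d N p) ^ n) e / (1 / C))
      (Finset.mem_univ imax)
    have heq : 1 - (δ ᵥ* (antidualCC d N p) ^ n) imax / (1 / C)
        = 1 - ν imax := by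
      rw [hdiv, hμtop, mul_assoc, inv_mul_cancel₀ (ne_of_gt hC), mul_one]
    rw [heq] at hle
    exact hle
end

section
/- Fix d ≥ 1 and reals p_j > 0 (j = 1,…,d) with Σ_{j=1}^d p_j ≤ 1, and let a_k ∈ (0,1) for k = 1,…,d. On E = {0,1}^d define the matrix P by P(i, i+s_k) = a_k·p_k when i_k = 0, P(i, i−s_k) = (1−a_k)·p_k when i_k = 1, P(i,i) = 1 − Σ_{j: i_j=0} a_j p_j − Σ_{j: i_j=1} (1−a_j) p_j, and all other entries 0; and define π(i) := ∏_{j=1}^d (a_j if i_j = 1, else 1−a_j). Then: (a) P is row-stochastic; (b) πP = π; (c) P is irreducible and aperiodic; (d) with the link Λ(i,i') := π(i')·1(i' ⪯ i)/Σ_{i''⪯i} π(i'') (coordinatewise order), the duality relation Λ P = P* Λ holds, where P* is the coupon collector chain on {0,1}^d. -/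
open Matrix Finset
open scoped Classical

/-- The hypercube `{0,1}^d`. -/
abbrev Cube (d : ℕ) : Type := Fin d → Fin 2

/-- The coupon collector chain on `{0,1}^d` (case `N_1 = … = N_d = 1`). -/
noncomputable def cubeCoupon (d : ℕ) (p : Fin d → ℝ) : Matrix (Cube d) (Cube d) ℝ :=
  fun i i' =>
    (∑ k : Fin d, if (i k : ℕ) = 0 ∧ (i' k : ℕ) = 1 ∧ (∀ j, j ≠ k → i' j = i j)
        then p k else 0) +
    (if i' = i then 1 - ∑ j : Fin d, (if (i j : ℕ) = 0 then p j else 0) else 0)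

/-- The antidual chain of Theorem 4 on `{0,1}^d`. -/
noncomputable def cubeAntidual (d : ℕ) (p a : Fin d → ℝ) : Matrix (Cube d) (Cube d) ℝ :=
  fun i i' =>
    (∑ k : Fin d, if (i k : ℕ) = 0 ∧ (i' k : ℕ) = 1 ∧ (∀ j, j ≠ k → i' j = i j)
        then a k * p k else 0) +
    (∑ k : Fin d, if (i k : ℕ) = 1 ∧ (i' k : ℕ) = 0 ∧ (∀ j, j ≠ k → i' j = i j)
        then (1 - a k) * p k else 0) +
    (if i' = i
        then 1 - ∑ j : Fin d, (if (i j : ℕ) = 0 then a j * p j else (1 - a j) * p j)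
        else 0)

/-- The product-form stationary distribution `π(i) = ∏_j (a_j if i_j = 1 else 1 - a_j)`. -/
noncomputable def cubePi (d : ℕ) (a : Fin d → ℝ) : Cube d → ℝ :=
  fun i => ∏ j, (if (i j : ℕ) = 1 then a j else 1 - a j)

/-- The link `Λ(i,i') = π(i')·1(i' ⪯ i)/Σ_{i''⪯i} π(i'')`. -/
noncomputable def cubeLink (d : ℕ) (a : Fin d → ℝ) : Matrix (Cube d) (Cube d) ℝ :=
  fun i i' => if i' ≤ i
    then cubePi d a i' / (∑ i'' : Cube d, if i'' ≤ i then cubePi d a i'' else 0)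
    else 0


lemma fin2 (x : Fin 2) : (x : ℕ) = 0 ∨ (x : ℕ) = 1 := by omega

lemma fin2e {x y : Fin 2} (h : (x:ℕ) = (y:ℕ)) : x = y := Fin.ext h

lemma fin2z {x : Fin 2} (h : (x:ℕ) = 0) : x = 0 := Fin.ext (by simpa using h)

lemma fin2o {x : Fin 2} (h : (x:ℕ) = 1) : x = 1 := Fin.ext (by simpa using h)

/-- entries of the local 2×2 link matrix -/
noncomputable def lam (a : ℝ) (x y : Fin 2) : ℝ :=
  if (x : ℕ) = 1 then (if (y : ℕ) = 1 then a else 1 - a)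
  else (if (y : ℕ) = 0 then 1 else 0)

noncomputable def Bm (a p : ℝ) (x y : Fin 2) : ℝ :=
  if (x : ℕ) = 0 then (if (y : ℕ) = 1 then a * p else -(a * p))
  else (if (y : ℕ) = 0 then (1 - a) * p else -((1 - a) * p))

noncomputable def Bs (p : ℝ) (x y : Fin 2) : ℝ :=
  if (x : ℕ) = 0 then (if (y : ℕ) = 1 then p else -p) else 0

/-- L1 : sum over the line through `i` in direction `k` -/
lemma sum_line {d : ℕ} (k : Fin d) (i : Cube d) (g : Cube d → ℝ) :
    ∑ i' : Cube d, (if ∀ j, j ≠ k → i' j = i j then g i' else 0)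
      = ∑ x : Fin 2, g (Function.update i k x) := by
  rw [← Finset.sum_filter]
  have himg : Finset.univ.filter (fun i' : Cube d => ∀ j, j ≠ k → i' j = i j)
      = Finset.univ.image (fun x : Fin 2 => Function.update i k x) := by
    ext i'
    simp only [Finset.mem_filter, Finset.mem_image, Finset.mem_univ, true_and]
    constructor
    · intro h
      refine ⟨i' k, ?_⟩
      funext j
      by_cases hj : j = k
      · subst hj; simp
      · rw [Function.update_of_ne hj]; exact (h j hj).symm
    · rintro ⟨x, rfl⟩ j hj
      rw [Function.update_of_ne hj]
  rw [himg, Finset.sum_image]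
  intro x _ y _ h
  have := congrFun h k
  simpa using this

/-- splitting a product over an updated configuration -/
lemma prod_update_split {d : ℕ} (k : Fin d) (c : Cube d) (x : Fin 2) (f : Fin d → Fin 2 → ℝ) :
    ∏ j, f j (Function.update c k x j)
      = f k x * ∏ j ∈ Finset.univ.erase k, f j (c j) := by
  rw [← Finset.mul_prod_erase Finset.univ _ (Finset.mem_univ k)]
  congr 1
  · simp
  · exact Finset.prod_congr rfl fun j hj => by
      rw [Function.update_of_ne (Finset.mem_erase.mp hj).1]





/-- L2 : the normalisation factorises -/
lemma Zformula (d : ℕ) (a : Fin d → ℝ) (i : Cube d) :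
    (∑ i'' : Cube d, if i'' ≤ i then cubePi d a i'' else 0)
      = ∏ j, (if (i j : ℕ) = 1 then 1 else 1 - a j) := by
  have step1 : ∀ i'' : Cube d, (if i'' ≤ i then cubePi d a i'' else 0)
      = ∏ j, (if i'' j ≤ i j then (if (i'' j : ℕ) = 1 then a j else 1 - a j) else 0) := by
    intro i''
    by_cases h : i'' ≤ i
    · rw [if_pos h, cubePi]
      exact Finset.prod_congr rfl fun j _ => by rw [if_pos (h j)]
    · rw [if_neg h]
      obtain ⟨j, hj⟩ := not_forall.mp (fun hh => h fun j => hh j)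
      refine (Finset.prod_eq_zero (Finset.mem_univ j) ?_).symm
      rw [if_neg hj]
  have key := Fintype.prod_sum (R := ℝ) (ι := Fin d) (κ := fun _ => Fin 2)
      (f := fun j y => if y ≤ i j then (if (y : ℕ) = 1 then a j else 1 - a j) else 0)
  rw [Finset.sum_congr rfl fun i'' _ => step1 i'', ← key]
  refine Finset.prod_congr rfl fun j _ => ?_
  rw [Fin.sum_univ_two]
  rcases fin2 (i j) with h | h
  · have h0 : i j = 0 := fin2z h
    simp [h0, Fin.le_def]
  · have h1 : i j = 1 := fin2o h
    simp [h1, Fin.le_def]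

/-- L3 : the link factorises -/
lemma link_eq (d : ℕ) (a : Fin d → ℝ) (ha : ∀ k, 0 < a k ∧ a k < 1) (i i' : Cube d) :
    cubeLink d a i i' = ∏ j, lam (a j) (i j) (i' j) := by
  unfold cubeLink
  rw [Zformula]
  by_cases h : i' ≤ i
  · rw [if_pos h, cubePi, ← Finset.prod_div_distrib]
    refine Finset.prod_congr rfl fun j _ => ?_
    have hle := h j
    rcases fin2 (i j) with h0 | h1
    · have : i' j = 0 := by
        have := hle; rw [Fin.le_def, h0] at this; exact fin2e (by omega)
      simp [lam, h0, this, fin2z h0]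
      exact (by linarith [(ha j).2] : (1:ℝ) - a j ≠ 0)
    · simp [lam, h1]
  · rw [if_neg h]
    obtain ⟨j, hj⟩ := not_forall.mp (fun hh => h fun j => hh j)
    refine (Finset.prod_eq_zero (Finset.mem_univ j) ?_).symm
    rw [Fin.le_def] at hj
    have h0 : (i j : ℕ) = 0 := by omega
    have h1 : (i' j : ℕ) = 1 := by omega
    simp [lam, h0, h1]

/-- L6 : the 2×2 intertwining -/
lemma two_by_two (a p : ℝ) (x y : Fin 2) :
    ∑ z : Fin 2, lam a x z * Bm a p z y = ∑ z : Fin 2, Bs p x z * lam a z y := by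
  fin_cases x <;> fin_cases y <;>
    simp [Fin.sum_univ_two, lam, Bm, Bs] <;> ring





/-- resteq + equality at k gives full equality -/
lemma resteq_full {d : ℕ} {k : Fin d} {i i' : Cube d}
    (hr : ∀ j, j ≠ k → i' j = i j) (hk : i' k = i k) : i' = i := by
  funext j
  by_cases hj : j = k
  · subst hj; exact hk
  · exact hr j hj

/-- L4 : decomposition of the antidual chain -/
lemma antidual_eq (d : ℕ) (p a : Fin d → ℝ) (i i' : Cube d) :
    cubeAntidual d p a i i' = (if i' = i then 1 else 0)
      + ∑ k, (if ∀ j, j ≠ k → i' j = i j then Bm (a k) (p k) (i k) (i' k) else 0) := by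
  have key : ∀ k : Fin d,
      (if ∀ j, j ≠ k → i' j = i j then Bm (a k) (p k) (i k) (i' k) else 0)
      = (if (i k : ℕ) = 0 ∧ (i' k : ℕ) = 1 ∧ (∀ j, j ≠ k → i' j = i j)
          then a k * p k else 0)
      + (if (i k : ℕ) = 1 ∧ (i' k : ℕ) = 0 ∧ (∀ j, j ≠ k → i' j = i j)
          then (1 - a k) * p k else 0)
      + (if i' = i then -(if (i k : ℕ) = 0 then a k * p k else (1 - a k) * p k) else 0) := by
    intro k
    by_cases hr : ∀ j, j ≠ k → i' j = i j
    · rcases fin2 (i k) with h0 | h1 <;> rcases fin2 (i' k) with h0' | h1'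
      · have : i' = i := resteq_full hr ((fin2z h0').trans (fin2z h0).symm)
        simp [Bm, h0, h0', hr, this]
      · have : i' ≠ i := fun hh => by rw [hh] at h1'; omega
        simp [Bm, h0, h1', hr, this]
      · have : i' ≠ i := fun hh => by rw [hh] at h0'; omega
        simp [Bm, h1, h0', hr, this]
      · have : i' = i := resteq_full hr ((fin2o h1').trans (fin2o h1).symm)
        simp [Bm, h1, h1', hr, this]
    · have : i' ≠ i := fun hh => hr (by rw [hh]; exact fun _ _ => rfl)
      simp [hr, this]
  rw [Finset.sum_congr rfl fun k _ => key k, Finset.sum_add_distrib, Finset.sum_add_distrib]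
  unfold cubeAntidual
  by_cases hii : i' = i
  · simp [hii]
    ring
  · simp [hii]

/-- L5 : decomposition of the coupon chain -/
lemma coupon_eq (d : ℕ) (p : Fin d → ℝ) (i i' : Cube d) :
    cubeCoupon d p i i' = (if i' = i then 1 else 0)
      + ∑ k, (if ∀ j, j ≠ k → i' j = i j then Bs (p k) (i k) (i' k) else 0) := by
  have key : ∀ k : Fin d,
      (if ∀ j, j ≠ k → i' j = i j then Bs (p k) (i k) (i' k) else 0)
      = (if (i k : ℕ) = 0 ∧ (i' k : ℕ) = 1 ∧ (∀ j, j ≠ k → i' j = i j)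
          then p k else 0)
      + (if i' = i then -(if (i k : ℕ) = 0 then p k else 0) else 0) := by
    intro k
    by_cases hr : ∀ j, j ≠ k → i' j = i j
    · rcases fin2 (i k) with h0 | h1 <;> rcases fin2 (i' k) with h0' | h1'
      · have : i' = i := resteq_full hr ((fin2z h0').trans (fin2z h0).symm)
        simp [Bs, h0, h0', hr, this]
      · have : i' ≠ i := fun hh => by rw [hh] at h1'; omega
        simp [Bs, h0, h1', hr, this]
      · have : i' ≠ i := fun hh => by rw [hh] at h0'; omega
        simp [Bs, h1, h0', hr, this]
      · have : i' = i := resteq_full hr ((fin2o h1').trans (fin2o h1).symm)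
        simp [Bs, h1, h1', hr, this]
    · have : i' ≠ i := fun hh => hr (by rw [hh]; exact fun _ _ => rfl)
      simp [hr, this]
  rw [Finset.sum_congr rfl fun k _ => key k, Finset.sum_add_distrib]
  unfold cubeCoupon
  by_cases hii : i' = i
  · simp [hii]
    ring
  · simp [hii]

section parts
variable {d : ℕ} (hd : 1 ≤ d) {p a : Fin d → ℝ}
  (hp : ∀ j, 0 < p j) (hpsum : ∑ j, p j ≤ 1) (ha : ∀ k, 0 < a k ∧ a k < 1)

include hd hp hpsum ha in
lemma diag_pos (i : Cube d) :
    0 < 1 - ∑ j : Fin d, (if (i j : ℕ) = 0 then a j * p j else (1 - a j) * p j) := by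
  have hne : (Finset.univ : Finset (Fin d)).Nonempty := ⟨⟨0, hd⟩, Finset.mem_univ _⟩
  have hlt : ∑ j : Fin d, (if (i j : ℕ) = 0 then a j * p j else (1 - a j) * p j)
      < ∑ j, p j := by
    refine Finset.sum_lt_sum_of_nonempty hne fun j _ => ?_
    by_cases hj : (i j : ℕ) = 0 <;> simp [hj] <;> nlinarith [(ha j).1, (ha j).2, hp j]
  linarith

include hp ha in
lemma entry_nonneg (i i' : Cube d) (hs : ∑ j, p j ≤ 1) (hd' : 1 ≤ d) :
    0 ≤ cubeAntidual d p a i i' := by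
  unfold cubeAntidual
  have h1 : ∀ k : Fin d, (0:ℝ) ≤ (if (i k : ℕ) = 0 ∧ (i' k : ℕ) = 1 ∧
      (∀ j, j ≠ k → i' j = i j) then a k * p k else 0) := fun k => by
    split
    · nlinarith [(ha k).1, hp k]
    · rfl
  have h2 : ∀ k : Fin d, (0:ℝ) ≤ (if (i k : ℕ) = 1 ∧ (i' k : ℕ) = 0 ∧
      (∀ j, j ≠ k → i' j = i j) then (1 - a k) * p k else 0) := fun k => by
    split
    · have := (ha k).2; nlinarith [hp k]
    · rfl
  have h3 : (0:ℝ) ≤ (if i' = i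
      then 1 - ∑ j : Fin d, (if (i j : ℕ) = 0 then a j * p j else (1 - a j) * p j)
      else 0) := by
    split
    · exact le_of_lt (diag_pos hd' hp hs ha i)
    · rfl
  have s1 : (0:ℝ) ≤ ∑ k : Fin d, (if (i k : ℕ) = 0 ∧ (i' k : ℕ) = 1 ∧
      (∀ j, j ≠ k → i' j = i j) then a k * p k else 0) :=
    Finset.sum_nonneg fun k _ => h1 k
  have s2 : (0:ℝ) ≤ ∑ k : Fin d, (if (i k : ℕ) = 1 ∧ (i' k : ℕ) = 0 ∧
      (∀ j, j ≠ k → i' j = i j) then (1 - a k) * p k else 0) :=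
    Finset.sum_nonneg fun k _ => h2 k
  linarith

lemma row_sum_one (i : Cube d) : ∑ i', cubeAntidual d p a i i' = 1 := by
  have : ∀ i', cubeAntidual d p a i i' = (if i' = i then 1 else 0)
      + ∑ k, (if ∀ j, j ≠ k → i' j = i j then Bm (a k) (p k) (i k) (i' k) else 0) :=
    antidual_eq d p a i
  rw [Finset.sum_congr rfl fun i' _ => this i', Finset.sum_add_distrib,
    Finset.sum_ite_eq' Finset.univ i (fun _ => (1:ℝ)), Finset.sum_comm]
  have hz : ∀ k : Fin d,
      (∑ i' : Cube d, if ∀ j, j ≠ k → i' j = i j then Bm (a k) (p k) (i k) (i' k) else 0)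
        = 0 := by
    intro k
    have := sum_line k i (fun i' => Bm (a k) (p k) (i k) (i' k))
    rw [this]
    have : ∀ x : Fin 2, (Function.update i k x) k = x := fun x => by simp
    rw [Fin.sum_univ_two, this 0, this 1]
    rcases fin2 (i k) with h | h <;> simp [Bm, h]
  simp [hz]

lemma detailed_balance (i i' : Cube d) :
    cubePi d a i * cubeAntidual d p a i i' = cubePi d a i' * cubeAntidual d p a i' i := by
  rw [antidual_eq, antidual_eq]
  have hdiag : cubePi d a i * (if i' = i then (1:ℝ) else 0)
      = cubePi d a i' * (if i = i' then (1:ℝ) else 0) := by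
    by_cases h : i' = i
    · simp [h]
    · have h2 : ¬ i = i' := fun hh => h hh.symm
      simp [h, h2]
  have hterm : ∀ k : Fin d,
      cubePi d a i * (if ∀ j, j ≠ k → i' j = i j then Bm (a k) (p k) (i k) (i' k) else 0)
      = cubePi d a i' * (if ∀ j, j ≠ k → i j = i' j then Bm (a k) (p k) (i' k) (i k) else 0) := by
    intro k
    by_cases hr : ∀ j, j ≠ k → i' j = i j
    · have hr' : ∀ j, j ≠ k → i j = i' j := fun j hj => (hr j hj).symm
      rw [if_pos hr, if_pos hr']
      have hsplit : ∀ c : Cube d, cubePi d a c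
          = (if (c k : ℕ) = 1 then a k else 1 - a k)
            * ∏ j ∈ Finset.univ.erase k, (if (c j : ℕ) = 1 then a j else 1 - a j) := by
        intro c
        rw [cubePi, ← Finset.mul_prod_erase Finset.univ _ (Finset.mem_univ k)]
      have hrest : (∏ j ∈ Finset.univ.erase k, (if (i j : ℕ) = 1 then a j else 1 - a j))
          = ∏ j ∈ Finset.univ.erase k, (if (i' j : ℕ) = 1 then a j else 1 - a j) :=
        Finset.prod_congr rfl fun j hj => by
          rw [hr j (Finset.mem_erase.mp hj).1]
      rw [hsplit i, hsplit i', hrest]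
      rcases fin2 (i k) with hk | hk <;> rcases fin2 (i' k) with hk' | hk' <;>
        simp [Bm, hk, hk'] <;> ring
    · have hr' : ¬ ∀ j, j ≠ k → i j = i' j := fun hh => hr fun j hj => (hh j hj).symm
      rw [if_neg hr, if_neg hr']
      simp
  rw [mul_add, mul_add, Finset.mul_sum, Finset.mul_sum, hdiag,
    Finset.sum_congr rfl fun k _ => hterm k]

lemma stationary : cubePi d a ᵥ* cubeAntidual d p a = cubePi d a := by
  funext i'
  rw [Matrix.vecMul, dotProduct]
  calc ∑ i, cubePi d a i * cubeAntidual d p a i i'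
      = ∑ i, cubePi d a i' * cubeAntidual d p a i' i :=
        Finset.sum_congr rfl fun i _ => detailed_balance i i'
    _ = cubePi d a i' * ∑ i, cubeAntidual d p a i' i := by rw [Finset.mul_sum]
    _ = cubePi d a i' := by rw [row_sum_one]; ring

include hd hp hpsum ha in
lemma diag_entry_pos (i : Cube d) : 0 < cubeAntidual d p a i i := by
  unfold cubeAntidual
  have e1 : (∑ k : Fin d, if (i k : ℕ) = 0 ∧ (i k : ℕ) = 1 ∧ (∀ j, j ≠ k → i j = i j)
      then a k * p k else 0) = 0 :=
    Finset.sum_eq_zero fun k _ => if_neg (by omega)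
  have e2 : (∑ k : Fin d, if (i k : ℕ) = 1 ∧ (i k : ℕ) = 0 ∧ (∀ j, j ≠ k → i j = i j)
      then (1 - a k) * p k else 0) = 0 :=
    Finset.sum_eq_zero fun k _ => if_neg (by omega)
  rw [e1, e2, if_pos rfl]
  have := diag_pos hd hp hpsum ha i
  linarith

include hp ha in
lemma flip_pos {i i' : Cube d} (k : Fin d) (hk : i k ≠ i' k)
    (hr : ∀ j, j ≠ k → i' j = i j) : 0 < cubeAntidual d p a i i' := by
  rw [antidual_eq]
  have hne : i' ≠ i := fun hh => hk (by rw [hh])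
  rw [if_neg hne]
  have hsum : (∑ k', if ∀ j, j ≠ k' → i' j = i j then Bm (a k') (p k') (i k') (i' k') else 0)
      = Bm (a k) (p k) (i k) (i' k) := by
    rw [Finset.sum_eq_single k]
    · exact if_pos hr
    · intro k' _ hk'
      refine if_neg fun hr' => ?_
      exact hk ((hr' k (Ne.symm hk')).symm)
    · exact fun h => absurd (Finset.mem_univ k) h
  rw [hsum]
  rcases fin2 (i k) with h | h <;> rcases fin2 (i' k) with h' | h'
  · exact absurd (fin2e (h.trans h'.symm)) hk
  · simp only [Bm, h, h', if_pos, if_neg]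
    simp
    nlinarith [(ha k).1, hp k]
  · simp only [Bm, h, h']
    norm_num
    nlinarith [(ha k).2, hp k]
  · exact absurd (fin2e (h.trans h'.symm)) hk

include hd hp hpsum ha in
lemma pow_entry_nonneg (n : ℕ) (i i' : Cube d) : 0 ≤ ((cubeAntidual d p a) ^ n) i i' := by
  induction n generalizing i i' with
  | zero =>
    rw [pow_zero]
    by_cases h : i = i' <;> simp [Matrix.one_apply, h]
  | succ n ih =>
    rw [pow_succ, Matrix.mul_apply]
    exact Finset.sum_nonneg fun j _ =>
      mul_nonneg (ih i j) (entry_nonneg hp ha j i' hpsum hd)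

include hd hp hpsum ha in
lemma prim (m : ℕ) : ∀ i i' : Cube d,
    (Finset.univ.filter (fun k => i k ≠ i' k)).card ≤ m →
    0 < ((cubeAntidual d p a) ^ m) i i' := by
  induction m with
  | zero =>
    intro i i' hcard
    have hfe : Finset.univ.filter (fun k => i k ≠ i' k) = ∅ :=
      Finset.card_eq_zero.mp (Nat.le_zero.mp hcard)
    have : i = i' := by
      funext k
      by_contra hk
      have : k ∈ Finset.univ.filter (fun k => i k ≠ i' k) :=
        Finset.mem_filter.mpr ⟨Finset.mem_univ k, hk⟩
      rw [hfe] at this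
      exact absurd this (Finset.notMem_empty k)
    subst this
    rw [pow_zero]
    simp [Matrix.one_apply]
  | succ m ih =>
    intro i i' hcard
    rw [pow_succ']
    rw [Matrix.mul_apply]
    by_cases hle : (Finset.univ.filter (fun k => i k ≠ i' k)).card ≤ m
    · refine Finset.sum_pos' (fun j _ => mul_nonneg
        (le_of_lt (diag_entry_pos hd hp hpsum ha j) |>.trans (le_refl _) |> fun _ =>
          entry_nonneg hp ha i j hpsum hd) (pow_entry_nonneg hd hp hpsum ha m j i'))
        ⟨i, Finset.mem_univ i, mul_pos (diag_entry_pos hd hp hpsum ha i) (ih i i' hle)⟩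
    · have hc : (Finset.univ.filter (fun k => i k ≠ i' k)).card = m + 1 := le_antisymm hcard (not_le.mp hle)
      have hne : (Finset.univ.filter (fun k => i k ≠ i' k)).Nonempty :=
        Finset.card_pos.mp (by omega)
      obtain ⟨k, hk⟩ := hne
      have hkd : i k ≠ i' k := (Finset.mem_filter.mp hk).2
      set mid : Cube d := Function.update i k (i' k) with hmid
      have hstep : 0 < cubeAntidual d p a i mid := by
        refine flip_pos hp ha k ?_ ?_
        · simp [hmid]; exact hkd
        · intro j hj; simp [hmid, Function.update_of_ne hj]
      have hfilter : Finset.univ.filter (fun l => mid l ≠ i' l)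
          = (Finset.univ.filter (fun l => i l ≠ i' l)).erase k := by
        ext l
        simp only [Finset.mem_filter, Finset.mem_erase, Finset.mem_univ, true_and]
        by_cases hl : l = k
        · subst hl; simp [hmid]
        · rw [hmid, Function.update_of_ne hl]
          tauto
      have hcd : (Finset.univ.filter (fun l => mid l ≠ i' l)).card ≤ m := by
        rw [hfilter, Finset.card_erase_of_mem hk, hc]
        omega
      have hrest : 0 < ((cubeAntidual d p a) ^ m) mid i' := ih mid i' hcd
      refine Finset.sum_pos' (fun j _ => mul_nonneg (entry_nonneg hp ha i j hpsum hd)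
        (pow_entry_nonneg hd hp hpsum ha m j i'))
        ⟨mid, Finset.mem_univ mid, mul_pos hstep hrest⟩

lemma sum_line' {d : ℕ} (k : Fin d) (c : Cube d) (g : Cube d → ℝ) :
    ∑ i' : Cube d, (if ∀ j, j ≠ k → c j = i' j then g i' else 0)
      = ∑ x : Fin 2, g (Function.update c k x) := by
  rw [← sum_line k c g]
  exact Finset.sum_congr rfl fun i' _ => by
    refine if_congr (forall_congr' fun j => imp_congr Iff.rfl eq_comm) rfl rfl

include ha in
lemma intertwine : cubeLink d a * cubeAntidual d p a = cubeCoupon d p * cubeLink d a := by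
  ext i y
  rw [Matrix.mul_apply, Matrix.mul_apply]
  have L : ∑ i', cubeLink d a i i' * cubeAntidual d p a i' y
      = cubeLink d a i y + ∑ k, (∑ x : Fin 2, lam (a k) (i k) x * Bm (a k) (p k) x (y k))
          * ∏ j ∈ Finset.univ.erase k, lam (a j) (i j) (y j) := by
    have e1 : ∀ i', cubeLink d a i i' * cubeAntidual d p a i' y
        = (if y = i' then cubeLink d a i i' else 0)
          + ∑ k, (if ∀ j, j ≠ k → y j = i' j
              then cubeLink d a i i' * Bm (a k) (p k) (i' k) (y k) else 0) := by
      intro i'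
      rw [antidual_eq, mul_add, Finset.mul_sum]
      congr 1
      · by_cases h : y = i' <;> simp [h]
      · exact Finset.sum_congr rfl fun k _ => by
          by_cases h : ∀ j, j ≠ k → y j = i' j <;> simp [h]
    rw [Finset.sum_congr rfl fun i' _ => e1 i', Finset.sum_add_distrib,
      Finset.sum_ite_eq Finset.univ y _, if_pos (Finset.mem_univ y), Finset.sum_comm]
    congr 1
    refine Finset.sum_congr rfl fun k _ => ?_
    rw [sum_line' k y (fun i' => cubeLink d a i i' * Bm (a k) (p k) (i' k) (y k)),
      Finset.sum_mul]
    refine Finset.sum_congr rfl fun x _ => ?_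
    have hupk : (Function.update y k x) k = x := Function.update_self k x y
    rw [hupk, link_eq d a ha i (Function.update y k x),
      prod_update_split k y x (fun j z => lam (a j) (i j) z)]
    ring
  have R : ∑ i', cubeCoupon d p i i' * cubeLink d a i' y
      = cubeLink d a i y + ∑ k, (∑ x : Fin 2, Bs (p k) (i k) x * lam (a k) x (y k))
          * ∏ j ∈ Finset.univ.erase k, lam (a j) (i j) (y j) := by
    have e1 : ∀ i', cubeCoupon d p i i' * cubeLink d a i' y
        = (if i' = i then cubeLink d a i' y else 0)
          + ∑ k, (if ∀ j, j ≠ k → i' j = i j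
              then Bs (p k) (i k) (i' k) * cubeLink d a i' y else 0) := by
      intro i'
      rw [coupon_eq, add_mul, Finset.sum_mul]
      congr 1
      · by_cases h : i' = i <;> simp [h]
      · exact Finset.sum_congr rfl fun k _ => by
          by_cases h : ∀ j, j ≠ k → i' j = i j <;> simp [h]
    rw [Finset.sum_congr rfl fun i' _ => e1 i', Finset.sum_add_distrib,
      Finset.sum_ite_eq' Finset.univ i _, if_pos (Finset.mem_univ i), Finset.sum_comm]
    congr 1
    refine Finset.sum_congr rfl fun k _ => ?_
    rw [sum_line k i (fun i' => Bs (p k) (i k) (i' k) * cubeLink d a i' y),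
      Finset.sum_mul]
    refine Finset.sum_congr rfl fun x _ => ?_
    have hupk : (Function.update i k x) k = x := Function.update_self k x i
    rw [hupk, link_eq d a ha (Function.update i k x) y,
      prod_update_split k i x (fun j z => lam (a j) z (y j))]
    ring
  rw [L, R]
  congr 1
  exact Finset.sum_congr rfl fun k _ => by rw [two_by_two]

end parts


theorem stmt8 (d : ℕ) (hd : 1 ≤ d) (p a : Fin d → ℝ)
    (hp : ∀ j, 0 < p j) (hpsum : ∑ j, p j ≤ 1)
    (ha : ∀ k, 0 < a k ∧ a k < 1) :
    (∀ i i', 0 ≤ cubeAntidual d p a i i') ∧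
    (∀ i, ∑ i', cubeAntidual d p a i i' = 1) ∧
    (cubePi d a ᵥ* cubeAntidual d p a = cubePi d a) ∧
    (∃ n, ∀ i i', 0 < ((cubeAntidual d p a) ^ n) i i') ∧
    cubeLink d a * cubeAntidual d p a = cubeCoupon d p * cubeLink d a := by
  refine ⟨fun i i' => entry_nonneg hp ha i i' hpsum hd,
    fun i => row_sum_one i,
    stationary,
    ⟨d, fun i i' => prim hd hp hpsum ha d i i'
      ((Finset.card_filter_le _ _).trans (by simp))⟩,
    intertwine ha⟩
end
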